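/- arXiv:2509.04133 — 5 statements merged into one kernel-verified Lean document; each statement's English description precedes it below -/
import Mathlib

section
/- Let z_0^0 ∈ ℝ^d and run the Random Reshuffling (RR) Extragradient method: at each epoch s = 0,…,S−1 draw a uniformly random permutation π_s of {1,…,n} (independently across epochs and of all past randomness), and for t = 0,…,n−1 set z_s^{t+1/2} = prox_{γg}(z_s^t − γ F_{π_s(t)}(z_s^t)) and z_s^{t+1} = prox_{γg}(z_s^t − γ F_{π_s(t)}(z_s^{t+1/2})), with z_{s+1}^0 = z_s^n. If each F_i is L-Lipschitz and μ-strongly monotone, the variance at the optimum is bounded by σ*², n ≥ 4, and 0 < γ ≤ min{1/(2μn), 1/(6L)}, then after S epochs E‖z_S^n − z*‖² ≤ (1 − γμ/2)^{Sn} ‖z_0^0 − z*‖² + 256 γ n² σ*² / μ. -/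
open scoped RealInnerProductSpace

set_option maxHeartbeats 1000000

section RRAux

variable {E : Type*} [NormedAddCommGroup E] [InnerProductSpace ℝ E]

lemma rr_inner_three (a b c : E) :
    ⟪a - c, b - c⟫ = (‖a - c‖^2 + ‖b - c‖^2 - ‖a - b‖^2)/2 := by
  have e : a - b = (a - c) - (b - c) := by abel
  rw [e, ← real_inner_self_eq_norm_sq, ← real_inner_self_eq_norm_sq,
    ← real_inner_self_eq_norm_sq]
  simp only [inner_sub_left, inner_sub_right]
  rw [real_inner_comm b a, real_inner_comm c a, real_inner_comm c b]
  ring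

lemma rr_norm_sub_sq_le (x y : E) : ‖x - y‖^2 ≤ 2*‖x‖^2 + 2*‖y‖^2 := by
  have h := norm_sub_sq_real x y
  nlinarith [sq_nonneg (‖x‖ - ‖y‖), sq_nonneg (‖x‖ + ‖y‖), neg_abs_le ⟪x,y⟫,
    abs_real_inner_le_norm x y]

lemma rr_bern' {x : ℝ} {k : ℕ} (hx1 : x ≤ 1) : 1 - k*x ≤ (1-x)^k := by
  have h := one_add_mul_le_pow (show (-2:ℝ) ≤ -x by linarith) k
  have e : (1 + -x) = 1 - x := by ring
  rw [e] at h
  linarith [h]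

lemma rr_sum_range_idx {M : Type*} [AddCommMonoid M] {n : ℕ} (hn0 : 0 < n)
    (f : Fin n → M) :
    ∑ j ∈ Finset.range n, f ⟨j % n, Nat.mod_lt j hn0⟩ = ∑ i, f i := by
  rw [← Fin.sum_univ_eq_sum_range (fun j => f ⟨j % n, Nat.mod_lt j hn0⟩) n]
  exact Finset.sum_congr rfl fun i _ => by
    congr 1
    exact Fin.ext (Nat.mod_eq_of_lt i.isLt)

lemma rr_rho_facts {x : ℝ} {n : ℕ} (hx : 0 < x) (hn : 4 ≤ n)
    (hxn : (n:ℝ) * x ≤ 1/2) :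
    1 - (n:ℝ)*(x/2) ≤ (1-x/2)^n ∧ (1-x/2)^n * (1 + (n:ℝ)*(x/2)) ≤ 1 := by
  have hn4 : (4:ℝ) ≤ (n:ℝ) := by exact_mod_cast hn
  have hx8 : x ≤ 1/8 := by nlinarith
  constructor
  · have := rr_bern' (x := x/2) (by linarith) (k := n)
    linarith
  · have hb : 1 + (n:ℝ)*(x/2) ≤ (1+x/2)^n := by
      have h := one_add_mul_le_pow (show (-2:ℝ) ≤ x/2 by linarith) n
      linarith
    have hρ0 : (0:ℝ) ≤ (1-x/2)^n := pow_nonneg (by linarith) n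
    calc (1-x/2)^n * (1 + (n:ℝ)*(x/2)) ≤ (1-x/2)^n * (1+x/2)^n :=
          mul_le_mul_of_nonneg_left hb hρ0
      _ = (1 - (x/2)^2)^n := by rw [← mul_pow]; ring_nf
      _ ≤ 1 := pow_le_one₀ (by nlinarith) (by nlinarith)

lemma rr_slack' {x : ℝ} {n : ℕ} (hx : 0 < x) (hn : 4 ≤ n)
    (hxn : (n:ℝ) * x ≤ 1/2) :
    (1-x)^n + (n:ℝ)*x/8 ≤ (1-x/2)^n := by
  obtain ⟨h2, h3⟩ := rr_rho_facts hx hn hxn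
  have hn4 : (4:ℝ) ≤ (n:ℝ) := by exact_mod_cast hn
  have hx8 : x ≤ 1/8 := by nlinarith
  set ρ := (1-x/2)^n with hρ
  have hρ0 : (0:ℝ) ≤ ρ := pow_nonneg (by linarith) n
  have hsq : (1-x)^n ≤ ρ^2 := by
    have h : (1-x) ≤ (1-x/2)^2 := by nlinarith
    calc (1-x)^n ≤ ((1-x/2)^2)^n := pow_le_pow_left₀ (by linarith) h n
      _ = ρ^2 := by rw [← pow_mul, mul_comm, pow_mul]
  have h4 : (3/4:ℝ) ≤ ρ := by nlinarith
  have h7 : ρ ≤ 1 := by nlinarith [mul_nonneg hρ0 (by positivity : (0:ℝ) ≤ (n:ℝ)*(x/2))]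
  have h5 : ρ*((n:ℝ)*(x/2)) ≤ 1 - ρ := by nlinarith
  have h6 : (3/4)*((n:ℝ)*(x/2)) ≤ ρ*((n:ℝ)*(x/2)) :=
    mul_le_mul_of_nonneg_right h4 (by positivity)
  have h8 : (3/4)*(1-ρ) ≤ ρ*(1-ρ) := mul_le_mul_of_nonneg_right h4 (by linarith)
  nlinarith [h5, h6, h8, hsq]

lemma rr_geo' {x : ℝ} {n : ℕ} (hx : 0 < x) (hn : 4 ≤ n)
    (hxn : (n:ℝ) * x ≤ 1/2) :
    (2/5)*((n:ℝ)*x) ≤ 1 - (1-x/2)^n := by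
  obtain ⟨h2, h3⟩ := rr_rho_facts hx hn hxn
  have hn4 : (4:ℝ) ≤ (n:ℝ) := by exact_mod_cast hn
  set u := (n:ℝ)*(x/2) with hu
  have hu0 : 0 < u := by positivity
  have hu4 : u ≤ 1/4 := by simp only [hu]; linarith
  set ρ := (1-x/2)^n with hρ
  have hd : (1:ℝ) ≤ (1 - (4/5)*u)*(1+u) := by nlinarith
  have hh : ρ * (1+u) ≤ (1 - (4/5)*u)*(1+u) := by
    calc ρ * (1+u) ≤ 1 := h3
      _ ≤ (1 - (4/5)*u)*(1+u) := hd
  have hfin : ρ ≤ 1 - (4/5)*u := le_of_mul_le_mul_right hh (by linarith)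
  simp only [hu] at hfin ⊢
  linarith

lemma rr_prox_ne_top {γ : ℝ} (hγ0 : 0 < γ) {g : E → EReal}
    (hg_bot : ∀ x, g x ≠ ⊥) {y₀ : E} (hy₀ : g y₀ ≠ ⊤)
    {prox : E → E}
    (hprox : ∀ x y : E,
      (γ : EReal) * g (prox x) + ((‖prox x - x‖ ^ 2 / 2 : ℝ) : EReal)
        ≤ (γ : EReal) * g y + ((‖y - x‖ ^ 2 / 2 : ℝ) : EReal)) :
    ∀ x, g (prox x) ≠ ⊤ := by
  intro x hp
  have h := hprox x y₀
  rw [hp, EReal.mul_top_of_pos (by exact_mod_cast hγ0), EReal.top_add_coe,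
    ← EReal.coe_toReal hy₀ (hg_bot y₀), ← EReal.coe_mul, ← EReal.coe_add] at h
  exact EReal.coe_ne_top _ (top_le_iff.1 h)

lemma rr_prox_real {γ : ℝ} (hγ0 : 0 < γ) {g : E → EReal}
    (hg_bot : ∀ x, g x ≠ ⊥) {y₀ : E} (hy₀ : g y₀ ≠ ⊤)
    {prox : E → E}
    (hprox : ∀ x y : E,
      (γ : EReal) * g (prox x) + ((‖prox x - x‖ ^ 2 / 2 : ℝ) : EReal)
        ≤ (γ : EReal) * g y + ((‖y - x‖ ^ 2 / 2 : ℝ) : EReal)) :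
    ∀ x y, g y ≠ ⊤ →
      γ * (g (prox x)).toReal + ‖prox x - x‖ ^ 2 / 2
        ≤ γ * (g y).toReal + ‖y - x‖ ^ 2 / 2 := by
  intro x y hy
  have h := hprox x y
  rw [← EReal.coe_toReal (rr_prox_ne_top hγ0 hg_bot hy₀ hprox x) (hg_bot _),
    ← EReal.coe_toReal hy (hg_bot _), ← EReal.coe_mul, ← EReal.coe_mul,
    ← EReal.coe_add, ← EReal.coe_add, EReal.coe_le_coe_iff] at h
  exact h

lemma rr_prox_var {γ : ℝ} (hγ0 : 0 < γ) {g : E → EReal}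
    (hg_bot : ∀ x, g x ≠ ⊥) {y₀ : E} (hy₀ : g y₀ ≠ ⊤)
    (hg_convex : ∀ (x y : E) (a b : ℝ), 0 ≤ a → 0 ≤ b → a + b = 1 →
      g (a • x + b • y) ≤ (a : EReal) * g x + (b : EReal) * g y)
    {prox : E → E}
    (hprox : ∀ x y : E,
      (γ : EReal) * g (prox x) + ((‖prox x - x‖ ^ 2 / 2 : ℝ) : EReal)
        ≤ (γ : EReal) * g y + ((‖y - x‖ ^ 2 / 2 : ℝ) : EReal)) :
    ∀ x y, g y ≠ ⊤ →
      ⟪x - prox x, y - prox x⟫ ≤ γ * ((g y).toReal - (g (prox x)).toReal) := by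
  intro x y hy
  set p := prox x with hpdef
  have hptop : g p ≠ ⊤ := rr_prox_ne_top hγ0 hg_bot hy₀ hprox x
  set Gp := (g p).toReal
  set Gy := (g y).toReal
  set I := ⟪p - x, y - p⟫ with hI
  set N := ‖y - p‖^2 with hN
  have hN0 : 0 ≤ N := by positivity
  have key : ∀ l : ℝ, 0 < l → l ≤ 1 → γ * Gp - γ * Gy ≤ I + l * (N/2) := by
    intro l hl0 hl1
    set yl : E := p + l • (y - p) with hyl
    have hyl_eq : yl = (1 - l) • p + l • y := by
      rw [hyl, smul_sub, sub_smul, one_smul]; abel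
    have hconv : g yl ≤ (((1-l) * Gp + l * Gy : ℝ) : EReal) := by
      calc g yl ≤ ((1-l : ℝ) : EReal) * g p + ((l:ℝ) : EReal) * g y := by
            rw [hyl_eq]; exact hg_convex p y (1-l) l (by linarith) hl0.le (by ring)
        _ = (((1-l) * Gp + l * Gy : ℝ) : EReal) := by
            rw [← EReal.coe_toReal hptop (hg_bot _), ← EReal.coe_toReal hy (hg_bot _),
              ← EReal.coe_mul, ← EReal.coe_mul, ← EReal.coe_add]
    have hyl_top : g yl ≠ ⊤ := by
      intro h; rw [h] at hconv; exact EReal.coe_ne_top _ (top_le_iff.1 hconv)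
    have hyl_real : (g yl).toReal ≤ (1-l) * Gp + l * Gy := by
      have := EReal.toReal_le_toReal hconv (hg_bot _) (EReal.coe_ne_top _)
      rwa [EReal.toReal_coe] at this
    have hmain := rr_prox_real hγ0 hg_bot hy₀ hprox x yl hyl_top
    have hnorm : ‖yl - x‖^2 = ‖p - x‖^2 + 2*l*I + l^2*N := by
      have e : yl - x = (p - x) + l • (y - p) := by rw [hyl]; abel
      rw [e, norm_add_sq_real, real_inner_smul_right, norm_smul, Real.norm_eq_abs,
        abs_of_pos hl0, mul_pow, hI, hN]
      ring
    have hcomb : γ * Gp + ‖p - x‖^2/2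
        ≤ γ * ((1-l)*Gp + l*Gy) + (‖p - x‖^2 + 2*l*I + l^2*N)/2 := by
      calc γ * Gp + ‖p - x‖^2/2 ≤ γ * (g yl).toReal + ‖yl - x‖^2/2 := hmain
        _ ≤ γ * ((1-l)*Gp + l*Gy) + (‖p - x‖^2 + 2*l*I + l^2*N)/2 := by
            rw [hnorm]
            have := mul_le_mul_of_nonneg_left hyl_real hγ0.le
            linarith
    have hl2 : l * (γ * Gp - γ * Gy) ≤ l * (I + l * (N/2)) := by nlinarith [hcomb]
    exact le_of_mul_le_mul_left hl2 hl0
  have hgoal : γ * Gp - γ * Gy ≤ I := by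
    by_contra hcon
    push_neg at hcon
    set ε := γ * Gp - γ * Gy - I with hε
    have hε0 : 0 < ε := by simp only [hε]; linarith
    set l := min 1 (ε / (N/2 + 1)) with hldef
    have hld : 0 < ε / (N/2+1) := by positivity
    have hl0 : 0 < l := lt_min one_pos hld
    have hl1 : l ≤ 1 := min_le_left _ _
    have hk := key l hl0 hl1
    have hlle : l ≤ ε / (N/2+1) := min_le_right _ _
    have h1 : l * (N/2) ≤ (ε / (N/2+1)) * (N/2) :=
      mul_le_mul_of_nonneg_right hlle (by positivity)
    have h2 : (ε / (N/2+1)) * (N/2) < ε := by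
      rw [div_mul_eq_mul_div, div_lt_iff₀ (by positivity)]
      nlinarith
    linarith
  have heq : ⟪x - p, y - p⟫ = -I := by
    rw [hI, show x - p = -(p - x) by abel, inner_neg_left]
  rw [heq]
  linarith

lemma rr_step_bound {γ μ L : ℝ} (hγ0 : 0 < γ) (hμ : 0 < μ)
    (hγμ : γ * μ ≤ 1/8) (hγL : γ * L ≤ 1/6)
    {g : E → EReal} {prox : E → E}
    (hpvar : ∀ x y, g y ≠ ⊤ →
      ⟪x - prox x, y - prox x⟫ ≤ γ * ((g y).toReal - (g (prox x)).toReal))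
    (hptop : ∀ x, g (prox x) ≠ ⊤)
    {Fi : E → E} (hLip : ∀ z₁ z₂ : E, ‖Fi z₁ - Fi z₂‖ ≤ L * ‖z₁ - z₂‖)
    (hmono : ∀ z₁ z₂ : E, μ * ‖z₁ - z₂‖^2 ≤ ⟪Fi z₁ - Fi z₂, z₁ - z₂⟫)
    {zstar Fb : E} (hstar_top : g zstar ≠ ⊤)
    (hVIr : ∀ w, g w ≠ ⊤ → (g zstar).toReal ≤ ⟪Fb, w - zstar⟫ + (g w).toReal)
    (zc zh zp : E)
    (hzh : zh = prox (zc - γ • Fi zc)) (hzp : zp = prox (zc - γ • Fi zh)) :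
    ‖zp - zstar‖^2 ≤ (1 - γ*μ) * ‖zc - zstar‖^2
      - (1/2)*(‖zc - zh‖^2 + ‖zp - zh‖^2)
      + 2*γ*⟪Fi zstar - Fb, zstar - zh⟫ := by
  have hhtop : g zh ≠ ⊤ := by rw [hzh]; exact hptop _
  have hptop' : g zp ≠ ⊤ := by rw [hzp]; exact hptop _
  have h1 : ⟪(zc - γ • Fi zh) - zp, zstar - zp⟫
      ≤ γ * ((g zstar).toReal - (g zp).toReal) := by
    have := hpvar (zc - γ • Fi zh) zstar hstar_top
    rwa [← hzp] at this
  have h2 : ⟪(zc - γ • Fi zc) - zh, zp - zh⟫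
      ≤ γ * ((g zp).toReal - (g zh).toReal) := by
    have := hpvar (zc - γ • Fi zc) zp hptop'
    rwa [← hzh] at this
  have e1 : ⟪(zc - γ • Fi zh) - zp, zstar - zp⟫
      = ⟪zc - zp, zstar - zp⟫ - γ * ⟪Fi zh, zstar - zp⟫ := by
    rw [sub_right_comm, inner_sub_left, real_inner_smul_left]
  have e2 : ⟪(zc - γ • Fi zc) - zh, zp - zh⟫
      = ⟪zc - zh, zp - zh⟫ - γ * ⟪Fi zc, zp - zh⟫ := by
    rw [sub_right_comm, inner_sub_left, real_inner_smul_left]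
  have p1 : ⟪zc - zp, zstar - zp⟫
      = (‖zc - zp‖^2 + ‖zstar - zp‖^2 - ‖zc - zstar‖^2)/2 := rr_inner_three _ _ _
  have p2 : ⟪zc - zh, zp - zh⟫
      = (‖zc - zh‖^2 + ‖zp - zh‖^2 - ‖zc - zp‖^2)/2 := rr_inner_three _ _ _
  have e3 : ⟪Fi zh, zstar - zp⟫ = ⟪Fi zh, zstar - zh⟫ + ⟪Fi zh, zh - zp⟫ := by
    rw [← inner_add_right]; congr 1; abel
  have e4 : ⟪Fi zc, zp - zh⟫ = -⟪Fi zc, zh - zp⟫ := by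
    rw [← inner_neg_right]; congr 1; abel
  have e5 : ⟪Fi zh, zstar - zh⟫
      = -⟪Fi zh - Fi zstar, zh - zstar⟫ - ⟪Fi zstar - Fb, zh - zstar⟫
        - ⟪Fb, zh - zstar⟫ := by
    have ez : zstar - zh = -(zh - zstar) := by abel
    rw [ez, inner_neg_right]
    simp only [inner_sub_left]
    ring
  rw [e1, p1, e3, e5] at h1
  rw [e2, p2, e4] at h2
  have h8 := hmono zh zstar
  have h8' : γ * (μ * ‖zh - zstar‖^2) ≤ γ * ⟪Fi zh - Fi zstar, zh - zstar⟫ :=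
    mul_le_mul_of_nonneg_left h8 hγ0.le
  have h9 := hVIr zh hhtop
  have h9' : γ * (g zstar).toReal ≤ γ * (⟪Fb, zh - zstar⟫ + (g zh).toReal) :=
    mul_le_mul_of_nonneg_left h9 hγ0.le
  have hab : ⟪Fi zh - Fi zc, zh - zp⟫ ≤ L * ‖zh - zc‖ * ‖zh - zp‖ := by
    calc ⟪Fi zh - Fi zc, zh - zp⟫ ≤ ‖Fi zh - Fi zc‖ * ‖zh - zp‖ :=
          real_inner_le_norm _ _
      _ ≤ L * ‖zh - zc‖ * ‖zh - zp‖ :=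
          mul_le_mul_of_nonneg_right (hLip zh zc) (norm_nonneg _)
  have hab' : γ * ⟪Fi zh - Fi zc, zh - zp⟫ ≤ γ * (L * ‖zh - zc‖ * ‖zh - zp‖) :=
    mul_le_mul_of_nonneg_left hab hγ0.le
  have h10 : γ * ⟪Fi zh - Fi zc, zh - zp⟫
      ≤ (1/12) * (‖zc - zh‖^2 + ‖zp - zh‖^2) := by
    have hn1 : ‖zh - zc‖ = ‖zc - zh‖ := norm_sub_rev _ _
    have hn2 : ‖zh - zp‖ = ‖zp - zh‖ := norm_sub_rev _ _
    rw [hn1, hn2] at hab'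
    nlinarith [sq_nonneg (‖zc - zh‖ - ‖zp - zh‖), norm_nonneg (zc - zh),
      norm_nonneg (zp - zh), mul_nonneg (norm_nonneg (zc - zh)) (norm_nonneg (zp - zh))]
  have h10' : γ * (⟪Fi zh, zh - zp⟫ - ⟪Fi zc, zh - zp⟫)
      ≤ (1/12) * (‖zc - zh‖^2 + ‖zp - zh‖^2) := by
    rwa [inner_sub_left] at h10
  have hbase : ‖zc - zstar‖^2 ≤ 2*‖zh - zstar‖^2 + 2*‖zc - zh‖^2 := by
    have e : zc - zstar = (zc - zh) + (zh - zstar) := by abel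
    rw [e, norm_add_sq_real]
    have hi := real_inner_le_norm (zc - zh) (zh - zstar)
    nlinarith [sq_nonneg (‖zc - zh‖ - ‖zh - zstar‖)]
  have h11 : γ * μ * ‖zc - zstar‖^2
      ≤ γ * μ * (2*‖zh - zstar‖^2 + 2*‖zc - zh‖^2) :=
    mul_le_mul_of_nonneg_left hbase (by positivity)
  have e6 : ⟪Fi zstar - Fb, zstar - zh⟫ = -⟪Fi zstar - Fb, zh - zstar⟫ := by
    rw [← inner_neg_right]; congr 1; abel
  rw [e6]
  have hB' : ‖zstar - zp‖ = ‖zp - zstar‖ := norm_sub_rev _ _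
  rw [hB'] at h1
  have hC : γ * μ * ‖zc - zh‖^2 ≤ (1/8) * ‖zc - zh‖^2 :=
    mul_le_mul_of_nonneg_right hγμ (sq_nonneg _)
  linarith [h1, h2, h8', h9', h10', h11, hC, sq_nonneg ‖zc - zh‖, sq_nonneg ‖zp - zh‖]

lemma rr_epoch {n : ℕ} (hn : 4 ≤ n) {γ μ τ : ℝ} (hγ0 : 0 < γ) (hμ : 0 < μ)
    (hγμn : γ * μ * n ≤ 1/2)
    (δ : Fin n → E) (hδ0 : ∑ i, δ i = 0) (hδ1 : ∑ i, ‖δ i‖ ≤ 2 * n * τ)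
    (σ : Equiv.Perm (Fin n))
    (zs zh : ℕ → E) (zstar : E)
    (hrec : ∀ t (ht : t < n),
      ‖zs (t+1) - zstar‖^2 ≤ (1 - γ*μ) * ‖zs t - zstar‖^2
        - (1/2)*(‖zs t - zh t‖^2 + ‖zs (t+1) - zh t‖^2)
        + 2*γ*⟪δ (σ ⟨t, ht⟩), zstar - zh t⟫) :
    ‖zs n - zstar‖^2 ≤ (1 - γ*μ/2)^n * ‖zs 0 - zstar‖^2
      + 96 * γ^2 * (n:ℝ)^3 * τ^2 := by
  have hn0 : 0 < n := by omega
  have hnR : (4:ℝ) ≤ (n:ℝ) := by exact_mod_cast hn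
  have hnR0 : (0:ℝ) < (n:ℝ) := by linarith
  set x := γ * μ with hxdef
  have hx0 : 0 < x := by positivity
  have hxn : (n:ℝ) * x ≤ 1/2 := by rw [hxdef]; nlinarith [hγμn]
  have hx8 : x ≤ 1/8 := by nlinarith
  set idx : ℕ → Fin n := fun t => ⟨t % n, Nat.mod_lt t hn0⟩ with hidxdef
  have hidx : ∀ (t : ℕ) (ht : t < n), (⟨t, ht⟩ : Fin n) = idx t := by
    intro t ht
    exact Fin.ext (by simp [hidxdef, Nat.mod_eq_of_lt ht])
  set c : ℕ → ℝ := fun t =>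
    -(1/2)*(‖zs t - zh t‖^2 + ‖zs (t+1) - zh t‖^2)
      + 2*γ*⟪δ (σ (idx t)), zstar - zh t⟫ with hcdef
  have hrec' : ∀ t, t < n →
      ‖zs (t+1) - zstar‖^2 ≤ (1-x)*‖zs t - zstar‖^2 + c t := by
    intro t ht
    have h := hrec t ht
    rw [hidx t ht] at h
    simp only [hcdef]
    linarith
  set R := ‖zs 0 - zstar‖ with hRdef
  have UI : ∀ t, t ≤ n → ‖zs t - zstar‖^2
      ≤ (1-x)^t * R^2 + ∑ j ∈ Finset.range t, (1-x)^(t-1-j) * c j := by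
    intro t
    induction t with
    | zero => intro _; simp [hRdef]
    | succ t ih =>
      intro ht
      have ht' : t < n := by omega
      have ihh := ih (by omega)
      have hx1 : (0:ℝ) ≤ 1 - x := by linarith
      calc ‖zs (t+1) - zstar‖^2 ≤ (1-x)*‖zs t - zstar‖^2 + c t := hrec' t ht'
        _ ≤ (1-x)*((1-x)^t * R^2 + ∑ j ∈ Finset.range t, (1-x)^(t-1-j) * c j)
            + c t := by
            have := mul_le_mul_of_nonneg_left ihh hx1; linarith
        _ = (1-x)^(t+1) * R^2
            + ∑ j ∈ Finset.range (t+1), (1-x)^(t+1-1-j) * c j := by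
            rw [mul_add, Finset.mul_sum, Finset.sum_range_succ]
            have e1 : ∀ j ∈ Finset.range t,
                (1-x)*((1-x)^(t-1-j) * c j) = (1-x)^(t+1-1-j)*c j := by
              intro j hj
              rw [Finset.mem_range] at hj
              rw [← mul_assoc, ← pow_succ']
              congr 2
              omega
            rw [Finset.sum_congr rfl e1]
            have e2 : t+1-1-t = 0 := by omega
            rw [e2, pow_zero, one_mul, pow_succ]
            ring
  have hmain := UI n le_rfl
  set w : ℕ → ℝ := fun j => (1-x)^(n-1-j) with hwdef
  have hw0 : ∀ j, 0 ≤ w j := fun j => pow_nonneg (by linarith) _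
  have hw1 : ∀ j, w j ≤ 1 := fun j => pow_le_one₀ (by linarith) (by linarith)
  have hwkey : ∀ j, 1 - (n:ℝ)*x ≤ w j := by
    intro j
    have hb := rr_bern' (x := x) (by linarith) (k := n-1-j)
    have hc : ((n-1-j : ℕ):ℝ) ≤ (n:ℝ) := by exact_mod_cast Nat.le_of_lt_succ (by omega)
    have := mul_le_mul_of_nonneg_right hc hx0.le
    simp only [hwdef]
    linarith
  have hwl : ∀ j, (1/2:ℝ) ≤ w j := fun j => by linarith [hwkey j]
  have hwu : ∀ j, 1 - w j ≤ (n:ℝ)*x := fun j => by linarith [hwkey j]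
  set Q := ∑ j ∈ Finset.range n, (‖zs j - zh j‖^2 + ‖zs (j+1) - zh j‖^2) with hQdef
  set Dr := ∑ j ∈ Finset.range n, (‖zs j - zh j‖ + ‖zs (j+1) - zh j‖) with hDrdef
  set T2 := ∑ j ∈ Finset.range n, w j * ⟪δ (σ (idx j)), zstar - zs 0⟫ with hT2def
  set T3 := ∑ j ∈ Finset.range n, w j * ⟪δ (σ (idx j)), zs 0 - zh j⟫ with hT3def
  have hQ0 : 0 ≤ Q := Finset.sum_nonneg fun j _ => by positivity
  have hDr0 : 0 ≤ Dr := Finset.sum_nonneg fun j _ => by positivity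
  have hterm : ∀ j ∈ Finset.range n, w j * c j
      ≤ -(1/4)*(‖zs j - zh j‖^2 + ‖zs (j+1) - zh j‖^2)
        + 2*γ*(w j * ⟪δ (σ (idx j)), zstar - zs 0⟫)
        + 2*γ*(w j * ⟪δ (σ (idx j)), zs 0 - zh j⟫) := by
    intro j _
    have hsq : (0:ℝ) ≤ ‖zs j - zh j‖^2 + ‖zs (j+1) - zh j‖^2 := by positivity
    have hdec : ⟪δ (σ (idx j)), zstar - zh j⟫
        = ⟪δ (σ (idx j)), zstar - zs 0⟫ + ⟪δ (σ (idx j)), zs 0 - zh j⟫ := by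
      rw [← inner_add_right]; congr 1; abel
    simp only [hcdef]
    rw [hdec]
    have hh := mul_le_mul_of_nonneg_right (hwl j) hsq
    linarith [hh]
  have hStot : ∑ j ∈ Finset.range n, w j * c j
      ≤ -(1/4)*Q + 2*γ*T2 + 2*γ*T3 := by
    calc ∑ j ∈ Finset.range n, w j * c j
        ≤ ∑ j ∈ Finset.range n,
            (-(1/4)*(‖zs j - zh j‖^2 + ‖zs (j+1) - zh j‖^2)
              + 2*γ*(w j * ⟪δ (σ (idx j)), zstar - zs 0⟫)
              + 2*γ*(w j * ⟪δ (σ (idx j)), zs 0 - zh j⟫)) :=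
          Finset.sum_le_sum hterm
      _ = -(1/4)*Q + 2*γ*T2 + 2*γ*T3 := by
          rw [Finset.sum_add_distrib, Finset.sum_add_distrib,
            ← Finset.mul_sum, ← Finset.mul_sum, ← Finset.mul_sum,
            hQdef, hT2def, hT3def]
  have hsum0 : ∑ j ∈ Finset.range n, δ (σ (idx j)) = 0 := by
    have h := rr_sum_range_idx hn0 (fun i => δ (σ i))
    simp only [hidxdef]
    rw [h, Equiv.sum_comp σ δ, hδ0]
  have hsnorm : ∑ j ∈ Finset.range n, ‖δ (σ (idx j))‖ ≤ 2*n*τ := by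
    have h := rr_sum_range_idx hn0 (fun i => ‖δ (σ i)‖)
    simp only [hidxdef]
    rw [h, Equiv.sum_comp σ (fun i => ‖δ i‖)]
    exact hδ1
  set u : E := ∑ j ∈ Finset.range n, (w j - 1) • δ (σ (idx j)) with hudef
  have hT2eq : T2 = ⟪u, zstar - zs 0⟫ := by
    have e1 : ∑ j ∈ Finset.range n, w j • δ (σ (idx j)) = u := by
      rw [hudef, ← sub_eq_zero, ← Finset.sum_sub_distrib]
      have h : ∀ j ∈ Finset.range n,
          w j • δ (σ (idx j)) - (w j - 1) • δ (σ (idx j)) = δ (σ (idx j)) := by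
        intro j _
        rw [← sub_smul]
        norm_num
      rw [Finset.sum_congr rfl h, hsum0]
    rw [hT2def, ← e1, sum_inner]
    exact Finset.sum_congr rfl fun j _ => (real_inner_smul_left _ _ _).symm
  have hunorm : ‖u‖ ≤ (n:ℝ)*x*(2*n*τ) := by
    calc ‖u‖ ≤ ∑ j ∈ Finset.range n, ‖(w j - 1) • δ (σ (idx j))‖ :=
          norm_sum_le _ _
      _ = ∑ j ∈ Finset.range n, (1 - w j) * ‖δ (σ (idx j))‖ := by
          refine Finset.sum_congr rfl fun j _ => ?_
          rw [norm_smul, Real.norm_eq_abs, abs_of_nonpos (by linarith [hw1 j])]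
          ring
      _ ≤ ∑ j ∈ Finset.range n, ((n:ℝ)*x) * ‖δ (σ (idx j))‖ :=
          Finset.sum_le_sum fun j _ =>
            mul_le_mul_of_nonneg_right (hwu j) (norm_nonneg _)
      _ = (n:ℝ)*x * ∑ j ∈ Finset.range n, ‖δ (σ (idx j))‖ := by
          rw [Finset.mul_sum]
      _ ≤ (n:ℝ)*x*(2*n*τ) :=
          mul_le_mul_of_nonneg_left hsnorm (by positivity)
  have hT2bound : 2*γ*T2 ≤ (n:ℝ)*x/8 * R^2 + 32*γ^3*μ*(n:ℝ)^3*τ^2 := by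
    have h1 : T2 ≤ ((n:ℝ)*x*(2*n*τ)) * R := by
      rw [hT2eq]
      calc ⟪u, zstar - zs 0⟫ ≤ ‖u‖ * ‖zstar - zs 0‖ := real_inner_le_norm _ _
        _ = ‖u‖ * R := by rw [hRdef, norm_sub_rev]
        _ ≤ ((n:ℝ)*x*(2*n*τ)) * R :=
            mul_le_mul_of_nonneg_right hunorm (norm_nonneg _)
    have h2 : 2*γ*T2 ≤ 2*γ*(((n:ℝ)*x*(2*n*τ)) * R) :=
      mul_le_mul_of_nonneg_left h1 (by positivity)
    have hkey : (0:ℝ) ≤ (γ*μ*(n:ℝ)/8)*(R - 16*γ*(n:ℝ)*τ)^2 := by positivity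
    rw [hxdef] at h2 ⊢
    nlinarith [h2, hkey]
  have htel : ∀ j, j ≤ n → ‖zs 0 - zs j‖
      ≤ ∑ k ∈ Finset.range j, (‖zs k - zh k‖ + ‖zs (k+1) - zh k‖) := by
    intro j
    induction j with
    | zero => intro _; simp
    | succ j ih =>
      intro hj
      have ihh := ih (by omega)
      have t1 : ‖zs 0 - zs (j+1)‖ ≤ ‖zs 0 - zs j‖ + ‖zs j - zs (j+1)‖ := by
        have e : zs 0 - zs (j+1) = (zs 0 - zs j) + (zs j - zs (j+1)) := by abel
        rw [e]; exact norm_add_le _ _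
      have t2 : ‖zs j - zs (j+1)‖ ≤ ‖zs j - zh j‖ + ‖zs (j+1) - zh j‖ := by
        have e : zs j - zs (j+1) = (zs j - zh j) - (zs (j+1) - zh j) := by abel
        rw [e]; exact norm_sub_le _ _
      rw [Finset.sum_range_succ]
      linarith
  have hdrift : ∀ j, j < n → ‖zs 0 - zh j‖ ≤ Dr := by
    intro j hj
    have t1 : ‖zs 0 - zh j‖ ≤ ‖zs 0 - zs j‖ + ‖zs j - zh j‖ := by
      have e : zs 0 - zh j = (zs 0 - zs j) + (zs j - zh j) := by abel
      rw [e]; exact norm_add_le _ _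
    have t2 := htel j (by omega)
    have t3 : ∑ k ∈ Finset.range j, (‖zs k - zh k‖ + ‖zs (k+1) - zh k‖)
        + ‖zs j - zh j‖
        ≤ ∑ k ∈ Finset.range (j+1), (‖zs k - zh k‖ + ‖zs (k+1) - zh k‖) := by
      rw [Finset.sum_range_succ]
      have h := norm_nonneg (zs (j+1) - zh j)
      linarith
    have t4 : ∑ k ∈ Finset.range (j+1), (‖zs k - zh k‖ + ‖zs (k+1) - zh k‖)
        ≤ Dr := by
      rw [hDrdef]
      apply Finset.sum_le_sum_of_subset_of_nonneg
      · exact Finset.range_subset_range.mpr (by omega)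
      · intro k _ _; positivity
    linarith
  have hT3a : T3 ≤ (2*(n:ℝ)*τ) * Dr := by
    have hterm3 : ∀ j ∈ Finset.range n,
        w j * ⟪δ (σ (idx j)), zs 0 - zh j⟫ ≤ ‖δ (σ (idx j))‖ * Dr := by
      intro j hj
      rw [Finset.mem_range] at hj
      have s1 : ⟪δ (σ (idx j)), zs 0 - zh j⟫ ≤ ‖δ (σ (idx j))‖ * Dr := by
        calc ⟪δ (σ (idx j)), zs 0 - zh j⟫
            ≤ ‖δ (σ (idx j))‖ * ‖zs 0 - zh j‖ := real_inner_le_norm _ _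
          _ ≤ ‖δ (σ (idx j))‖ * Dr :=
              mul_le_mul_of_nonneg_left (hdrift j hj) (norm_nonneg _)
      calc w j * ⟪δ (σ (idx j)), zs 0 - zh j⟫
          ≤ w j * (‖δ (σ (idx j))‖ * Dr) := mul_le_mul_of_nonneg_left s1 (hw0 j)
        _ ≤ ‖δ (σ (idx j))‖ * Dr :=
            mul_le_of_le_one_left (by positivity) (hw1 j)
    calc T3 ≤ ∑ j ∈ Finset.range n, ‖δ (σ (idx j))‖ * Dr :=
          Finset.sum_le_sum hterm3
      _ = (∑ j ∈ Finset.range n, ‖δ (σ (idx j))‖) * Dr := by rw [Finset.sum_mul]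
      _ ≤ (2*(n:ℝ)*τ) * Dr := mul_le_mul_of_nonneg_right hsnorm hDr0
  have hCS : Dr^2 ≤ 2*(n:ℝ)*Q := by
    have h1 := sq_sum_le_card_mul_sum_sq
      (s := Finset.range n) (f := fun k => ‖zs k - zh k‖ + ‖zs (k+1) - zh k‖)
    rw [Finset.card_range] at h1
    have h2 : ∑ k ∈ Finset.range n, (‖zs k - zh k‖ + ‖zs (k+1) - zh k‖)^2
        ≤ 2*Q := by
      rw [hQdef, Finset.mul_sum]
      refine Finset.sum_le_sum fun k _ => ?_
      nlinarith [sq_nonneg (‖zs k - zh k‖ - ‖zs (k+1) - zh k‖)]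
    calc Dr^2 ≤ (n:ℝ) * ∑ k ∈ Finset.range n,
          (‖zs k - zh k‖ + ‖zs (k+1) - zh k‖)^2 := h1
      _ ≤ (n:ℝ) * (2*Q) := mul_le_mul_of_nonneg_left h2 (by positivity)
      _ = 2*(n:ℝ)*Q := by ring
  have hT3bound : 2*γ*T3 ≤ (1/8)*Q + 64*γ^2*(n:ℝ)^3*τ^2 := by
    have h2 : 2*γ*T3 ≤ 2*γ*((2*(n:ℝ)*τ) * Dr) :=
      mul_le_mul_of_nonneg_left hT3a (by positivity)
    have hkey : (0:ℝ) ≤ (1/(16*(n:ℝ)))*(Dr - 32*γ*(n:ℝ)^2*τ)^2 := by positivity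
    have hQ8 : (1/(16*(n:ℝ)))*Dr^2 ≤ (1/8)*Q := by
      have h3 := mul_le_mul_of_nonneg_left hCS
        (show (0:ℝ) ≤ 1/(16*(n:ℝ)) by positivity)
      have e : (1/(16*(n:ℝ)))*(2*(n:ℝ)*Q) = (1/8)*Q := by
        field_simp
        ring
      linarith [e ▸ h3]
    nlinarith [h2, hkey, hQ8]
  have hnoise : 32*γ^3*μ*(n:ℝ)^3*τ^2 ≤ 32*γ^2*(n:ℝ)^3*τ^2 := by
    have hx1 : γ*μ ≤ 1 := by rw [hxdef] at hx8; linarith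
    nlinarith [mul_le_mul_of_nonneg_right hx1
      (show (0:ℝ) ≤ 32*γ^2*(n:ℝ)^3*τ^2 by positivity)]
  have hslack := rr_slack' hx0 hn hxn
  have hslack' : ((1-x)^n + (n:ℝ)*x/8) * R^2 ≤ (1-x/2)^n * R^2 :=
    mul_le_mul_of_nonneg_right hslack (by positivity)
  have hfin : ‖zs n - zstar‖^2
      ≤ (1-x)^n * R^2 + (-(1/4)*Q + 2*γ*T2 + 2*γ*T3) := by
    have e : ∑ j ∈ Finset.range n, (1-x)^(n-1-j) * c j
        = ∑ j ∈ Finset.range n, w j * c j :=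
      Finset.sum_congr rfl fun j _ => by rw [hwdef]
    rw [e] at hmain
    linarith [hmain, hStot]
  have hgoal : (1 - γ*μ/2)^n = (1-x/2)^n := by rw [hxdef]
  rw [hgoal, hRdef] at hslack' ⊢
  linarith [hfin, hT2bound, hT3bound, hnoise, hslack', hQ0]

end RRAux


/-- Convergence of the Random Reshuffling (RR) Extragradient method for a finite-sum
variational inequality: each epoch `s` draws an independent uniform permutation `π_s`
of `{1,…,n}` and performs `z_s^{t+1/2} = prox_{γg}(z_s^t − γF_{π_s(t)}(z_s^t))`,
`z_s^{t+1} = prox_{γg}(z_s^t − γF_{π_s(t)}(z_s^{t+1/2}))`.  If each `F_i` is `L`-Lipschitz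
and `μ`-strongly monotone, the variance at the optimum is bounded by `σ*²`, `n ≥ 4` and
`0 < γ ≤ min{1/(2μn), 1/(6L)}`, then after `S` epochs
`E‖z_S^n − z*‖² ≤ (1 − γμ/2)^{Sn}‖z_0^0 − z*‖² + 256γn²σ*²/μ`.
(The expectation is the uniform average over all sequences of per-epoch permutations.) -/
theorem rr_extragradient_convergence
    (d n S : ℕ) (hn : 4 ≤ n) (hS : 0 < S)
    (L μ γ σstar : ℝ) (hL : 0 < L) (hμ : 0 < μ)
    (hγ0 : 0 < γ) (hγ1 : γ ≤ 1 / (2 * μ * n)) (hγ2 : γ ≤ 1 / (6 * L))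
    (F : Fin n → EuclideanSpace ℝ (Fin d) → EuclideanSpace ℝ (Fin d))
    (g : EuclideanSpace ℝ (Fin d) → EReal)
    (hg_bot : ∀ x, g x ≠ ⊥) (hg_top : ∃ x, g x ≠ ⊤)
    (hg_convex : ∀ (x y : EuclideanSpace ℝ (Fin d)) (a b : ℝ), 0 ≤ a → 0 ≤ b → a + b = 1 →
      g (a • x + b • y) ≤ (a : EReal) * g x + (b : EReal) * g y)
    (hg_lsc : LowerSemicontinuous g)
    (prox : EuclideanSpace ℝ (Fin d) → EuclideanSpace ℝ (Fin d))
    (hprox : ∀ x y : EuclideanSpace ℝ (Fin d),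
      (γ : EReal) * g (prox x) + ((‖prox x - x‖ ^ 2 / 2 : ℝ) : EReal)
        ≤ (γ : EReal) * g y + ((‖y - x‖ ^ 2 / 2 : ℝ) : EReal))
    (hLip : ∀ (i : Fin n) (z₁ z₂ : EuclideanSpace ℝ (Fin d)),
      ‖F i z₁ - F i z₂‖ ≤ L * ‖z₁ - z₂‖)
    (hmono : ∀ (i : Fin n) (z₁ z₂ : EuclideanSpace ℝ (Fin d)),
      μ * ‖z₁ - z₂‖ ^ 2 ≤ ⟪F i z₁ - F i z₂, z₁ - z₂⟫)
    (zstar : EuclideanSpace ℝ (Fin d))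
    (hVI : ∀ z, g zstar ≤ ((⟪(n : ℝ)⁻¹ • ∑ i, F i zstar, z - zstar⟫ : ℝ) : EReal) + g z)
    (hvar1 : (n : ℝ)⁻¹ * ∑ i, ‖F i zstar‖ ^ 2 ≤ σstar ^ 2)
    (hvar2 : ‖(n : ℝ)⁻¹ • ∑ i, F i zstar‖ ^ 2 ≤ σstar ^ 2)
    (z00 : EuclideanSpace ℝ (Fin d))
    (z zhalf : (Fin S → Equiv.Perm (Fin n)) → ℕ → ℕ → EuclideanSpace ℝ (Fin d))
    (hinit : ∀ π, z π 0 0 = z00)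
    (hhalf : ∀ π, ∀ s, ∀ hs : s < S, ∀ t, ∀ ht : t < n,
      zhalf π s t = prox (z π s t - γ • F (π ⟨s, hs⟩ ⟨t, ht⟩) (z π s t)))
    (hstep : ∀ π, ∀ s, ∀ hs : s < S, ∀ t, ∀ ht : t < n,
      z π s (t + 1) = prox (z π s t - γ • F (π ⟨s, hs⟩ ⟨t, ht⟩) (zhalf π s t)))
    (hepoch : ∀ π, ∀ s, s + 1 ≤ S → z π (s + 1) 0 = z π s n) :
    (∑ π : Fin S → Equiv.Perm (Fin n), ‖z π (S - 1) n - zstar‖ ^ 2) /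
        (Fintype.card (Fin S → Equiv.Perm (Fin n)) : ℝ)
      ≤ (1 - γ * μ / 2) ^ (S * n) * ‖z00 - zstar‖ ^ 2
        + 256 * γ * (n : ℝ) ^ 2 * σstar ^ 2 / μ := by
  have hn0 : 0 < n := by omega
  have hnR : (4:ℝ) ≤ (n:ℝ) := by exact_mod_cast hn
  have hnR0 : (0:ℝ) < (n:ℝ) := by linarith
  rw [le_div_iff₀ (by positivity)] at hγ1 hγ2
  have hγμn : γ * μ * (n:ℝ) ≤ 1/2 := by nlinarith [hγ1]
  have hγμ0 : 0 < γ * μ := mul_pos hγ0 hμ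
  have hγμ8 : γ * μ ≤ 1/8 := by nlinarith [hγμn, hγμ0, hnR]
  have hγL : γ * L ≤ 1/6 := by linarith [hγ2]
  have hxn : (n:ℝ) * (γ*μ) ≤ 1/2 := by nlinarith [hγμn]
  set τ := |σstar| with hτdef
  have hτ0 : 0 ≤ τ := abs_nonneg _
  have hτ2 : τ^2 = σstar^2 := sq_abs _
  obtain ⟨y₀, hy₀⟩ := hg_top
  set Fb : EuclideanSpace ℝ (Fin d) := (n:ℝ)⁻¹ • ∑ i, F i zstar with hFbdef
  have hptop := rr_prox_ne_top hγ0 hg_bot hy₀ hprox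
  have hpvar := rr_prox_var hγ0 hg_bot hy₀ hg_convex hprox
  have hstar_top : g zstar ≠ ⊤ := by
    intro h
    have h2 := hVI y₀
    rw [h, ← EReal.coe_toReal hy₀ (hg_bot y₀), ← EReal.coe_add] at h2
    exact EReal.coe_ne_top _ (top_le_iff.1 h2)
  have hVIr : ∀ w, g w ≠ ⊤ → (g zstar).toReal ≤ ⟪Fb, w - zstar⟫ + (g w).toReal := by
    intro w hw
    have h2 := hVI w
    rw [← EReal.coe_toReal hstar_top (hg_bot _), ← EReal.coe_toReal hw (hg_bot _),
      ← EReal.coe_add, EReal.coe_le_coe_iff] at h2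
    exact h2
  have hvar1' : ∑ i, ‖F i zstar‖^2 ≤ (n:ℝ) * τ^2 := by
    rw [hτ2]
    have h2 := mul_le_mul_of_nonneg_left hvar1 hnR0.le
    rw [← mul_assoc, mul_inv_cancel₀ (ne_of_gt hnR0), one_mul] at h2
    linarith [h2]
  have hFb2 : ‖Fb‖^2 ≤ τ^2 := by rw [hτ2]; exact hvar2
  set δf : Fin n → EuclideanSpace ℝ (Fin d) := fun i => F i zstar - Fb with hδdef
  have hδ0 : ∑ i, δf i = 0 := by
    simp only [hδdef]
    rw [Finset.sum_sub_distrib, Finset.sum_const, Finset.card_univ, Fintype.card_fin,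
      sub_eq_zero, hFbdef]
    rw [← Nat.cast_smul_eq_nsmul ℝ n, smul_smul, mul_inv_cancel₀ (ne_of_gt hnR0),
      one_smul]
  have hδsq : ∑ i, ‖δf i‖^2 ≤ 4*(n:ℝ)*τ^2 := by
    calc ∑ i, ‖δf i‖^2 ≤ ∑ i : Fin n, (2*‖F i zstar‖^2 + 2*‖Fb‖^2) :=
          Finset.sum_le_sum fun i _ => rr_norm_sub_sq_le _ _
      _ = 2*(∑ i, ‖F i zstar‖^2) + (n:ℝ)*(2*‖Fb‖^2) := by
          rw [Finset.sum_add_distrib, ← Finset.mul_sum, Finset.sum_const,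
            Finset.card_univ, Fintype.card_fin, nsmul_eq_mul]
      _ ≤ 4*(n:ℝ)*τ^2 := by nlinarith [hvar1', hFb2]
  have hδ1 : ∑ i, ‖δf i‖ ≤ 2*(n:ℝ)*τ := by
    have hcs := sq_sum_le_card_mul_sum_sq
      (s := (Finset.univ : Finset (Fin n))) (f := fun i => ‖δf i‖)
    rw [Finset.card_univ, Fintype.card_fin] at hcs
    have hs0 : 0 ≤ ∑ i, ‖δf i‖ := Finset.sum_nonneg fun i _ => norm_nonneg _
    have hb0 : (0:ℝ) ≤ 2*(n:ℝ)*τ := by positivity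
    nlinarith [hcs, mul_le_mul_of_nonneg_left hδsq hnR0.le, hs0, hb0]
  have hρ0 : (0:ℝ) ≤ (1 - γ*μ/2)^n := pow_nonneg (by linarith) n
  have epoch : ∀ π : Fin S → Equiv.Perm (Fin n), ∀ s, ∀ hs : s < S,
      ‖z π s n - zstar‖^2 ≤ (1 - γ*μ/2)^n * ‖z π s 0 - zstar‖^2
        + 96*γ^2*(n:ℝ)^3*τ^2 := by
    intro π s hs
    apply rr_epoch hn hγ0 hμ hγμn δf hδ0 hδ1 (π ⟨s, hs⟩) (z π s) (zhalf π s) zstar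
    intro t ht
    have hb := rr_step_bound hγ0 hμ hγμ8 hγL hpvar hptop
      (hLip (π ⟨s,hs⟩ ⟨t,ht⟩)) (hmono (π ⟨s,hs⟩ ⟨t,ht⟩)) hstar_top hVIr
      (z π s t) (zhalf π s t) (z π s (t+1))
      (hhalf π s hs t ht) (hstep π s hs t ht)
    simpa [hδdef] using hb
  have claim : ∀ π : Fin S → Equiv.Perm (Fin n), ∀ s, s < S →
      ‖z π s n - zstar‖^2 ≤ (1 - γ*μ/2)^(n*(s+1)) * ‖z00 - zstar‖^2
        + 96*γ^2*(n:ℝ)^3*τ^2 * ∑ k ∈ Finset.range (s+1), ((1 - γ*μ/2)^n)^k := by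
    intro π s
    induction s with
    | zero =>
      intro hs
      have h := epoch π 0 hs
      rw [hinit π] at h
      simpa [Finset.sum_range_one] using h
    | succ s ih =>
      intro hs
      have hs' : s < S := by omega
      have h := epoch π (s+1) hs
      rw [hepoch π s (by omega)] at h
      have ihh := ih hs'
      have hmul := mul_le_mul_of_nonneg_left ihh hρ0
      calc ‖z π (s+1) n - zstar‖^2
          ≤ (1 - γ*μ/2)^n * ‖z π s n - zstar‖^2 + 96*γ^2*(n:ℝ)^3*τ^2 := h
        _ ≤ (1 - γ*μ/2)^n * ((1 - γ*μ/2)^(n*(s+1)) * ‖z00 - zstar‖^2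
              + 96*γ^2*(n:ℝ)^3*τ^2 * ∑ k ∈ Finset.range (s+1), ((1 - γ*μ/2)^n)^k)
            + 96*γ^2*(n:ℝ)^3*τ^2 := by linarith [hmul]
        _ = (1 - γ*μ/2)^(n*(s+1+1)) * ‖z00 - zstar‖^2
            + 96*γ^2*(n:ℝ)^3*τ^2 * ∑ k ∈ Finset.range (s+1+1), ((1 - γ*μ/2)^n)^k := by
            rw [geom_sum_succ (n := s+1)]
            have e : (1 - γ*μ/2)^(n*(s+1+1)) = (1 - γ*μ/2)^n * (1 - γ*μ/2)^(n*(s+1)) := by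
              rw [← pow_add]
              congr 1
              ring
            rw [e]
            ring
  have hgeo := rr_geo' hγμ0 hn hxn
  set Sg := ∑ k ∈ Finset.range S, ((1 - γ*μ/2)^n)^k with hSgdef
  have hSg0 : 0 ≤ Sg := Finset.sum_nonneg fun k _ => pow_nonneg hρ0 k
  have hgm := geom_sum_mul ((1 - γ*μ/2)^n) S
  rw [← hSgdef] at hgm
  have hSg1 : Sg * (1 - (1 - γ*μ/2)^n) ≤ 1 := by
    nlinarith [pow_nonneg hρ0 S, hgm]
  have hSg2 : Sg * ((2/5)*((n:ℝ)*(γ*μ))) ≤ 1 :=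
    le_trans (mul_le_mul_of_nonneg_left hgeo hSg0) hSg1
  have hnoise_total : 96*γ^2*(n:ℝ)^3*τ^2 * Sg * μ ≤ 240*γ*(n:ℝ)^2*τ^2 := by
    have hK : (0:ℝ) ≤ 240*γ*(n:ℝ)^2*τ^2 := by positivity
    nlinarith [mul_le_mul_of_nonneg_left hSg2 hK]
  have hB : ∀ π : Fin S → Equiv.Perm (Fin n),
      ‖z π (S-1) n - zstar‖^2 ≤ (1 - γ*μ/2)^(S*n) * ‖z00 - zstar‖^2
        + 256*γ*(n:ℝ)^2*σstar^2/μ := by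
    intro π
    have hc := claim π (S-1) (by omega)
    have he : S - 1 + 1 = S := by omega
    rw [he] at hc
    rw [← hSgdef] at hc
    have hexp : (1 - γ*μ/2)^(n*S) = (1 - γ*μ/2)^(S*n) := by rw [mul_comm n S]
    rw [hexp] at hc
    have hlast : 96*γ^2*(n:ℝ)^3*τ^2 * Sg ≤ 256*γ*(n:ℝ)^2*σstar^2/μ := by
      rw [le_div_iff₀ hμ, ← hτ2]
      have hpos : (0:ℝ) ≤ γ*(n:ℝ)^2*τ^2 := by positivity
      nlinarith [hnoise_total, hpos]
    linarith [hc, hlast]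
  have hcard : (0:ℝ) < (Fintype.card (Fin S → Equiv.Perm (Fin n)) : ℝ) := by
    exact_mod_cast Fintype.card_pos
  rw [div_le_iff₀ hcard]
  calc ∑ π : Fin S → Equiv.Perm (Fin n), ‖z π (S-1) n - zstar‖^2
      ≤ ∑ _π : Fin S → Equiv.Perm (Fin n),
        ((1 - γ*μ/2)^(S*n) * ‖z00 - zstar‖^2 + 256*γ*(n:ℝ)^2*σstar^2/μ) :=
        Finset.sum_le_sum fun π _ => hB π
    _ = (Fintype.card (Fin S → Equiv.Perm (Fin n)) : ℝ) *
        ((1 - γ*μ/2)^(S*n) * ‖z00 - zstar‖^2 + 256*γ*(n:ℝ)^2*σstar^2/μ) := by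
        rw [Finset.sum_const, Finset.card_univ, nsmul_eq_mul]
    _ = ((1 - γ*μ/2)^(S*n) * ‖z00 - zstar‖^2 + 256*γ*(n:ℝ)^2*σstar^2/μ) *
        (Fintype.card (Fin S → Equiv.Perm (Fin n)) : ℝ) := by ring
end

section
/- Let z_0^0 ∈ ℝ^d and run the Shuffle Once (SO) Extragradient method: draw a single uniformly random permutation π of {1,…,n} before the first epoch and reuse it in every epoch; for each epoch s = 0,…,S−1 and t = 0,…,n−1 set z_s^{t+1/2} = prox_{γg}(z_s^t − γ F_{π(t)}(z_s^t)) and z_s^{t+1} = prox_{γg}(z_s^t − γ F_{π(t)}(z_s^{t+1/2})), with z_{s+1}^0 = z_s^n. If each F_i is L-Lipschitz and μ-strongly monotone, the variance at the optimum is bounded by σ*², n ≥ 4, and 0 < γ ≤ min{1/(2μn), 1/(6L)}, then after S epochs E‖z_S^n − z*‖² ≤ (1 − γμ/2)^{Sn} ‖z_0^0 − z*‖² + 256 γ n² σ*² / μ. -/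
/-!
The bound holds for every permutation, hence for the average. Summing the three-point inequalities
of the prox at the half step and at the full step with the variational inequality at `z*`, and
using Lipschitz continuity and strong monotonicity, one step gives
`‖z⁺ - z*‖² ≤ (1 - γμ/2)‖z - z*‖² - (17/24)(‖z⁺ - w‖² + ‖w - z‖²) - γμ‖w - z*‖² + 2γ⟪δ, z* - w⟫`
with `w` the half iterate and `δ = F_{π(t)}(z*) - F(z*)`. Over an epoch the `δ`'s sum to zero, since
every index is visited once, so the noise only sees the drift `w_t - w_0`, which the step lengths
pay for; the contraction weights `(1 - γμ/2)^(n-1-t)` differ from `1` by at most `nγμ/2`, which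
`-γμ‖w - z*‖²` absorbs. Each epoch thus contracts by `(1 - γμ/2)^n` up to `O(γ²n³σ*²)`, and the
geometric series over epochs gives the `O(γn²σ*²/μ)` neighbourhood.
-/

open scoped RealInnerProductSpace
open Finset Filter Topology

theorem le_pow_mul_add_sum_of_le {r e : ℕ → ℝ} {ρ : ℝ} (hρ : 0 ≤ ρ) {m : ℕ}
    (h : ∀ t < m, r (t + 1) ≤ ρ * r t + e t) :
    r m ≤ ρ ^ m * r 0 + ∑ t ∈ range m, ρ ^ (m - 1 - t) * e t := by
  induction m with
  | zero => simp
  | succ m ih =>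
    have hsum : ∑ t ∈ range m, ρ ^ (m - t) * e t = ρ * ∑ t ∈ range m, ρ ^ (m - 1 - t) * e t := by
      rw [mul_sum]
      refine sum_congr rfl fun t ht => ?_
      rw [← mul_assoc, ← pow_succ', show m - 1 - t + 1 = m - t by have := mem_range.mp ht; omega]
    rw [sum_range_succ, Nat.add_sub_cancel, Nat.sub_self, pow_zero, one_mul, hsum, pow_succ']
    nlinarith [h m (by omega), ih fun t ht => h t (by omega)]

theorem le_pow_mul_add_div_of_le {r : ℕ → ℝ} {ρ c : ℝ} (hρ0 : 0 ≤ ρ) (hρ1 : ρ < 1) (hc : 0 ≤ c)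
    {m : ℕ} (h : ∀ t < m, r (t + 1) ≤ ρ * r t + c) :
    r m ≤ ρ ^ m * r 0 + c / (1 - ρ) := by
  induction m with
  | zero => simpa using div_nonneg hc (by linarith : 0 ≤ 1 - ρ)
  | succ m ih =>
    have hdiv : ρ * (c / (1 - ρ)) + c = c / (1 - ρ) := by
      field_simp [(by linarith : 1 - ρ ≠ 0)]; ring
    have := mul_le_mul_of_nonneg_left (ih fun t ht => h t (by omega)) hρ0
    rw [pow_succ']
    linarith [h m (by omega)]

theorem one_sub_pow_le {x : ℝ} (hx0 : 0 ≤ x) (hx1 : x ≤ 1) {n : ℕ} (hn : 3 * n * x ≤ 1) :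
    (1 - x) ^ n ≤ 1 - 3 / 4 * n * x := by
  induction n with
  | zero => simp
  | succ n ih =>
    push_cast at hn ⊢
    have := ih (by nlinarith)
    rw [pow_succ]
    nlinarith [mul_le_mul_of_nonneg_right this (by linarith : 0 ≤ 1 - x)]

theorem le_of_epoch_recursion {n S : ℕ} (hn : 0 < n) {γ μ σ2 : ℝ} (hγ : 0 < γ) (hμ : 0 < μ)
    (hγμn : n * (γ * μ) ≤ 1 / 2) (hσ2 : 0 ≤ σ2) {r : ℕ → ℝ}
    (h : ∀ s < S, r (s + 1) ≤ (1 - γ * μ / 2) ^ n * r s + 17 / 4 * n ^ 2 * γ ^ 2 * (n * σ2)) :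
    r S ≤ (1 - γ * μ / 2) ^ (S * n) * r 0 + 256 * γ * n ^ 2 * σ2 / μ := by
  have hγμ : 0 < γ * μ := mul_pos hγ hμ
  have hn1 : (1 : ℝ) ≤ n := Nat.one_le_cast.mpr hn
  have hqn : (1 - γ * μ / 2) ^ n ≤ 1 - 3 / 8 * (n * (γ * μ)) := by
    have := one_sub_pow_le (x := γ * μ / 2) (by positivity) (by nlinarith) (n := n) (by linarith)
    linarith
  have hqn0 : 0 ≤ (1 - γ * μ / 2) ^ n := pow_nonneg (by nlinarith) n
  have hnoise : 17 / 4 * n ^ 2 * γ ^ 2 * (n * σ2) / (1 - (1 - γ * μ / 2) ^ n)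
      ≤ 256 * γ * n ^ 2 * σ2 / μ := by
    rw [div_le_div_iff₀ (by nlinarith) hμ]
    nlinarith [mul_le_mul_of_nonneg_left hqn (by positivity : (0 : ℝ) ≤ 256 * γ * n ^ 2 * σ2),
      (by positivity : (0 : ℝ) ≤ γ ^ 2 * n ^ 3 * σ2 * μ)]
  have := le_pow_mul_add_div_of_le hqn0 (by nlinarith) (by positivity) h
  rw [← pow_mul, mul_comm n S] at this
  linarith

-- `c` is the weight `(1 - γμ/2) ^ k`, `k < n`, of one step's error in the unrolled epoch; the
-- loss `1 - c` on the noise term `2γI` is paid for by `-γμV²`.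
theorem weighted_step_le {c γ μ n A V d I : ℝ} (hγ : 0 ≤ γ) (hμ : 0 ≤ μ) (hA : 0 ≤ A)
    (hc : 3 / 4 ≤ c) (hc1 : c ≤ 1) (hcn : 1 - c ≤ n * (γ * μ) / 2) (hI : |I| ≤ d * V) :
    c * (-(17 / 24) * A - γ * μ * V ^ 2 + 2 * γ * I)
      ≤ -(17 / 32) * A + 2 * γ * I + n ^ 2 * γ ^ 3 * μ / 2 * d ^ 2 := by
  have hγμ : 0 ≤ γ * μ := mul_nonneg hγ hμ
  have hshift : c * I ≤ I + (1 - c) * (d * V) := by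
    nlinarith [neg_abs_le I, le_abs_self I]
  have hyoung : n * (γ * μ) / 2 * (2 * γ * (d * V))
      ≤ γ * μ / 2 * (n ^ 2 * γ ^ 2 * d ^ 2 + V ^ 2) := by
    nlinarith [mul_le_mul_of_nonneg_left (two_mul_le_add_sq (n * γ * d) V) hγμ]
  have hdV : 0 ≤ 2 * γ * (d * V) := mul_nonneg (by positivity) ((abs_nonneg I).trans hI)
  have hneg : 0 ≤ (c - 3 / 4) * (17 / 24 * A + γ * μ * V ^ 2) :=
    mul_nonneg (by linarith) (by positivity)
  nlinarith [mul_le_mul_of_nonneg_right hcn hdV,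
    mul_le_mul_of_nonneg_left hshift (by positivity : 0 ≤ 2 * γ)]

theorem sum_range_eq_sum_of_perm {M : Type*} [AddCommMonoid M] {n : ℕ} (π : Equiv.Perm (Fin n))
    (f : Fin n → M) {u : ℕ → M} (hu : ∀ t (ht : t < n), u t = f (π ⟨t, ht⟩)) :
    ∑ t ∈ range n, u t = ∑ i, f i := by
  rw [← Fin.sum_univ_eq_sum_range, ← Equiv.sum_comp π f]
  exact sum_congr rfl fun i _ => hu i i.isLt

section

variable {H : Type*} [NormedAddCommGroup H]

theorem norm_sub_le_sum_range_norm_sub (W : ℕ → H) {t m : ℕ} (ht : t ≤ m) :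
    ‖W t - W 0‖ ≤ ∑ k ∈ range m, ‖W (k + 1) - W k‖ := by
  have h := dist_le_range_sum_dist W t
  simp only [dist_eq_norm'] at h
  exact h.trans <|
    sum_le_sum_of_subset_of_nonneg (range_subset_range.mpr ht) fun _ _ _ => norm_nonneg _

theorem sq_sum_range_norm_sub_le (Z W : ℕ → H) (m : ℕ) :
    (∑ k ∈ range m, ‖W (k + 1) - W k‖) ^ 2
      ≤ 2 * m * ∑ t ∈ range (m + 1), (‖Z (t + 1) - W t‖ ^ 2 + ‖W t - Z t‖ ^ 2) := by
  have hstep : ∀ k,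
      ‖W (k + 1) - W k‖ ^ 2 ≤ 2 * (‖Z (k + 1) - W k‖ ^ 2 + ‖W (k + 1) - Z (k + 1)‖ ^ 2) := by
    intro k
    have := norm_sub_le_norm_sub_add_norm_sub (W (k + 1)) (Z (k + 1)) (W k)
    nlinarith [two_mul_le_add_sq ‖Z (k + 1) - W k‖ ‖W (k + 1) - Z (k + 1)‖,
      norm_nonneg (W (k + 1) - W k)]
  have hshift : ∑ k ∈ range m, (‖Z (k + 1) - W k‖ ^ 2 + ‖W (k + 1) - Z (k + 1)‖ ^ 2)
      ≤ ∑ t ∈ range (m + 1), (‖Z (t + 1) - W t‖ ^ 2 + ‖W t - Z t‖ ^ 2) := by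
    rw [sum_add_distrib, sum_add_distrib, sum_range_succ _ m,
      sum_range_succ' (fun t => ‖W t - Z t‖ ^ 2)]
    nlinarith [sq_nonneg ‖Z (m + 1) - W m‖, sq_nonneg ‖W 0 - Z 0‖]
  calc (∑ k ∈ range m, ‖W (k + 1) - W k‖) ^ 2
      ≤ m * ∑ k ∈ range m, ‖W (k + 1) - W k‖ ^ 2 := by
        simpa using sq_sum_le_card_mul_sum_sq (s := range m) (f := fun k => ‖W (k + 1) - W k‖)
    _ ≤ m * (2 * ∑ k ∈ range m, (‖Z (k + 1) - W k‖ ^ 2 + ‖W (k + 1) - Z (k + 1)‖ ^ 2)) := by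
        refine mul_le_mul_of_nonneg_left ?_ (Nat.cast_nonneg m)
        rw [mul_sum]
        exact sum_le_sum fun k _ => hstep k
    _ ≤ _ := by nlinarith [mul_le_mul_of_nonneg_left hshift (by positivity : (0 : ℝ) ≤ 2 * m)]

def IsProxOf (γ : ℝ) (g : H → EReal) (prox : H → H) : Prop :=
  ∀ x y : H, (γ : EReal) * g (prox x) + ((‖prox x - x‖ ^ 2 / 2 : ℝ) : EReal)
    ≤ (γ : EReal) * g y + ((‖y - x‖ ^ 2 / 2 : ℝ) : EReal)

namespace IsProxOf

variable {γ : ℝ} {g : H → EReal} {prox : H → H}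

theorem ne_top (hprox : IsProxOf γ g prox) (hγ : 0 < γ) (hg_bot : ∀ x, g x ≠ ⊥) (x : H)
    {y : H} (hy : g y ≠ ⊤) : g (prox x) ≠ ⊤ := by
  intro htop
  have h := hprox x y
  lift g y to ℝ using ⟨hy, hg_bot y⟩ with B
  rw [htop, EReal.mul_top_of_pos (mod_cast hγ), EReal.top_add_of_ne_bot (EReal.coe_ne_bot _),
    top_le_iff] at h
  exact EReal.coe_ne_top _ (by exact_mod_cast h)

variable [InnerProductSpace ℝ H]

theorem inner_le (hprox : IsProxOf γ g prox) (hγ : 0 < γ) (hg_bot : ∀ x, g x ≠ ⊥)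
    (hg_convex : ∀ (x y : H) (a b : ℝ), 0 ≤ a → 0 ≤ b → a + b = 1 →
      g (a • x + b • y) ≤ (a : EReal) * g x + (b : EReal) * g y)
    (x : H) {y : H} (hy : g y ≠ ⊤) :
    γ * ((g (prox x)).toReal - (g y).toReal) ≤ ⟪y - prox x, prox x - x⟫ := by
  have hp := hprox.ne_top hγ hg_bot x hy
  set p := prox x
  lift g y to ℝ using ⟨hy, hg_bot y⟩ with B hB
  lift g p to ℝ using ⟨hp, hg_bot p⟩ with A hA
  simp only [EReal.toReal_coe]
  -- minimality of `p` against `p + t • (y - p)` gives the claim up to an `O(t)` error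
  have hsegment : ∀ t ∈ Set.Ioo (0 : ℝ) 1,
      γ * (A - B) ≤ ⟪y - p, p - x⟫ + t / 2 * ‖y - p‖ ^ 2 := by
    rintro t ⟨ht0, ht1⟩
    have hconv := hg_convex p y (1 - t) t (by linarith) ht0.le (by ring)
    rw [← hA, ← hB, ← EReal.coe_mul, ← EReal.coe_mul, ← EReal.coe_add] at hconv
    have hyt := EReal.coe_toReal (ne_top_of_le_ne_top (EReal.coe_ne_top _) hconv) (hg_bot _)
    have hmin := hprox x ((1 - t) • p + t • y)
    rw [← hA, ← hyt] at hmin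
    have hmin' : γ * A + ‖p - x‖ ^ 2 / 2
        ≤ γ * (g ((1 - t) • p + t • y)).toReal + ‖(1 - t) • p + t • y - x‖ ^ 2 / 2 := by
      exact_mod_cast hmin
    have hval : (g ((1 - t) • p + t • y)).toReal ≤ (1 - t) * A + t * B := by
      rw [← EReal.coe_le_coe_iff, hyt]; exact hconv
    have hexpand : ‖(1 - t) • p + t • y - x‖ ^ 2
        = ‖p - x‖ ^ 2 + 2 * t * ⟪y - p, p - x⟫ + t ^ 2 * ‖y - p‖ ^ 2 := by
      rw [show (1 - t) • p + t • y - x = (p - x) + t • (y - p) by module, norm_add_sq_real,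
        inner_smul_right, norm_smul, mul_pow, Real.norm_eq_abs, sq_abs, real_inner_comm]
      ring
    have := mul_le_mul_of_nonneg_left hval hγ.le
    nlinarith
  have hlim : Tendsto (fun t : ℝ => ⟪y - p, p - x⟫ + t / 2 * ‖y - p‖ ^ 2) (𝓝[>] 0)
      (𝓝 (⟪y - p, p - x⟫ + 0 / 2 * ‖y - p‖ ^ 2)) :=
    ((continuous_const.add ((continuous_id.div_const 2).mul continuous_const)).tendsto 0).mono_left
      nhdsWithin_le_nhds
  simp only [zero_div, zero_mul, add_zero] at hlim
  exact ge_of_tendsto hlim (Filter.mem_of_superset (Ioo_mem_nhdsGT one_pos) hsegment)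

end IsProxOf

variable [InnerProductSpace ℝ H]

theorem extragradient_sq_le {γ : ℝ} {g : H → EReal} {prox : H → H} (hprox : IsProxOf γ g prox)
    (hγ : 0 < γ) (hg_bot : ∀ x, g x ≠ ⊥)
    (hg_convex : ∀ (x y : H) (a b : ℝ), 0 ≤ a → 0 ≤ b → a + b = 1 →
      g (a • x + b • y) ≤ (a : EReal) * g x + (b : EReal) * g y)
    {Fi : H → H} {Fbar zs : H} (hVI : ∀ z, g zs ≤ ((⟪Fbar, z - zs⟫ : ℝ) : EReal) + g z)
    (hzs : g zs ≠ ⊤) {zc w zn : H} (hw : w = prox (zc - γ • Fi zc))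
    (hzn : zn = prox (zc - γ • Fi w)) :
    ‖zn - zs‖ ^ 2 ≤ ‖zc - zs‖ ^ 2 - ‖zn - w‖ ^ 2 - ‖w - zc‖ ^ 2
      + 2 * γ * ⟪Fi zc - Fi w, zn - w⟫ - 2 * γ * ⟪Fi w - Fbar, w - zs⟫ := by
  have hzn_top : g zn ≠ ⊤ := hzn ▸ hprox.ne_top hγ hg_bot _ hzs
  have hw_top : g w ≠ ⊤ := hw ▸ hprox.ne_top hγ hg_bot _ hzs
  have h1 := hprox.inner_le hγ hg_bot hg_convex (zc - γ • Fi w) hzs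
  have h2 := hprox.inner_le hγ hg_bot hg_convex (zc - γ • Fi zc) hzn_top
  rw [← hzn] at h1
  rw [← hw] at h2
  have h3 : (g zs).toReal ≤ ⟪Fbar, w - zs⟫ + (g w).toReal := by
    have h := hVI w
    lift g zs to ℝ using ⟨hzs, hg_bot zs⟩ with Gs
    lift g w to ℝ using ⟨hw_top, hg_bot w⟩ with Gw
    simp only [EReal.toReal_coe]
    exact_mod_cast h
  have h3' := mul_le_mul_of_nonneg_left h3 hγ.le
  simp only [← real_inner_self_eq_norm_sq, inner_sub_left, inner_sub_right, inner_smul_right,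
    real_inner_comm] at h1 h2 h3' ⊢
  linarith

theorem extragradient_step_contraction {γ μ L : ℝ} (hγ : 0 ≤ γ) (hμ : 0 ≤ μ)
    (hγμ : γ * μ ≤ 1 / 8) (hγL : γ * L ≤ 1 / 6) {Fi : H → H} {Fbar zs zc w zn : H}
    (hLip : ‖Fi zc - Fi w‖ ≤ L * ‖zc - w‖) (hmono : μ * ‖w - zs‖ ^ 2 ≤ ⟪Fi w - Fi zs, w - zs⟫)
    (hdesc : ‖zn - zs‖ ^ 2 ≤ ‖zc - zs‖ ^ 2 - ‖zn - w‖ ^ 2 - ‖w - zc‖ ^ 2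
      + 2 * γ * ⟪Fi zc - Fi w, zn - w⟫ - 2 * γ * ⟪Fi w - Fbar, w - zs⟫) :
    ‖zn - zs‖ ^ 2 ≤ (1 - γ * μ / 2) * ‖zc - zs‖ ^ 2
      - 17 / 24 * (‖zn - w‖ ^ 2 + ‖w - zc‖ ^ 2) - γ * μ * ‖w - zs‖ ^ 2
      + 2 * γ * ⟪Fi zs - Fbar, zs - w⟫ := by
  have hcross : 2 * γ * ⟪Fi zc - Fi w, zn - w⟫ ≤ (‖zn - w‖ ^ 2 + ‖w - zc‖ ^ 2) / 6 := by
    have hcs : ⟪Fi zc - Fi w, zn - w⟫ ≤ L * ‖w - zc‖ * ‖zn - w‖ := by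
      rw [norm_sub_rev w zc]
      exact (real_inner_le_norm _ _).trans (mul_le_mul_of_nonneg_right hLip (norm_nonneg _))
    have := mul_le_mul_of_nonneg_left hcs hγ
    nlinarith [two_mul_le_add_sq ‖zn - w‖ ‖w - zc‖,
      mul_nonneg (norm_nonneg (w - zc)) (norm_nonneg (zn - w))]
  have hsplit : ‖zc - zs‖ ^ 2 ≤ 2 * ‖w - zs‖ ^ 2 + 2 * ‖w - zc‖ ^ 2 := by
    have := norm_sub_le (w - zs) (w - zc)
    rw [show w - zs - (w - zc) = zc - zs by abel] at this
    nlinarith [two_mul_le_add_sq ‖w - zs‖ ‖w - zc‖, norm_nonneg (zc - zs)]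
  have hnoise : ⟪Fi w - Fbar, w - zs⟫ = ⟪Fi w - Fi zs, w - zs⟫ - ⟪Fi zs - Fbar, zs - w⟫ := by
    rw [← neg_sub w zs, inner_neg_right, sub_neg_eq_add, ← inner_add_left, sub_add_sub_cancel]
  have hγμ0 : 0 ≤ γ * μ := mul_nonneg hγ hμ
  nlinarith [mul_le_mul_of_nonneg_left hmono hγ, mul_le_mul_of_nonneg_left hsplit hγμ0,
    mul_le_mul_of_nonneg_right hγμ (sq_nonneg ‖w - zc‖)]

theorem sum_inner_le_of_sum_eq_zero {δ W : ℕ → H} {zs : H} {n : ℕ} {γ B P : ℝ} (hγ : 0 ≤ γ)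
    (hδ0 : ∑ t ∈ range n, δ t = 0) (hδB : ∑ t ∈ range n, ‖δ t‖ ^ 2 ≤ B)
    (hW : ∀ t < n, ‖W t - W 0‖ ≤ P) :
    ∑ t ∈ range n, 2 * γ * ⟪δ t, zs - W t⟫ ≤ 4 * n ^ 2 * γ ^ 2 * B + P ^ 2 / (4 * n) := by
  have hcenter : ∑ t ∈ range n, ⟪δ t, zs - W t⟫ = ∑ t ∈ range n, ⟪δ t, W 0 - W t⟫ := by
    have hzero : ∑ t ∈ range n, ⟪δ t, zs - W 0⟫ = 0 := by rw [← sum_inner, hδ0, inner_zero_left]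
    rw [← add_zero (∑ t ∈ range n, ⟪δ t, W 0 - W t⟫), ← hzero, ← sum_add_distrib]
    refine sum_congr rfl fun t _ => ?_
    rw [← inner_add_right, sub_add_sub_cancel']
  have hterm : ∀ t ∈ range n, 2 * γ * ⟪δ t, W 0 - W t⟫
      ≤ 4 * n ^ 2 * γ ^ 2 * ‖δ t‖ ^ 2 + (P / (2 * n)) ^ 2 := by
    intro t ht
    have hn : (n : ℝ) ≠ 0 := Nat.cast_ne_zero.mpr (by have := mem_range.mp ht; omega)
    have hinner : ⟪δ t, W 0 - W t⟫ ≤ ‖δ t‖ * P := by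
      have hWt := hW t (mem_range.mp ht)
      rw [norm_sub_rev] at hWt
      exact (real_inner_le_norm _ _).trans (mul_le_mul_of_nonneg_left hWt (norm_nonneg _))
    have hyoung := two_mul_le_add_sq (2 * n * γ * ‖δ t‖) (P / (2 * n))
    have hexp : 2 * (2 * n * γ * ‖δ t‖) * (P / (2 * n)) = 2 * γ * (‖δ t‖ * P) := by
      field_simp
    nlinarith [mul_le_mul_of_nonneg_left hinner (by positivity : 0 ≤ 2 * γ)]
  calc ∑ t ∈ range n, 2 * γ * ⟪δ t, zs - W t⟫
      = ∑ t ∈ range n, 2 * γ * ⟪δ t, W 0 - W t⟫ := by rw [← mul_sum, ← mul_sum, hcenter]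
    _ ≤ ∑ t ∈ range n, (4 * n ^ 2 * γ ^ 2 * ‖δ t‖ ^ 2 + (P / (2 * n)) ^ 2) := sum_le_sum hterm
    _ ≤ 4 * n ^ 2 * γ ^ 2 * B + P ^ 2 / (4 * n) := by
        rw [sum_add_distrib, ← mul_sum, sum_const, card_range, nsmul_eq_mul]
        rcases Nat.eq_zero_or_pos n with rfl | hn
        · simp
        · have : (n : ℝ) * (P / (2 * n)) ^ 2 = P ^ 2 / (4 * n) := by field_simp; ring
          rw [this]; gcongr

theorem sum_eq_card_smul_mean {ι : Type*} [Fintype ι] (x : ι → H) :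
    ∑ j, x j = (Fintype.card ι : ℝ) • ((Fintype.card ι : ℝ)⁻¹ • ∑ j, x j) := by
  rcases isEmpty_or_nonempty ι with hι | hι
  · simp
  · rw [smul_smul, mul_inv_cancel₀ (by positivity), one_smul]

theorem sum_sub_mean_eq_zero {ι : Type*} [Fintype ι] (x : ι → H) :
    ∑ i, (x i - (Fintype.card ι : ℝ)⁻¹ • ∑ j, x j) = 0 := by
  rw [sum_sub_distrib, sum_const, card_univ, ← Nat.cast_smul_eq_nsmul ℝ, ← sum_eq_card_smul_mean,
    sub_self]

theorem sum_norm_sub_mean_sq_le {ι : Type*} [Fintype ι] (x : ι → H) :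
    ∑ i, ‖x i - (Fintype.card ι : ℝ)⁻¹ • ∑ j, x j‖ ^ 2 ≤ ∑ i, ‖x i‖ ^ 2 := by
  have hsum := sum_eq_card_smul_mean x
  set m := (Fintype.card ι : ℝ)⁻¹ • ∑ j, x j
  have hexpand : ∑ i, ‖x i - m‖ ^ 2 = ∑ i, ‖x i‖ ^ 2 - Fintype.card ι * ‖m‖ ^ 2 := by
    simp only [norm_sub_sq_real, sum_add_distrib, sum_sub_distrib, ← mul_sum, ← sum_inner, hsum,
      inner_smul_left, real_inner_self_eq_norm_sq, sum_const, card_univ, nsmul_eq_mul]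
    simp; ring
  rw [hexpand]
  nlinarith [sq_nonneg ‖m‖, (Nat.cast_nonneg (Fintype.card ι) : (0 : ℝ) ≤ _)]

theorem norm_sq_le_of_epoch {n : ℕ} (hn : 0 < n) {γ μ B : ℝ} (hγ : 0 ≤ γ) (hμ : 0 ≤ μ)
    (hγμn : n * (γ * μ) ≤ 1 / 2) {δ Z W : ℕ → H} {zs : H}
    (hδ0 : ∑ t ∈ range n, δ t = 0) (hδB : ∑ t ∈ range n, ‖δ t‖ ^ 2 ≤ B)
    (hstep : ∀ t < n, ‖Z (t + 1) - zs‖ ^ 2 ≤ (1 - γ * μ / 2) * ‖Z t - zs‖ ^ 2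
      - 17 / 24 * (‖Z (t + 1) - W t‖ ^ 2 + ‖W t - Z t‖ ^ 2) - γ * μ * ‖W t - zs‖ ^ 2
      + 2 * γ * ⟪δ t, zs - W t⟫) :
    ‖Z n - zs‖ ^ 2 ≤ (1 - γ * μ / 2) ^ n * ‖Z 0 - zs‖ ^ 2 + 17 / 4 * n ^ 2 * γ ^ 2 * B := by
  set q := 1 - γ * μ / 2 with hq
  set A : ℕ → ℝ := fun t => ‖Z (t + 1) - W t‖ ^ 2 + ‖W t - Z t‖ ^ 2
  set P := ∑ k ∈ range (n - 1), ‖W (k + 1) - W k‖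
  have hn1 : (1 : ℝ) ≤ n := Nat.one_le_cast.mpr hn
  have hγμ : 0 ≤ γ * μ := mul_nonneg hγ hμ
  have hγμ' : γ * μ ≤ 1 / 2 := by nlinarith
  have hq0 : 0 ≤ q := by linarith
  have hq1 : q ≤ 1 := by linarith
  have hqn : 1 - n * (γ * μ) / 2 ≤ q ^ n :=
    calc 1 - n * (γ * μ) / 2 = 1 + n * -(γ * μ / 2) := by ring
      _ ≤ q ^ n := one_add_mul_le_pow (by linarith) n
  have hunroll := le_pow_mul_add_sum_of_le hq0 (r := fun t => ‖Z t - zs‖ ^ 2)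
    (e := fun t => -(17 / 24) * A t - γ * μ * ‖W t - zs‖ ^ 2 + 2 * γ * ⟪δ t, zs - W t⟫)
    (fun t ht => by simp only [A]; linarith [hstep t ht])
  have hweights : ∀ t ∈ range n,
      q ^ (n - 1 - t) * (-(17 / 24) * A t - γ * μ * ‖W t - zs‖ ^ 2 + 2 * γ * ⟪δ t, zs - W t⟫)
        ≤ -(17 / 32) * A t + 2 * γ * ⟪δ t, zs - W t⟫ + n ^ 2 * γ ^ 3 * μ / 2 * ‖δ t‖ ^ 2 := by
    intro t _
    have hqt : q ^ n ≤ q ^ (n - 1 - t) := pow_le_pow_of_le_one hq0 hq1 (by omega)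
    refine weighted_step_le hγ hμ (by positivity) (by linarith) (pow_le_one₀ hq0 hq1)
      (by linarith) ?_
    rw [norm_sub_rev (W t)]
    exact abs_real_inner_le_norm _ _
  have hP : P ^ 2 ≤ 2 * n * ∑ t ∈ range n, A t := by
    have h := sq_sum_range_norm_sub_le Z W (n - 1)
    rw [Nat.sub_add_cancel hn] at h
    refine h.trans (mul_le_mul_of_nonneg_right ?_ (sum_nonneg fun t _ => by positivity))
    have : ((n - 1 : ℕ) : ℝ) ≤ n := Nat.cast_le.mpr (Nat.sub_le n 1)
    linarith
  have hdrift := sum_inner_le_of_sum_eq_zero (W := W) (zs := zs) (P := P) hγ hδ0 hδB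
    fun t ht => norm_sub_le_sum_range_norm_sub W (by omega : t ≤ n - 1)
  have hB : 0 ≤ B := (sum_nonneg fun t _ => by positivity).trans hδB
  have hA : 0 ≤ ∑ t ∈ range n, A t := sum_nonneg fun t _ => by positivity
  have hPn : P ^ 2 / (4 * n) ≤ (∑ t ∈ range n, A t) / 2 := by
    rw [div_le_iff₀ (by positivity)]; nlinarith
  have hcorr : n ^ 2 * γ ^ 3 * μ / 2 * ∑ t ∈ range n, ‖δ t‖ ^ 2 ≤ n ^ 2 * γ ^ 2 * B / 4 := by
    have := mul_le_mul_of_nonneg_left hδB (by positivity : 0 ≤ (n : ℝ) ^ 2 * γ ^ 3 * μ / 2)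
    nlinarith [mul_le_mul_of_nonneg_left hγμ' (by positivity : 0 ≤ (n : ℝ) ^ 2 * γ ^ 2 * B)]
  have hsum := sum_le_sum hweights
  rw [sum_add_distrib, sum_add_distrib, ← mul_sum, ← mul_sum, ← mul_sum] at hsum
  rw [← mul_sum] at hdrift
  linarith

theorem norm_sq_le_of_shuffled_epoch {n : ℕ} (hn : 0 < n) {γ μ B : ℝ} (hγ : 0 ≤ γ) (hμ : 0 ≤ μ)
    (hγμn : n * (γ * μ) ≤ 1 / 2) (π : Equiv.Perm (Fin n)) {δ : Fin n → H} {Z W : ℕ → H} {zs : H}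
    (hδ0 : ∑ i, δ i = 0) (hδB : ∑ i, ‖δ i‖ ^ 2 ≤ B)
    (hstep : ∀ t (ht : t < n), ‖Z (t + 1) - zs‖ ^ 2 ≤ (1 - γ * μ / 2) * ‖Z t - zs‖ ^ 2
      - 17 / 24 * (‖Z (t + 1) - W t‖ ^ 2 + ‖W t - Z t‖ ^ 2) - γ * μ * ‖W t - zs‖ ^ 2
      + 2 * γ * ⟪δ (π ⟨t, ht⟩), zs - W t⟫) :
    ‖Z n - zs‖ ^ 2 ≤ (1 - γ * μ / 2) ^ n * ‖Z 0 - zs‖ ^ 2 + 17 / 4 * n ^ 2 * γ ^ 2 * B := by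
  set u : ℕ → H := fun t => if ht : t < n then δ (π ⟨t, ht⟩) else 0
  have hu : ∀ t (ht : t < n), u t = δ (π ⟨t, ht⟩) := fun t ht => dif_pos ht
  refine norm_sq_le_of_epoch hn hγ hμ hγμn (δ := u) (W := W) ?_ ?_ fun t ht => ?_
  · rw [sum_range_eq_sum_of_perm π δ hu, hδ0]
  · rwa [sum_range_eq_sum_of_perm π (fun i => ‖δ i‖ ^ 2) fun t ht => by rw [hu t ht]]
  · rw [hu t ht]
    exact hstep t ht

end

theorem so_extragradient_convergence_general
    (d n S : ℕ) (hn : 4 ≤ n) (hS : 0 < S)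
    (L μ γ σstar : ℝ) (hL : 0 < L) (hμ : 0 < μ)
    (hγ0 : 0 < γ) (hγ1 : γ ≤ 1 / (2 * μ * n)) (hγ2 : γ ≤ 1 / (6 * L))
    (F : Fin n → EuclideanSpace ℝ (Fin d) → EuclideanSpace ℝ (Fin d))
    (g : EuclideanSpace ℝ (Fin d) → EReal)
    (hg_bot : ∀ x, g x ≠ ⊥) (hg_top : ∃ x, g x ≠ ⊤)
    (hg_convex : ∀ (x y : EuclideanSpace ℝ (Fin d)) (a b : ℝ), 0 ≤ a → 0 ≤ b → a + b = 1 →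
      g (a • x + b • y) ≤ (a : EReal) * g x + (b : EReal) * g y)
    (prox : EuclideanSpace ℝ (Fin d) → EuclideanSpace ℝ (Fin d))
    (hprox : ∀ x y : EuclideanSpace ℝ (Fin d),
      (γ : EReal) * g (prox x) + ((‖prox x - x‖ ^ 2 / 2 : ℝ) : EReal)
        ≤ (γ : EReal) * g y + ((‖y - x‖ ^ 2 / 2 : ℝ) : EReal))
    (hLip : ∀ (i : Fin n) (z₁ z₂ : EuclideanSpace ℝ (Fin d)),
      ‖F i z₁ - F i z₂‖ ≤ L * ‖z₁ - z₂‖)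
    (hmono : ∀ (i : Fin n) (z₁ z₂ : EuclideanSpace ℝ (Fin d)),
      μ * ‖z₁ - z₂‖ ^ 2 ≤ ⟪F i z₁ - F i z₂, z₁ - z₂⟫)
    (zstar : EuclideanSpace ℝ (Fin d))
    (hVI : ∀ z, g zstar ≤ ((⟪(n : ℝ)⁻¹ • ∑ i, F i zstar, z - zstar⟫ : ℝ) : EReal) + g z)
    (hvar1 : (n : ℝ)⁻¹ * ∑ i, ‖F i zstar‖ ^ 2 ≤ σstar ^ 2)
    (z00 : EuclideanSpace ℝ (Fin d))
    (z zhalf : Equiv.Perm (Fin n) → ℕ → ℕ → EuclideanSpace ℝ (Fin d))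
    (hinit : ∀ π, z π 0 0 = z00)
    (hhalf : ∀ π, ∀ s, ∀ hs : s < S, ∀ t, ∀ ht : t < n,
      zhalf π s t = prox (z π s t - γ • F (π ⟨t, ht⟩) (z π s t)))
    (hstep : ∀ π, ∀ s, ∀ hs : s < S, ∀ t, ∀ ht : t < n,
      z π s (t + 1) = prox (z π s t - γ • F (π ⟨t, ht⟩) (zhalf π s t)))
    (hepoch : ∀ π, ∀ s, s + 1 ≤ S → z π (s + 1) 0 = z π s n) :
    (∑ π : Equiv.Perm (Fin n), ‖z π (S - 1) n - zstar‖ ^ 2) /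
        (Fintype.card (Equiv.Perm (Fin n)) : ℝ)
      ≤ (1 - γ * μ / 2) ^ (S * n) * ‖z00 - zstar‖ ^ 2
        + 256 * γ * (n : ℝ) ^ 2 * σstar ^ 2 / μ := by
  have hn4 : (4 : ℝ) ≤ n := by exact_mod_cast hn
  have hγμn : n * (γ * μ) ≤ 1 / 2 := by
    rw [le_div_iff₀ (by positivity)] at hγ1; linarith
  have hγμ : γ * μ ≤ 1 / 8 := by nlinarith [mul_pos hγ0 hμ]
  have hγL : γ * L ≤ 1 / 6 := by
    rw [le_div_iff₀ (by positivity)] at hγ2; linarith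
  set Fbar := (n : ℝ)⁻¹ • ∑ i, F i zstar
  have hzstar : g zstar ≠ ⊤ := by
    obtain ⟨y, hy⟩ := hg_top
    exact ne_top_of_le_ne_top (EReal.add_ne_top (EReal.coe_ne_top _) hy) (hVI y)
  have hmean : ∑ i, (F i zstar - Fbar) = 0 := by
    simpa only [Fintype.card_fin] using sum_sub_mean_eq_zero fun i => F i zstar
  have hvar : ∑ i, ‖F i zstar - Fbar‖ ^ 2 ≤ n * σstar ^ 2 := by
    have h := sum_norm_sub_mean_sq_le fun i => F i zstar
    rw [Fintype.card_fin] at h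
    rw [inv_mul_le_iff₀ (by positivity)] at hvar1
    exact h.trans hvar1
  have hrun : ∀ π, ‖z π (S - 1) n - zstar‖ ^ 2
      ≤ (1 - γ * μ / 2) ^ (S * n) * ‖z00 - zstar‖ ^ 2 + 256 * γ * n ^ 2 * σstar ^ 2 / μ := by
    intro π
    have hlast : z π S 0 = z π (S - 1) n := by
      simpa only [Nat.sub_add_cancel hS] using hepoch π (S - 1) (by omega)
    rw [← hlast, ← hinit π]
    refine le_of_epoch_recursion (r := fun s => ‖z π s 0 - zstar‖ ^ 2) (by omega) hγ0 hμ hγμn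
      (sq_nonneg σstar) fun s hs => ?_
    rw [hepoch π s hs]
    exact norm_sq_le_of_shuffled_epoch (by omega) hγ0.le hμ.le hγμn π hmean hvar fun t ht =>
      extragradient_step_contraction hγ0.le hμ.le hγμ hγL (hLip _ _ _) (hmono _ _ _)
        (extragradient_sq_le hprox hγ0 hg_bot hg_convex hVI hzstar (hhalf π s hs t ht)
          (hstep π s hs t ht))
  rw [div_le_iff₀ (by positivity), mul_comm, ← nsmul_eq_mul, ← card_univ]
  exact sum_le_card_nsmul _ _ _ fun π _ => hrun π

/-- Convergence of the Shuffle Once (SO) Extragradient method for a finite-sum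
variational inequality: a single uniform permutation `π` of `{1,…,n}` is drawn before the
first epoch and reused in every epoch, performing
`z_s^{t+1/2} = prox_{γg}(z_s^t − γF_{π(t)}(z_s^t))`,
`z_s^{t+1} = prox_{γg}(z_s^t − γF_{π(t)}(z_s^{t+1/2}))`.  If each `F_i` is `L`-Lipschitz
and `μ`-strongly monotone, the variance at the optimum is bounded by `σ*²`, `n ≥ 4` and
`0 < γ ≤ min{1/(2μn), 1/(6L)}`, then after `S` epochs
`E‖z_S^n − z*‖² ≤ (1 − γμ/2)^{Sn}‖z_0^0 − z*‖² + 256γn²σ*²/μ`.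
(The expectation is the uniform average over all permutations.) -/
theorem so_extragradient_convergence
    (d n S : ℕ) (hn : 4 ≤ n) (hS : 0 < S)
    (L μ γ σstar : ℝ) (hL : 0 < L) (hμ : 0 < μ)
    (hγ0 : 0 < γ) (hγ1 : γ ≤ 1 / (2 * μ * n)) (hγ2 : γ ≤ 1 / (6 * L))
    (F : Fin n → EuclideanSpace ℝ (Fin d) → EuclideanSpace ℝ (Fin d))
    (g : EuclideanSpace ℝ (Fin d) → EReal)
    (hg_bot : ∀ x, g x ≠ ⊥) (hg_top : ∃ x, g x ≠ ⊤)
    (hg_convex : ∀ (x y : EuclideanSpace ℝ (Fin d)) (a b : ℝ), 0 ≤ a → 0 ≤ b → a + b = 1 →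
      g (a • x + b • y) ≤ (a : EReal) * g x + (b : EReal) * g y)
    (hg_lsc : LowerSemicontinuous g)
    (prox : EuclideanSpace ℝ (Fin d) → EuclideanSpace ℝ (Fin d))
    (hprox : ∀ x y : EuclideanSpace ℝ (Fin d),
      (γ : EReal) * g (prox x) + ((‖prox x - x‖ ^ 2 / 2 : ℝ) : EReal)
        ≤ (γ : EReal) * g y + ((‖y - x‖ ^ 2 / 2 : ℝ) : EReal))
    (hLip : ∀ (i : Fin n) (z₁ z₂ : EuclideanSpace ℝ (Fin d)),
      ‖F i z₁ - F i z₂‖ ≤ L * ‖z₁ - z₂‖)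
    (hmono : ∀ (i : Fin n) (z₁ z₂ : EuclideanSpace ℝ (Fin d)),
      μ * ‖z₁ - z₂‖ ^ 2 ≤ ⟪F i z₁ - F i z₂, z₁ - z₂⟫)
    (zstar : EuclideanSpace ℝ (Fin d))
    (hVI : ∀ z, g zstar ≤ ((⟪(n : ℝ)⁻¹ • ∑ i, F i zstar, z - zstar⟫ : ℝ) : EReal) + g z)
    (hvar1 : (n : ℝ)⁻¹ * ∑ i, ‖F i zstar‖ ^ 2 ≤ σstar ^ 2)
    (hvar2 : ‖(n : ℝ)⁻¹ • ∑ i, F i zstar‖ ^ 2 ≤ σstar ^ 2)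
    (z00 : EuclideanSpace ℝ (Fin d))
    (z zhalf : Equiv.Perm (Fin n) → ℕ → ℕ → EuclideanSpace ℝ (Fin d))
    (hinit : ∀ π, z π 0 0 = z00)
    (hhalf : ∀ π, ∀ s, ∀ hs : s < S, ∀ t, ∀ ht : t < n,
      zhalf π s t = prox (z π s t - γ • F (π ⟨t, ht⟩) (z π s t)))
    (hstep : ∀ π, ∀ s, ∀ hs : s < S, ∀ t, ∀ ht : t < n,
      z π s (t + 1) = prox (z π s t - γ • F (π ⟨t, ht⟩) (zhalf π s t)))
    (hepoch : ∀ π, ∀ s, s + 1 ≤ S → z π (s + 1) 0 = z π s n) :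
    (∑ π : Equiv.Perm (Fin n), ‖z π (S - 1) n - zstar‖ ^ 2) /
        (Fintype.card (Equiv.Perm (Fin n)) : ℝ)
      ≤ (1 - γ * μ / 2) ^ (S * n) * ‖z00 - zstar‖ ^ 2
        + 256 * γ * (n : ℝ) ^ 2 * σstar ^ 2 / μ :=
  so_extragradient_convergence_general d n S hn hS L μ γ σstar hL hμ hγ0 hγ1 hγ2 F g hg_bot hg_top
    hg_convex prox hprox hLip hmono zstar hVI hvar1 z00 z zhalf hinit hhalf hstep hepoch
end

section
/- Run the SO Extragradient method with variance reduction: starting from z_0^0 = ω_0^0, with parameters γ > 0, α = 1 − p, p = 1/n, n ≥ 2; draw a single uniformly random permutation π of {1,…,n} before the first epoch and reuse it every epoch; at inner step t = 0,…,n−1 of epoch s set z̄_s^t = α z_s^t + (1−α) ω_s^t; z_s^{t+1/2} = prox_{γg}(z̄_s^t − γ F(ω_s^t)); F̂(z_s^{t+1/2}) = F_{π(t)}(z_s^{t+1/2}) − F_{π(t)}(ω_s^t) + F(ω_s^t); z_s^{t+1} = prox_{γg}(z̄_s^t − γ F̂(z_s^{t+1/2})); and ω_s^{t+1} = z_s^t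 with probability p, ω_s^{t+1} = ω_s^t with probability 1 − p (independently of everything else). If each F_i is L-Lipschitz and μ-strongly monotone and γ ≤ (1−α)μ/(6L²), then after T = Sn total iterations V_S^n ≤ (1 − γμ/4)^T V_0^0, where V_s^t = E‖z_s^t − z*‖² + E‖ω_s^t − z*‖². -/
/-!
One step of the variance-reduced extragradient method contracts pathwise,
`‖z⁺ - z*‖² ≤ (1 - 2γμ/3) ((1 - p) ‖z - z*‖² + p ‖w - z*‖²)`: add the first-order optimality
conditions of the two prox steps to the variational inequality at `z*`, use strong monotonicity
of `F` at the half step `u`, and bound the sampling error by `L ‖u - w‖`. The cost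
`‖u - w‖² ≲ ‖u - z̄‖² + (1 - p)² ‖z - w‖²` is paid by the term `-‖u - z̄‖²` of the three-point
identity and the term `-p (1 - p) ‖z - w‖²` in the expansion of `‖z̄ - z*‖²`; this is where
`γ ≤ pμ / (6L²)` enters.

The iterate and anchor at step `t` do not depend on the coin of step `t`, so averaging over that
coin gives `E‖w⁺ - z*‖² = p E‖z - z*‖² + (1 - p) E‖w - z*‖²`. The pair of expected errors then
stays in the cone `X + Y ≤ v, Y ≤ 3v/5`, with `v` shrinking by `1 - γμ/4` at every step.
-/

open scoped RealInnerProductSpace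
open Filter Topology Finset

section InnerProductSpace

variable {E : Type*} [NormedAddCommGroup E] [InnerProductSpace ℝ E]

theorem two_mul_real_inner_le {c : ℝ} (hc : 0 < c) (x y : E) :
    2 * ⟪x, y⟫ ≤ c * ‖x‖ ^ 2 + c⁻¹ * ‖y‖ ^ 2 := by
  have h : 0 ≤ ‖c • x - y‖ ^ 2 := sq_nonneg _
  rw [norm_sub_sq_real, norm_smul, real_inner_smul_left, mul_pow, Real.norm_eq_abs, sq_abs] at h
  refine le_of_mul_le_mul_left ?_ hc
  rw [mul_add, ← mul_assoc c c⁻¹, mul_inv_cancel₀ hc.ne']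
  nlinarith

theorem norm_sub_sq_le_add {θ : ℝ} (hθ : 0 < θ) (x y z : E) :
    ‖x - z‖ ^ 2 ≤ (1 + θ) * ‖x - y‖ ^ 2 + (1 + θ⁻¹) * ‖y - z‖ ^ 2 := by
  have h := two_mul_real_inner_le hθ (x - y) (y - z)
  rw [← sub_add_sub_cancel x y z, norm_add_sq_real]
  linarith

theorem two_mul_real_inner_sub_sub (x y z : E) :
    2 * ⟪x - y, z - x⟫ = ‖z - y‖ ^ 2 - ‖x - y‖ ^ 2 - ‖z - x‖ ^ 2 := by
  have h := norm_sub_sq_real (z - y) (x - y)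
  rw [sub_sub_sub_cancel_right] at h
  rw [← sub_sub_sub_cancel_right z x y, inner_sub_right, real_inner_self_eq_norm_sq,
    real_inner_comm, sub_sub_sub_cancel_right, h]
  ring

theorem norm_smul_add_smul_sub_sq {a b : ℝ} (hab : a + b = 1) (x y z : E) :
    ‖a • x + b • y - z‖ ^ 2 = a * ‖x - z‖ ^ 2 + b * ‖y - z‖ ^ 2 - a * b * ‖x - y‖ ^ 2 := by
  obtain rfl : b = 1 - a := eq_sub_of_add_eq' hab
  have hz : a • x + (1 - a) • y - z = a • (x - z) + (1 - a) • (y - z) := by module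
  rw [hz, ← sub_sub_sub_cancel_right x y z, norm_add_sq_real, norm_sub_sq_real (x - z),
    norm_smul, norm_smul, real_inner_smul_left, real_inner_smul_right, mul_pow, mul_pow,
    Real.norm_eq_abs, Real.norm_eq_abs, sq_abs, sq_abs]
  ring

end InnerProductSpace

theorem le_of_forall_pos_le_add_mul {a b c : ℝ} (h : ∀ θ : ℝ, 0 < θ → θ ≤ 1 → a ≤ b + θ * c) :
    a ≤ b := by
  have hlim : Tendsto (fun θ : ℝ => b + θ * c) (𝓝[>] 0) (𝓝 b) := by
    have : Continuous (fun θ : ℝ => b + θ * c) := by fun_prop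
    simpa using (this.tendsto 0).mono_left nhdsWithin_le_nhds
  exact ge_of_tendsto hlim (eventually_of_mem (Ioc_mem_nhdsGT one_pos) fun θ hθ => h θ hθ.1 hθ.2)

section ConvexProx

variable {E : Type*} [NormedAddCommGroup E] [InnerProductSpace ℝ E]

/-- Compare `u` with the points `(1 - θ) u + θ y` of the segment `[u, y]` and let `θ → 0`. -/
theorem ConvexOn.prox_inner_le {φ : E → ℝ} {D : Set E} (hφ : ConvexOn ℝ D φ) {γ : ℝ}
    (hγ : 0 < γ) {x u : E} (hu : u ∈ D)
    (hmin : ∀ y ∈ D, γ * φ u + ‖u - x‖ ^ 2 / 2 ≤ γ * φ y + ‖y - x‖ ^ 2 / 2) {y : E}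
    (hy : y ∈ D) : γ * φ u ≤ γ * φ y + ⟪u - x, y - u⟫ := by
  refine le_of_forall_pos_le_add_mul (c := ‖y - u‖ ^ 2 / 2) fun θ hθ0 hθ1 => ?_
  have hconv := hφ.2 hu hy (by linarith : 0 ≤ 1 - θ) hθ0.le (by ring)
  have hθy := hmin _ (hφ.1 hu hy (by linarith : 0 ≤ 1 - θ) hθ0.le (by ring))
  have hsub : (1 - θ) • u + θ • y - x = (u - x) + θ • (y - u) := by module
  rw [hsub, norm_add_sq_real, real_inner_smul_right, norm_smul, mul_pow, Real.norm_eq_abs,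
    sq_abs] at hθy
  have hscaled : θ * (γ * φ u) ≤ θ * (γ * φ y + ⟪u - x, y - u⟫ + θ * (‖y - u‖ ^ 2 / 2)) := by
    have := mul_le_mul_of_nonneg_left hconv hγ.le
    simp only [smul_eq_mul] at this
    nlinarith
  exact le_of_mul_le_mul_left hscaled hθ0

end ConvexProx

theorem EReal.ne_top_and_toReal_le {a b : EReal} {r : ℝ} (h : a ≤ r + b) (ha : a ≠ ⊥)
    (hb : b ≠ ⊤) (hb' : b ≠ ⊥) : a ≠ ⊤ ∧ a.toReal ≤ r + b.toReal := by
  rw [← EReal.coe_toReal hb hb', ← EReal.coe_add] at h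
  exact ⟨ne_top_of_le_ne_top (EReal.coe_ne_top _) h,
    (EReal.toReal_le_toReal h ha (EReal.coe_ne_top _)).trans_eq (EReal.toReal_coe _)⟩

section ERealConvex

variable {E : Type*} [AddCommGroup E] [Module ℝ E] {g : E → EReal}

theorem convexOn_toReal (hg_bot : ∀ x, g x ≠ ⊥)
    (hg_convex : ∀ (x y : E) (a b : ℝ), 0 ≤ a → 0 ≤ b → a + b = 1 →
      g (a • x + b • y) ≤ (a : EReal) * g x + (b : EReal) * g y) :
    ConvexOn ℝ {x | g x ≠ ⊤} fun x => (g x).toReal := by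
  have key : ∀ ⦃x⦄, g x ≠ ⊤ → ∀ ⦃y⦄, g y ≠ ⊤ → ∀ ⦃a b : ℝ⦄, 0 ≤ a → 0 ≤ b → a + b = 1 →
      g (a • x + b • y) ≤ ((a * (g x).toReal + b * (g y).toReal : ℝ) : EReal) := by
    intro x hx y hy a b ha hb hab
    rw [EReal.coe_add, EReal.coe_mul, EReal.coe_mul, EReal.coe_toReal hx (hg_bot x),
      EReal.coe_toReal hy (hg_bot y)]
    exact hg_convex x y a b ha hb hab
  refine ⟨fun x hx y hy a b ha hb hab => ?_, fun x hx y hy a b ha hb hab => ?_⟩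
  · exact ne_top_of_le_ne_top (EReal.coe_ne_top _) (key hx hy ha hb hab)
  · exact (EReal.toReal_le_toReal (key hx hy ha hb hab) (hg_bot _) (EReal.coe_ne_top _)).trans_eq
      (EReal.toReal_coe _)

end ERealConvex

section ProximalMap

variable {E : Type*} [NormedAddCommGroup E]

def IsProximalMap (γ : ℝ) (g : E → EReal) (prox : E → E) : Prop :=
  ∀ x y : E, (γ : EReal) * g (prox x) + ((‖prox x - x‖ ^ 2 / 2 : ℝ) : EReal)
    ≤ (γ : EReal) * g y + ((‖y - x‖ ^ 2 / 2 : ℝ) : EReal)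

variable {g : E → EReal} {γ : ℝ} {prox : E → E}

theorem IsProximalMap.ne_top (hprox : IsProximalMap γ g prox) (hγ : 0 < γ)
    (hg_bot : ∀ x, g x ≠ ⊥) (hg_top : ∃ x, g x ≠ ⊤) (x : E) : g (prox x) ≠ ⊤ := by
  obtain ⟨y, hy⟩ := hg_top
  intro hx
  have h := hprox x y
  rw [hx, EReal.coe_mul_top_of_pos hγ, EReal.top_add_coe, top_le_iff,
    ← EReal.coe_toReal hy (hg_bot y), ← EReal.coe_mul, ← EReal.coe_add] at h
  exact EReal.coe_ne_top _ h

theorem IsProximalMap.inner_le [InnerProductSpace ℝ E] (hprox : IsProximalMap γ g prox)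
    (hγ : 0 < γ) (hg_bot : ∀ x, g x ≠ ⊥) (hg_top : ∃ x, g x ≠ ⊤)
    (hg_convex : ∀ (x y : E) (a b : ℝ), 0 ≤ a → 0 ≤ b → a + b = 1 →
      g (a • x + b • y) ≤ (a : EReal) * g x + (b : EReal) * g y)
    (x : E) {y : E} (hy : g y ≠ ⊤) :
    γ * (g (prox x)).toReal ≤ γ * (g y).toReal + ⟪prox x - x, y - prox x⟫ := by
  have hx := hprox.ne_top hγ hg_bot hg_top x
  refine (convexOn_toReal hg_bot hg_convex).prox_inner_le hγ hx (fun y hy => ?_) hy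
  have h := hprox x y
  rw [← EReal.coe_toReal hx (hg_bot _), ← EReal.coe_toReal hy (hg_bot _)] at h
  exact_mod_cast h

end ProximalMap

section Extragradient

variable {E : Type*} [NormedAddCommGroup E] [InnerProductSpace ℝ E]

theorem le_of_lipschitz_of_strongly_monotone [Nontrivial E] {G : E → E} {μ L : ℝ}
    (hLip : ∀ x y, ‖G x - G y‖ ≤ L * ‖x - y‖)
    (hmono : ∀ x y, μ * ‖x - y‖ ^ 2 ≤ ⟪G x - G y, x - y⟫) : μ ≤ L := by
  obtain ⟨x, hx⟩ := exists_ne (0 : E)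
  have hpos : 0 < ‖x‖ ^ 2 := by positivity
  have h := (hmono x 0).trans ((real_inner_le_norm _ _).trans
    (mul_le_mul_of_nonneg_right (hLip x 0) (norm_nonneg _)))
  rw [sub_zero] at h
  nlinarith

theorem mul_le_of_le_mul_div_sq {γ μ L a : ℝ} (hμ : 0 < μ) (hμL : μ ≤ L) (ha : 0 ≤ a)
    (hγ : γ ≤ a * μ / L ^ 2) : γ * μ ≤ a ∧ γ * L ≤ a := by
  have hL : 0 < L := hμ.trans_le hμL
  rw [le_div_iff₀ (by positivity)] at hγ
  constructor
  · refine le_of_mul_le_mul_right ?_ (by positivity : 0 < L ^ 2)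
    nlinarith [mul_le_mul_of_nonneg_left (mul_le_mul hμL hμL hμ.le hL.le) ha]
  · refine le_of_mul_le_mul_right ?_ (by positivity : 0 < L ^ 2)
    nlinarith [mul_le_mul_of_nonneg_left (mul_le_mul_of_nonneg_left hμL hL.le) ha]

theorem norm_average_sub_le {ι : Type*} [Fintype ι] [Nonempty ι] (F : ι → E → E) {L : ℝ}
    (hF : ∀ i x y, ‖F i x - F i y‖ ≤ L * ‖x - y‖) (x y : E) :
    ‖(Fintype.card ι : ℝ)⁻¹ • ∑ i, F i x - (Fintype.card ι : ℝ)⁻¹ • ∑ i, F i y‖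
      ≤ L * ‖x - y‖ := by
  have hcard : (0 : ℝ) < Fintype.card ι := by exact_mod_cast Fintype.card_pos
  rw [← smul_sub, ← sum_sub_distrib, norm_smul, Real.norm_eq_abs, abs_inv, abs_of_pos hcard,
    inv_mul_le_iff₀ hcard]
  calc ‖∑ i, (F i x - F i y)‖ ≤ ∑ _i : ι, L * ‖x - y‖ :=
        (norm_sum_le _ _).trans (sum_le_sum fun i _ => hF i x y)
    _ = Fintype.card ι * (L * ‖x - y‖) := by simp

theorem strongly_monotone_average {ι : Type*} [Fintype ι] [Nonempty ι] (F : ι → E → E) {μ : ℝ}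
    (hF : ∀ i x y, μ * ‖x - y‖ ^ 2 ≤ ⟪F i x - F i y, x - y⟫) (x y : E) :
    μ * ‖x - y‖ ^ 2
      ≤ ⟪(Fintype.card ι : ℝ)⁻¹ • ∑ i, F i x - (Fintype.card ι : ℝ)⁻¹ • ∑ i, F i y, x - y⟫ := by
  have hcard : (0 : ℝ) < Fintype.card ι := by exact_mod_cast Fintype.card_pos
  rw [← smul_sub, ← sum_sub_distrib, real_inner_smul_left, sum_inner, le_inv_mul_iff₀ hcard]
  calc Fintype.card ι * (μ * ‖x - y‖ ^ 2) = ∑ _i : ι, μ * ‖x - y‖ ^ 2 := by simp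
    _ ≤ ∑ i, ⟪F i x - F i y, x - y⟫ := sum_le_sum fun i _ => hF i x y

theorem extragradient_energy_le {γ φu φv φs : ℝ} {c u v s a b as : E}
    (hu : γ * φu ≤ γ * φv + ⟪u - (c - γ • a), v - u⟫)
    (hv : γ * φv ≤ γ * φs + ⟪v - (c - γ • b), s - v⟫)
    (hs : γ * φs ≤ γ * φu + γ * ⟪as, u - s⟫) :
    ‖v - s‖ ^ 2 ≤ ‖c - s‖ ^ 2 - ‖u - c‖ ^ 2 - ‖v - u‖ ^ 2
      + 2 * γ * ⟪a - b, v - u⟫ - 2 * γ * ⟪b - as, u - s⟫ := by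
  have h1 := two_mul_real_inner_sub_sub u c v
  have h2 := two_mul_real_inner_sub_sub v c s
  have e1 : ⟪u - (c - γ • a), v - u⟫ = ⟪u - c, v - u⟫ + γ * ⟪a, v - u⟫ := by
    rw [sub_sub_eq_add_sub, add_sub_right_comm, inner_add_left, real_inner_smul_left]
  have e2 : ⟪v - (c - γ • b), s - v⟫ = ⟪v - c, s - v⟫ + γ * ⟪b, s - v⟫ := by
    rw [sub_sub_eq_add_sub, add_sub_right_comm, inner_add_left, real_inner_smul_left]
  have e3 : γ * ⟪a - b, v - u⟫ - γ * ⟪b - as, u - s⟫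
      = γ * ⟪a, v - u⟫ + γ * ⟪b, s - v⟫ + γ * ⟪as, u - s⟫ := by
    simp only [inner_sub_left, inner_sub_right]; ring
  rw [norm_sub_rev c s, norm_sub_rev v s]
  linarith

theorem extragradient_dist_sq_le {γ μ L φu φv φs : ℝ} (hγ : 0 < γ) (hμ : 0 < μ)
    {c u v s w a b au as : E}
    (hu : γ * φu ≤ γ * φv + ⟪u - (c - γ • a), v - u⟫)
    (hv : γ * φv ≤ γ * φs + ⟪v - (c - γ • b), s - v⟫)
    (hs : γ * φs ≤ γ * φu + γ * ⟪as, u - s⟫)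
    (hab : ‖a - b‖ ≤ L * ‖u - w‖) (hbu : ‖b - au‖ ≤ 2 * L * ‖u - w‖)
    (hmono : μ * ‖u - s‖ ^ 2 ≤ ⟪au - as, u - s⟫) :
    ‖v - s‖ ^ 2 ≤ ‖c - s‖ ^ 2 - ‖u - c‖ ^ 2 - γ * μ * ‖u - s‖ ^ 2
      + (γ ^ 2 * L ^ 2 + 4 * γ * L ^ 2 / μ) * ‖u - w‖ ^ 2 := by
  have henergy := extragradient_energy_le hu hv hs
  have hsplit : ⟪b - as, u - s⟫ = ⟪b - au, u - s⟫ + ⟪au - as, u - s⟫ := by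
    rw [← inner_add_left, sub_add_sub_cancel]
  have h1 : ⟪a - b, v - u⟫ ≤ L * ‖u - w‖ * ‖v - u‖ :=
    (real_inner_le_norm _ _).trans (mul_le_mul_of_nonneg_right hab (norm_nonneg _))
  have h2 : -⟪b - au, u - s⟫ ≤ 2 * L * ‖u - w‖ * ‖u - s‖ := by
    rw [← inner_neg_left, neg_sub]
    exact (real_inner_le_norm _ _).trans (by rw [norm_sub_rev]; gcongr)
  have young1 : 2 * γ * (L * ‖u - w‖ * ‖v - u‖) ≤ γ ^ 2 * L ^ 2 * ‖u - w‖ ^ 2 + ‖v - u‖ ^ 2 := by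
    nlinarith [sq_nonneg (γ * L * ‖u - w‖ - ‖v - u‖)]
  have young2 : 2 * γ * (2 * L * ‖u - w‖ * ‖u - s‖)
      ≤ γ * μ * ‖u - s‖ ^ 2 + 4 * γ * L ^ 2 / μ * ‖u - w‖ ^ 2 := by
    have h := mul_nonneg (div_pos hγ hμ).le (sq_nonneg (μ * ‖u - s‖ - 2 * L * ‖u - w‖))
    field_simp at h ⊢
    nlinarith [h]
  nlinarith [mul_le_mul_of_nonneg_left h1 (by positivity : (0:ℝ) ≤ 2 * γ),
    mul_le_mul_of_nonneg_left h2 (by positivity : (0:ℝ) ≤ 2 * γ),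
    mul_le_mul_of_nonneg_left hmono (by positivity : (0:ℝ) ≤ 2 * γ)]

theorem mix_dist_sq_le {p m K : ℝ} (hp0 : 0 < p) (hp : p ≤ 1 / 2) (hm0 : 0 ≤ m)
    (hm : m ≤ p / 6) (hK0 : 0 ≤ K) (hK : K ≤ 3 / 4 * p) (z w s u : E) :
    ‖(1 - p) • z + p • w - s‖ ^ 2 - ‖u - ((1 - p) • z + p • w)‖ ^ 2 - m * ‖u - s‖ ^ 2
        + K * ‖u - w‖ ^ 2
      ≤ (1 - 2 / 3 * m) * ((1 - p) * ‖z - s‖ ^ 2 + p * ‖w - s‖ ^ 2) := by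
  set c := (1 - p) • z + p • w
  have hcs : ‖c - s‖ ^ 2 ≤ 3 * ‖u - c‖ ^ 2 + 3 / 2 * ‖u - s‖ ^ 2 := by
    have h := norm_sub_sq_le_add (by norm_num : (0:ℝ) < 2) c u s
    rw [norm_sub_rev c u] at h
    norm_num at h
    linarith
  have huw : ‖u - w‖ ^ 2
      ≤ (1 + (2 * p)⁻¹) * ‖u - c‖ ^ 2 + (1 + 2 * p) * (1 - p) ^ 2 * ‖z - w‖ ^ 2 := by
    have hcw : c - w = (1 - p) • (z - w) := by module
    have h := norm_sub_sq_le_add (inv_pos.2 (by positivity : (0:ℝ) < 2 * p)) u c w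
    rwa [inv_inv, hcw, norm_smul, mul_pow, Real.norm_eq_abs, sq_abs, ← mul_assoc] at h
  have hmix := norm_smul_add_smul_sub_sq (sub_add_cancel 1 p) z w s
  have hT : 2 * m + K * (1 + (2 * p)⁻¹) ≤ 1 := by
    have : K * (2 * p)⁻¹ ≤ 3 / 8 := by
      rw [← div_eq_mul_inv, div_le_iff₀ (by positivity)]; linarith
    nlinarith
  have hD : K * ((1 + 2 * p) * (1 - p) ^ 2) ≤ (1 - 2 / 3 * m) * ((1 - p) * p) := by
    have h1p : 0 ≤ 1 - p := by linarith
    nlinarith [mul_le_mul_of_nonneg_right hK (by positivity : (0:ℝ) ≤ (1 + 2 * p) * (1 - p) ^ 2),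
      sq_nonneg (p - 1 / 4), mul_nonneg hp0.le h1p, mul_nonneg (mul_nonneg hp0.le h1p) hp0.le]
  nlinarith [mul_le_mul_of_nonneg_right hT (sq_nonneg ‖u - c‖),
    mul_le_mul_of_nonneg_right hD (sq_nonneg ‖z - w‖), mul_le_mul_of_nonneg_left huw hK0]

theorem vrExtragradient_step_contraction [Nontrivial E] {φ : E → ℝ} {D : Set E}
    {prox G Gi : E → E} {γ μ L p : ℝ} {s : E} (hγ : 0 < γ) (hμ : 0 < μ) (hp0 : 0 < p)
    (hp : p ≤ 1 / 2) (hγL : γ ≤ p * μ / (6 * L ^ 2)) (hprox_mem : ∀ x, prox x ∈ D)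
    (hprox : ∀ x, ∀ y ∈ D, γ * φ (prox x) ≤ γ * φ y + ⟪prox x - x, y - prox x⟫)
    (hs : s ∈ D) (hVI : ∀ y ∈ D, φ s ≤ ⟪G s, y - s⟫ + φ y)
    (hGLip : ∀ x y, ‖G x - G y‖ ≤ L * ‖x - y‖) (hGiLip : ∀ x y, ‖Gi x - Gi y‖ ≤ L * ‖x - y‖)
    (hGmono : ∀ x y, μ * ‖x - y‖ ^ 2 ≤ ⟪G x - G y, x - y⟫) (z w : E) :
    ‖prox ((1 - p) • z + p • w
        - γ • (Gi (prox ((1 - p) • z + p • w - γ • G w)) - Gi w + G w)) - s‖ ^ 2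
      ≤ (1 - 2 / 3 * (γ * μ)) * ((1 - p) * ‖z - s‖ ^ 2 + p * ‖w - s‖ ^ 2) := by
  have hμL := le_of_lipschitz_of_strongly_monotone hGLip hGmono
  have hL : 0 < L := hμ.trans_le hμL
  obtain ⟨hγμ, hγL'⟩ := mul_le_of_le_mul_div_sq (a := p / 6) hμ hμL (by positivity)
    (hγL.trans_eq (by ring))
  have hK : γ ^ 2 * L ^ 2 + 4 * γ * L ^ 2 / μ ≤ 3 / 4 * p := by
    have h1 : 4 * γ * L ^ 2 / μ ≤ 2 / 3 * p := by
      rw [div_le_iff₀ hμ]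
      rw [le_div_iff₀ (by positivity)] at hγL
      linarith
    nlinarith [mul_le_mul hγL' hγL' (by positivity) (by positivity)]
  set c := (1 - p) • z + p • w
  set u := prox (c - γ • G w)
  have hab : ‖G w - (Gi u - Gi w + G w)‖ ≤ L * ‖u - w‖ := by
    rw [sub_add_cancel_right, neg_sub, norm_sub_rev u]; exact hGiLip w u
  have hbu : ‖Gi u - Gi w + G w - G u‖ ≤ 2 * L * ‖u - w‖ := by
    rw [show Gi u - Gi w + G w - G u = (Gi u - Gi w) - (G u - G w) by abel]
    exact (norm_sub_le _ _).trans (by linarith [hGiLip u w, hGLip u w])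
  have hsu : γ * φ s ≤ γ * φ u + γ * ⟪G s, u - s⟫ := by
    nlinarith [mul_le_mul_of_nonneg_left (hVI u (hprox_mem _)) hγ.le]
  exact (extragradient_dist_sq_le hγ hμ (hprox _ _ (hprox_mem _)) (hprox _ _ hs) hsu hab hbu
    (hGmono u s)).trans (mix_dist_sq_le hp0 hp (by positivity) hγμ (by positivity) hK z w s u)

end Extragradient

/-- `x + y` alone need not contract, as the anchor error `y` is refreshed only with
probability `p`. -/
theorem anchor_recursion_step {p q x y x' y' v : ℝ} (hp0 : 0 < p) (hp : p ≤ 1 / 2)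
    (hq0 : 0 ≤ q) (hq : q ≤ p / 3) (hx : 0 ≤ x) (hy : 0 ≤ y) (hxy : x + y ≤ v)
    (hyv : y ≤ 3 / 5 * v) (hx' : x' ≤ (1 - 8 / 3 * q) * ((1 - p) * x + p * y))
    (hy' : y' ≤ p * x + (1 - p) * y) :
    x' + y' ≤ (1 - q) * v ∧ y' ≤ 3 / 5 * ((1 - q) * v) := by
  have hv : 0 ≤ v := by linarith
  constructor
  · have hsplit : (1 - 8 / 3 * q) * ((1 - p) * x + p * y) + (p * x + (1 - p) * y)
        = (1 - 8 / 3 * q * (1 - p)) * (x + y) + 8 / 3 * q * (1 - 2 * p) * y := by ring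
    have h1 : (1 - 8 / 3 * q * (1 - p)) * (x + y) ≤ (1 - 8 / 3 * q * (1 - p)) * v :=
      mul_le_mul_of_nonneg_left hxy (by nlinarith)
    have h2 : 8 / 3 * q * (1 - 2 * p) * y ≤ 8 / 3 * q * (1 - 2 * p) * (3 / 5 * v) :=
      mul_le_mul_of_nonneg_left hyv (by nlinarith)
    nlinarith [mul_nonneg (mul_nonneg hq0 hv) hp0.le, mul_nonneg hq0 hv]
  · nlinarith

theorem add_le_pow_mul_of_anchor_recursion {X Y : ℕ → ℝ} {p q : ℝ} {N : ℕ} (hp0 : 0 < p)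
    (hp : p ≤ 1 / 2) (hq0 : 0 ≤ q) (hq : q ≤ p / 3) (hX0 : ∀ k, 0 ≤ X k) (hY0 : ∀ k, 0 ≤ Y k)
    (hXY : X 0 = Y 0) (hX : ∀ k < N, X (k + 1) ≤ (1 - 8 / 3 * q) * ((1 - p) * X k + p * Y k))
    (hY : ∀ k < N, Y (k + 1) ≤ p * X k + (1 - p) * Y k) :
    X N + Y N ≤ (1 - q) ^ N * (X 0 + Y 0) := by
  suffices h : ∀ k ≤ N, X k + Y k ≤ (1 - q) ^ k * (X 0 + Y 0)
      ∧ Y k ≤ 3 / 5 * ((1 - q) ^ k * (X 0 + Y 0)) from (h N le_rfl).1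
  intro k hk
  induction k with
  | zero => constructor <;> linarith [hY0 0]
  | succ k ih =>
    obtain ⟨h1, h2⟩ := ih (by omega)
    rw [pow_succ, mul_comm _ (1 - q), mul_assoc]
    exact anchor_recursion_step hp0 hp hq0 hq (hX0 k) (hY0 k) h1 h2 (hX k hk) (hY k hk)

section EpochIndex

variable {β : Type*}

/-- Global step `k = s n + t` of a sequence indexed by epoch `s` and inner step `t < n`. -/
def atStep (n : ℕ) (f : ℕ → ℕ → β) (k : ℕ) : β := f (k / n) (k % n)

theorem atStep_mul_add {n : ℕ} (f : ℕ → ℕ → β) (s : ℕ) {t : ℕ} (ht : t < n) :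
    atStep n f (s * n + t) = f s t := by
  have hn : 0 < n := by omega
  rw [atStep, Nat.add_comm, Nat.add_mul_div_right _ _ hn, Nat.div_eq_of_lt ht, zero_add,
    Nat.add_mul_mod_self_right, Nat.mod_eq_of_lt ht]

theorem atStep_succ {n S : ℕ} {f : ℕ → ℕ → β} (hf : ∀ s, s + 1 ≤ S → f (s + 1) 0 = f s n)
    {k : ℕ} (hk : k < S * n) : atStep n f (k + 1) = f (k / n) (k % n + 1) := by
  have hn : 0 < n := Nat.pos_of_ne_zero (by rintro rfl; simp at hk)
  have ht : k % n < n := Nat.mod_lt k hn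
  conv_lhs => rw [← Nat.div_add_mod' k n, add_assoc]
  rcases Nat.lt_or_ge (k % n + 1) n with hlt | hge
  · exact atStep_mul_add f _ hlt
  · have hs : k / n + 1 ≤ S := (Nat.div_lt_iff_lt_mul hn).2 hk
    rw [show k % n + 1 = n by omega, ← hf _ hs, ← atStep_mul_add f _ hn]
    congr 1
    ring

theorem atStep_mul {n S : ℕ} {f : ℕ → ℕ → β} (hf : ∀ s, s + 1 ≤ S → f (s + 1) 0 = f s n)
    (hS : 0 < S) (hn : 0 < n) : atStep n f (S * n) = f (S - 1) n := by
  have h := atStep_mul_add f S hn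
  rw [add_zero] at h
  rw [h, ← hf (S - 1) (by omega), Nat.sub_add_cancel hS]

end EpochIndex

section Resampling

/-- `(ω, k) ↦ (put ω k, get ω)` is an involution of `Ω × K`. -/
theorem sum_sum_put_eq_card_smul {Ω K M : Type*} [Fintype Ω] [Fintype K] [AddCommMonoid M]
    (get : Ω → K) (put : Ω → K → Ω) (get_put : ∀ ω k, get (put ω k) = k)
    (put_put_get : ∀ ω k, put (put ω k) (get ω) = ω) (f : Ω → M) :
    ∑ ω, ∑ k, f (put ω k) = Fintype.card K • ∑ ω, f ω := by
  let e : Ω × K → Ω × K := fun q => (put q.1 q.2, get q.1)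
  have he : Function.Involutive e := fun q => Prod.ext (put_put_get _ _) (get_put _ _)
  calc ∑ ω, ∑ k, f (put ω k) = ∑ q : Ω × K, f (e q).1 :=
        (Fintype.sum_prod_type (fun q => f (e q).1)).symm
    _ = ∑ q : Ω × K, f q.1 := Equiv.sum_comp he.toPerm (fun q => f q.1)
    _ = Fintype.card K • ∑ ω, f ω := by
      rw [Fintype.sum_prod_type, smul_sum]; simp

theorem card_mul_sum_ite_get_eq {Ω K : Type*} [Fintype Ω] [Fintype K] [DecidableEq K]
    (get : Ω → K) (put : Ω → K → Ω) (get_put : ∀ ω k, get (put ω k) = k)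
    (put_put_get : ∀ ω k, put (put ω k) (get ω) = ω) (k₀ : K) {a b : Ω → ℝ}
    (ha : ∀ ω k, a (put ω k) = a ω) (hb : ∀ ω k, b (put ω k) = b ω) :
    Fintype.card K * ∑ ω, (if get ω = k₀ then a ω else b ω)
      = ∑ ω, a ω + (Fintype.card K - 1) * ∑ ω, b ω := by
  rw [← nsmul_eq_mul, ← sum_sum_put_eq_card_smul get put get_put put_put_get, mul_sum,
    ← sum_add_distrib]
  refine sum_congr rfl fun ω _ => ?_
  simp only [get_put, ha, hb]
  rw [sum_ite, sum_const, sum_const, filter_eq', filter_ne', if_pos (mem_univ _),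
    card_erase_of_mem (mem_univ _), card_singleton, card_univ, one_smul, nsmul_eq_mul,
    Nat.cast_pred (Fintype.card_pos_iff.2 ⟨k₀⟩)]

variable {n S : ℕ}

def resampleCoin (s : Fin S) (t : Fin n) (ω : Equiv.Perm (Fin n) × (Fin S → Fin n → Fin n))
    (c : Fin n) : Equiv.Perm (Fin n) × (Fin S → Fin n → Fin n) :=
  (ω.1, Function.update ω.2 s (Function.update (ω.2 s) t c))

variable {s : Fin S} {t : Fin n} {ω : Equiv.Perm (Fin n) × (Fin S → Fin n → Fin n)} {c : Fin n}

theorem resampleCoin_snd_self : (resampleCoin s t ω c).2 s t = c := by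
  simp [resampleCoin]

theorem resampleCoin_resampleCoin_self :
    resampleCoin s t (resampleCoin s t ω c) (ω.2 s t) = ω := by
  simp [resampleCoin]

theorem resampleCoin_snd_of_ne {s' : Fin S} {t' : Fin n} (h : (s', t') ≠ (s, t)) :
    (resampleCoin s t ω c).2 s' t' = ω.2 s' t' := by
  by_cases hs : s' = s
  · subst hs
    have ht : t' ≠ t := fun ht => h (by rw [ht])
    simp [resampleCoin, ht]
  · simp [resampleCoin, hs]

end Resampling

section AnchorProcess

variable {E : Type*} {n S : ℕ}

/-- The only property of the `z`-update that the averaging argument needs is `z_congr`: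
it does not look at the coins. -/
structure IsAnchorProcess (z w : Equiv.Perm (Fin n) × (Fin S → Fin n → Fin n) → ℕ → ℕ → E)
    (start : E) : Prop where
  init : ∀ ω, z ω 0 0 = start ∧ w ω 0 0 = start
  z_congr : ∀ ω ω' s, s < S → ∀ t, t < n → ω.1 = ω'.1 → z ω s t = z ω' s t →
    w ω s t = w ω' s t → z ω s (t + 1) = z ω' s (t + 1)
  w_step : ∀ ω, ∀ s, ∀ hs : s < S, ∀ t, ∀ ht : t < n,
    w ω s (t + 1) = if (ω.2 ⟨s, hs⟩ ⟨t, ht⟩ : Fin n).1 = 0 then z ω s t else w ω s t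
  epoch : ∀ ω, ∀ s, s + 1 ≤ S → z ω (s + 1) 0 = z ω s n ∧ w ω (s + 1) 0 = w ω s n

namespace IsAnchorProcess

variable {z w : Equiv.Perm (Fin n) × (Fin S → Fin n → Fin n) → ℕ → ℕ → E} {start : E}

theorem resampleCoin_eq (hP : IsAnchorProcess z w start) {s t : ℕ} (hs : s < S) (ht : t < n)
    (ω : Equiv.Perm (Fin n) × (Fin S → Fin n → Fin n)) (c : Fin n) :
    z (resampleCoin ⟨s, hs⟩ ⟨t, ht⟩ ω c) s t = z ω s t
      ∧ w (resampleCoin ⟨s, hs⟩ ⟨t, ht⟩ ω c) s t = w ω s t := by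
  set ω' := resampleCoin ⟨s, hs⟩ ⟨t, ht⟩ ω c
  suffices h : ∀ k ≤ s * n + t,
      atStep n (z ω') k = atStep n (z ω) k ∧ atStep n (w ω') k = atStep n (w ω) k by
    simpa only [atStep_mul_add _ s ht] using h _ le_rfl
  have hn : 0 < n := by omega
  intro k hk
  induction k with
  | zero => simp [atStep, (hP.init ω).1, (hP.init ω).2, (hP.init ω').1, (hP.init ω').2]
  | succ k ih =>
    obtain ⟨hz, hw⟩ := ih (by omega)
    have hkS : k < S * n := by nlinarith
    have hks : k / n < S := (Nat.div_lt_iff_lt_mul hn).2 hkS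
    have hkt : k % n < n := Nat.mod_lt _ hn
    have hcoin : ω'.2 ⟨k / n, hks⟩ ⟨k % n, hkt⟩ = ω.2 ⟨k / n, hks⟩ ⟨k % n, hkt⟩ := by
      refine resampleCoin_snd_of_ne fun h => ?_
      simp only [Prod.mk.injEq, Fin.mk.injEq] at h
      have := Nat.div_add_mod' k n
      rw [h.1, h.2] at this
      omega
    simp only [atStep] at hz hw
    simp only [atStep_succ (fun s hs => (hP.epoch _ s hs).1) hkS,
      atStep_succ (fun s hs => (hP.epoch _ s hs).2) hkS]
    refine ⟨hP.z_congr ω' ω _ hks _ hkt rfl hz hw, ?_⟩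
    rw [hP.w_step ω' _ hks _ hkt, hP.w_step ω _ hks _ hkt, hz, hw, hcoin]

theorem card_mul_sum_succ (hP : IsAnchorProcess z w start) {s t : ℕ} (hs : s < S)
    (ht : t < n) (f : E → ℝ) :
    (n : ℝ) * ∑ ω, f (w ω s (t + 1)) = ∑ ω, f (z ω s t) + (n - 1) * ∑ ω, f (w ω s t) := by
  have h := card_mul_sum_ite_get_eq (fun ω => ω.2 ⟨s, hs⟩ ⟨t, ht⟩)
    (resampleCoin ⟨s, hs⟩ ⟨t, ht⟩) (fun _ _ => resampleCoin_snd_self)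
    (fun _ _ => resampleCoin_resampleCoin_self) ⟨0, by omega⟩
    (a := fun ω => f (z ω s t)) (b := fun ω => f (w ω s t))
    (fun ω c => by rw [(hP.resampleCoin_eq hs ht ω c).1])
    (fun ω c => by rw [(hP.resampleCoin_eq hs ht ω c).2])
  rw [Fintype.card_fin] at h
  rw [← h]
  congr 1
  refine sum_congr rfl fun ω _ => ?_
  rw [hP.w_step ω s hs t ht, apply_ite f]
  simp only [Fin.ext_iff]

theorem sum_dist_sq_le [NormedAddCommGroup E] (hP : IsAnchorProcess z w start) (hS : 0 < S)
    (hn : 2 ≤ n) {p q : ℝ} (hp : p = (n : ℝ)⁻¹) (hq0 : 0 ≤ q) (hq : q ≤ p / 3) (zs : E)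
    (hcontr : ∀ ω s, s < S → ∀ t, t < n → ‖z ω s (t + 1) - zs‖ ^ 2
      ≤ (1 - 8 / 3 * q) * ((1 - p) * ‖z ω s t - zs‖ ^ 2 + p * ‖w ω s t - zs‖ ^ 2)) :
    ∑ ω, (‖z ω (S - 1) n - zs‖ ^ 2 + ‖w ω (S - 1) n - zs‖ ^ 2)
      ≤ (1 - q) ^ (S * n) * ∑ ω, (‖z ω 0 0 - zs‖ ^ 2 + ‖w ω 0 0 - zs‖ ^ 2) := by
  have hn0 : 0 < n := by omega
  have hp0 : 0 < p := by rw [hp]; positivity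
  have hp2 : p ≤ 1 / 2 := by rw [hp, one_div]; exact inv_anti₀ two_pos (by exact_mod_cast hn)
  have hz_epoch : ∀ ω s, s + 1 ≤ S → z ω (s + 1) 0 = z ω s n := fun ω s hs => (hP.epoch ω s hs).1
  have hw_epoch : ∀ ω s, s + 1 ≤ S → w ω (s + 1) 0 = w ω s n := fun ω s hs => (hP.epoch ω s hs).2
  set X : ℕ → ℝ := fun k => ∑ ω, ‖atStep n (z ω) k - zs‖ ^ 2
  set Y : ℕ → ℝ := fun k => ∑ ω, ‖atStep n (w ω) k - zs‖ ^ 2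
  have key : X (S * n) + Y (S * n) ≤ (1 - q) ^ (S * n) * (X 0 + Y 0) := by
    refine add_le_pow_mul_of_anchor_recursion hp0 hp2 hq0 hq
      (fun k => sum_nonneg fun _ _ => sq_nonneg _) (fun k => sum_nonneg fun _ _ => sq_nonneg _)
      (by simp [X, Y, atStep, hP.init]) (fun k hk => ?_) (fun k hk => ?_)
    all_goals
      have hks : k / n < S := (Nat.div_lt_iff_lt_mul hn0).2 hk
      have hkt : k % n < n := Nat.mod_lt _ hn0
      simp only [X, Y, atStep_succ (hz_epoch _) hk, atStep_succ (hw_epoch _) hk]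
      simp only [atStep]
    · calc ∑ ω, ‖z ω (k / n) (k % n + 1) - zs‖ ^ 2
          ≤ ∑ ω, (1 - 8 / 3 * q) * ((1 - p) * ‖z ω (k / n) (k % n) - zs‖ ^ 2
              + p * ‖w ω (k / n) (k % n) - zs‖ ^ 2) :=
            sum_le_sum fun ω _ => hcontr ω _ hks _ hkt
        _ = _ := by rw [← mul_sum, sum_add_distrib, ← mul_sum, ← mul_sum]
    · have h := hP.card_mul_sum_succ hks hkt (fun x => ‖x - zs‖ ^ 2)
      rw [hp]
      field_simp
      linarith
  simp only [X, Y, atStep_mul (hz_epoch _) hS hn0, atStep_mul (hw_epoch _) hS hn0] at key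
  simpa [atStep, sum_add_distrib] using key

end IsAnchorProcess

end AnchorProcess

theorem so_vr_extragradient_linear_convergence_general
    (d n S : ℕ) (hn : 2 ≤ n) (hS : 0 < S)
    (L μ γ p α : ℝ) (hμ : 0 < μ)
    (hp : p = (n : ℝ)⁻¹) (hα : α = 1 - p)
    (hγ0 : 0 < γ) (hγ : γ ≤ (1 - α) * μ / (6 * L ^ 2))
    (F : Fin n → EuclideanSpace ℝ (Fin d) → EuclideanSpace ℝ (Fin d))
    (g : EuclideanSpace ℝ (Fin d) → EReal)
    (hg_bot : ∀ x, g x ≠ ⊥) (hg_top : ∃ x, g x ≠ ⊤)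
    (hg_convex : ∀ (x y : EuclideanSpace ℝ (Fin d)) (a b : ℝ), 0 ≤ a → 0 ≤ b → a + b = 1 →
      g (a • x + b • y) ≤ (a : EReal) * g x + (b : EReal) * g y)
    (prox : EuclideanSpace ℝ (Fin d) → EuclideanSpace ℝ (Fin d))
    (hprox : ∀ x y : EuclideanSpace ℝ (Fin d),
      (γ : EReal) * g (prox x) + ((‖prox x - x‖ ^ 2 / 2 : ℝ) : EReal)
        ≤ (γ : EReal) * g y + ((‖y - x‖ ^ 2 / 2 : ℝ) : EReal))
    (hLip : ∀ (i : Fin n) (z₁ z₂ : EuclideanSpace ℝ (Fin d)),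
      ‖F i z₁ - F i z₂‖ ≤ L * ‖z₁ - z₂‖)
    (hmono : ∀ (i : Fin n) (z₁ z₂ : EuclideanSpace ℝ (Fin d)),
      μ * ‖z₁ - z₂‖ ^ 2 ≤ ⟪F i z₁ - F i z₂, z₁ - z₂⟫)
    (zstar : EuclideanSpace ℝ (Fin d))
    (hVI : ∀ z, g zstar ≤ ((⟪(n : ℝ)⁻¹ • ∑ i, F i zstar, z - zstar⟫ : ℝ) : EReal) + g z)
    (start : EuclideanSpace ℝ (Fin d))
    (z zhalf w : Equiv.Perm (Fin n) × (Fin S → Fin n → Fin n) →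
      ℕ → ℕ → EuclideanSpace ℝ (Fin d))
    (hinit : ∀ ω, z ω 0 0 = start ∧ w ω 0 0 = start)
    (hhalf : ∀ ω, ∀ s, ∀ hs : s < S, ∀ t, ∀ ht : t < n,
      zhalf ω s t = prox ((α • z ω s t + (1 - α) • w ω s t)
        - γ • ((n : ℝ)⁻¹ • ∑ i, F i (w ω s t))))
    (hstep : ∀ ω, ∀ s, ∀ hs : s < S, ∀ t, ∀ ht : t < n,
      z ω s (t + 1) = prox ((α • z ω s t + (1 - α) • w ω s t)
        - γ • (F (ω.1 ⟨t, ht⟩) (zhalf ω s t) - F (ω.1 ⟨t, ht⟩) (w ω s t)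
            + (n : ℝ)⁻¹ • ∑ i, F i (w ω s t))))
    (hwstep : ∀ ω, ∀ s, ∀ hs : s < S, ∀ t, ∀ ht : t < n,
      w ω s (t + 1) = if (ω.2 ⟨s, hs⟩ ⟨t, ht⟩ : Fin n).1 = 0 then z ω s t else w ω s t)
    (hepoch : ∀ ω, ∀ s, s + 1 ≤ S →
      z ω (s + 1) 0 = z ω s n ∧ w ω (s + 1) 0 = w ω s n) :
    (∑ ω : Equiv.Perm (Fin n) × (Fin S → Fin n → Fin n),
        (‖z ω (S - 1) n - zstar‖ ^ 2 + ‖w ω (S - 1) n - zstar‖ ^ 2)) /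
        (Fintype.card (Equiv.Perm (Fin n) × (Fin S → Fin n → Fin n)) : ℝ)
      ≤ (1 - γ * μ / 4) ^ (S * n) *
        ((∑ ω : Equiv.Perm (Fin n) × (Fin S → Fin n → Fin n),
            (‖z ω 0 0 - zstar‖ ^ 2 + ‖w ω 0 0 - zstar‖ ^ 2)) /
          (Fintype.card (Equiv.Perm (Fin n) × (Fin S → Fin n → Fin n)) : ℝ)) := by
  rcases subsingleton_or_nontrivial (EuclideanSpace ℝ (Fin d)) with hE | hE
  · have h0 : ∀ x : EuclideanSpace ℝ (Fin d), ‖x - zstar‖ = 0 := fun x => by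
      rw [Subsingleton.elim x zstar, sub_self, norm_zero]
    simp [h0]
  subst hα
  rw [sub_sub_cancel] at hγ hhalf hstep
  have hp0 : 0 < p := by rw [hp]; positivity
  have hp2 : p ≤ 1 / 2 := by rw [hp, one_div]; exact inv_anti₀ two_pos (by exact_mod_cast hn)
  have : Nonempty (Fin n) := ⟨⟨0, by omega⟩⟩
  have hGLip := norm_average_sub_le F hLip
  have hGmono := strongly_monotone_average F hmono
  rw [Fintype.card_fin] at hGLip hGmono
  have hμL := le_of_lipschitz_of_strongly_monotone hGLip hGmono
  obtain ⟨hγμ, -⟩ := mul_le_of_le_mul_div_sq (a := p / 6) hμ hμL (by positivity)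
    (hγ.trans_eq (by ring))
  have hVI' := fun y hy => EReal.ne_top_and_toReal_le (hVI y) (hg_bot _) hy (hg_bot _)
  have hzs : g zstar ≠ ⊤ := by
    obtain ⟨y, hy⟩ := hg_top; exact (hVI' y hy).1
  have hcontr : ∀ ω s, s < S → ∀ t, t < n → ‖z ω s (t + 1) - zstar‖ ^ 2
      ≤ (1 - 8 / 3 * (γ * μ / 4)) * ((1 - p) * ‖z ω s t - zstar‖ ^ 2
        + p * ‖w ω s t - zstar‖ ^ 2) := by
    intro ω s hs t ht
    rw [hstep ω s hs t ht, hhalf ω s hs t ht]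
    refine (vrExtragradient_step_contraction (φ := fun x => (g x).toReal) (D := {x | g x ≠ ⊤})
      hγ0 hμ hp0 hp2 hγ (IsProximalMap.ne_top hprox hγ0 hg_bot hg_top)
      (fun x y hy => IsProximalMap.inner_le hprox hγ0 hg_bot hg_top hg_convex x hy) hzs
      (fun y hy => (hVI' y hy).2) hGLip (hLip _) hGmono _ _).trans_eq (by ring)
  have hproc : IsAnchorProcess z w start := ⟨hinit, fun ω ω' s hs t ht h1 hz hw => by
    rw [hstep ω s hs t ht, hstep ω' s hs t ht, hhalf ω s hs t ht, hhalf ω' s hs t ht, h1, hz,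
      hw],
    hwstep, hepoch⟩
  have hsum := hproc.sum_dist_sq_le hS hn hp (by positivity) (by linarith) zstar hcontr
  rw [← mul_div_assoc]
  exact div_le_div_of_nonneg_right hsum (Nat.cast_nonneg _)

/-- Linear convergence of the SO Extragradient method with variance reduction for a
finite-sum variational inequality with `L`-Lipschitz, `μ`-strongly monotone operators:
with `p = 1/n`, `α = 1 − p`, `γ ≤ (1−α)μ/(6L²)`, starting from `z_0^0 = ω_0^0`, a single
uniform permutation `π` is drawn before the first epoch and reused in every epoch,
performing
`z̄_s^t = αz_s^t + (1−α)ω_s^t`, `z_s^{t+1/2} = prox_{γg}(z̄_s^t − γF(ω_s^t))`,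
`F̂ = F_{π(t)}(z_s^{t+1/2}) − F_{π(t)}(ω_s^t) + F(ω_s^t)`,
`z_s^{t+1} = prox_{γg}(z̄_s^t − γF̂)`, and `ω_s^{t+1} = z_s^t` with probability `p`
(else `ω_s^{t+1} = ω_s^t`), independently of everything else.  Then after `T = Sn` total
iterations `V_S^n ≤ (1 − γμ/4)^T V_0^0` where `V_s^t = E‖z_s^t − z*‖² + E‖ω_s^t − z*‖²`.
(The Bernoulli coin of probability `p = 1/n` is realized as a uniform variable on `Fin n`
hitting value `0`; the expectation is the uniform average over all the randomness.) -/
theorem so_vr_extragradient_linear_convergence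
    (d n S : ℕ) (hn : 2 ≤ n) (hS : 0 < S)
    (L μ γ p α : ℝ) (hL : 0 < L) (hμ : 0 < μ)
    (hp : p = (n : ℝ)⁻¹) (hα : α = 1 - p)
    (hγ0 : 0 < γ) (hγ : γ ≤ (1 - α) * μ / (6 * L ^ 2))
    (F : Fin n → EuclideanSpace ℝ (Fin d) → EuclideanSpace ℝ (Fin d))
    (g : EuclideanSpace ℝ (Fin d) → EReal)
    (hg_bot : ∀ x, g x ≠ ⊥) (hg_top : ∃ x, g x ≠ ⊤)
    (hg_convex : ∀ (x y : EuclideanSpace ℝ (Fin d)) (a b : ℝ), 0 ≤ a → 0 ≤ b → a + b = 1 →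
      g (a • x + b • y) ≤ (a : EReal) * g x + (b : EReal) * g y)
    (hg_lsc : LowerSemicontinuous g)
    (prox : EuclideanSpace ℝ (Fin d) → EuclideanSpace ℝ (Fin d))
    (hprox : ∀ x y : EuclideanSpace ℝ (Fin d),
      (γ : EReal) * g (prox x) + ((‖prox x - x‖ ^ 2 / 2 : ℝ) : EReal)
        ≤ (γ : EReal) * g y + ((‖y - x‖ ^ 2 / 2 : ℝ) : EReal))
    (hLip : ∀ (i : Fin n) (z₁ z₂ : EuclideanSpace ℝ (Fin d)),
      ‖F i z₁ - F i z₂‖ ≤ L * ‖z₁ - z₂‖)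
    (hmono : ∀ (i : Fin n) (z₁ z₂ : EuclideanSpace ℝ (Fin d)),
      μ * ‖z₁ - z₂‖ ^ 2 ≤ ⟪F i z₁ - F i z₂, z₁ - z₂⟫)
    (zstar : EuclideanSpace ℝ (Fin d))
    (hVI : ∀ z, g zstar ≤ ((⟪(n : ℝ)⁻¹ • ∑ i, F i zstar, z - zstar⟫ : ℝ) : EReal) + g z)
    (start : EuclideanSpace ℝ (Fin d))
    (z zhalf w : Equiv.Perm (Fin n) × (Fin S → Fin n → Fin n) →
      ℕ → ℕ → EuclideanSpace ℝ (Fin d))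
    (hinit : ∀ ω, z ω 0 0 = start ∧ w ω 0 0 = start)
    (hhalf : ∀ ω, ∀ s, ∀ hs : s < S, ∀ t, ∀ ht : t < n,
      zhalf ω s t = prox ((α • z ω s t + (1 - α) • w ω s t)
        - γ • ((n : ℝ)⁻¹ • ∑ i, F i (w ω s t))))
    (hstep : ∀ ω, ∀ s, ∀ hs : s < S, ∀ t, ∀ ht : t < n,
      z ω s (t + 1) = prox ((α • z ω s t + (1 - α) • w ω s t)
        - γ • (F (ω.1 ⟨t, ht⟩) (zhalf ω s t) - F (ω.1 ⟨t, ht⟩) (w ω s t)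
            + (n : ℝ)⁻¹ • ∑ i, F i (w ω s t))))
    (hwstep : ∀ ω, ∀ s, ∀ hs : s < S, ∀ t, ∀ ht : t < n,
      w ω s (t + 1) = if (ω.2 ⟨s, hs⟩ ⟨t, ht⟩ : Fin n).1 = 0 then z ω s t else w ω s t)
    (hepoch : ∀ ω, ∀ s, s + 1 ≤ S →
      z ω (s + 1) 0 = z ω s n ∧ w ω (s + 1) 0 = w ω s n) :
    (∑ ω : Equiv.Perm (Fin n) × (Fin S → Fin n → Fin n),
        (‖z ω (S - 1) n - zstar‖ ^ 2 + ‖w ω (S - 1) n - zstar‖ ^ 2)) /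
        (Fintype.card (Equiv.Perm (Fin n) × (Fin S → Fin n → Fin n)) : ℝ)
      ≤ (1 - γ * μ / 4) ^ (S * n) *
        ((∑ ω : Equiv.Perm (Fin n) × (Fin S → Fin n → Fin n),
            (‖z ω 0 0 - zstar‖ ^ 2 + ‖w ω 0 0 - zstar‖ ^ 2)) /
          (Fintype.card (Equiv.Perm (Fin n) × (Fin S → Fin n → Fin n)) : ℝ)) :=
  so_vr_extragradient_linear_convergence_general d n S hn hS L μ γ p α hμ hp hα hγ0 hγ F g hg_bot
    hg_top hg_convex prox hprox hLip hmono zstar hVI start z zhalf w hinit hhalf hstep hwstep hepoch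
end

section
/- Under the hypotheses that each F_i is L-Lipschitz and μ-strongly monotone and n ≥ 2, run the RR/SO Extragradient method with variance reduction with p = 1/n, α = 1 − 1/n, and stepsize γ = (1−α)μ/(6L²) = μ/(6nL²). Then for every ε > 0, V_S^n ≤ ε whenever the total number of iterations T = Sn satisfies T ≥ (24 n L²/μ²) · log(V_0^0/ε); in particular the method needs O( n (L²/μ²) log(1/ε) ) iterations and oracle calls to reach ε-accuracy, where V_s^t = E‖z_s^t − z*‖² + E‖ω_s^t − z*‖². -/
/-!
Write `Φ = ‖z - z*‖² + ‖w - z*‖²` for the Lyapunov function, averaged over the samples. One inner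
step contracts it by the factor `1 - γμ/4 = 1 - μ²/(24nL²)`.

For the `z`-part the estimate holds pathwise, whatever the index `π_s(t)`: adding the optimality
conditions of the two proximal steps to the variational inequality at the extrapolated point `u`
gives `‖z⁺ - z*‖² ≤ ‖z̄ - z*‖² - ‖u - z⁺‖² - ‖u - z̄‖² - 2γμ‖u - z*‖² + 4γL‖u - w‖‖u - z*‖ +
2γL‖u - z⁺‖‖u - w‖`, and with `γ = μ/(6nL²)` Young's inequality absorbs the cross terms into the
negative ones and into the gap `α(1-α)‖z - w‖²` between `‖z̄ - z*‖²` and the convex combination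
`α‖z - z*‖² + (1-α)‖w - z*‖²`.

For the `w`-part, the iterates at step `(s, t)` depend only on the permutations and on the coins of
earlier steps, so shifting the coin of step `(s, t)` is a bijection of the sample space fixing them;
averaging over the `n` shifts gives `E‖w⁺ - z*‖² = p E‖z - z*‖² + (1 - p) E‖w - z*‖²`.

After `T = Sn` steps `Φ ≤ (1 - γμ/4)^T Φ₀ ≤ exp(-Tγμ/4) Φ₀`, which is at most `ε` once
`T ≥ (4/(γμ)) log(Φ₀/ε)`.
-/

open Filter Topology
open scoped RealInnerProductSpace

lemma young_of_sq_eq {c y k u x : ℝ} (hy : 0 < y) (hc : c ^ 2 = 4 * y * k) :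
    c * u * x ≤ y * x ^ 2 + k * u ^ 2 := by
  nlinarith [sq_nonneg (2 * y * x - c * u), mul_pos hy hy]

lemma extragradient_young_bound {β ρ y₁ k₁ y₂ k₂ C U X P W Z E : ℝ}
    (hβ : 0 < β) (hρ : 0 < ρ) (hy₁ : 0 < y₁) (hy₂ : 0 < y₂)
    (hX : 0 ≤ X) (hP : 0 ≤ P) (hZ₀ : 0 ≤ Z)
    (hW : W ≤ U + E) (hZ : Z ≤ X + U)
    (hc₁ : (4 * β + 3 * ρ / 2) ^ 2 = 4 * y₁ * k₁) (hc₂ : (4 * β) ^ 2 = 4 * y₂ * k₂)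
    (hP_coeff : 12 * β ≤ 1) (hU_coeff : k₁ + β / 6 + 3 * ρ / 4 ≤ 1)
    (hX_coeff : y₁ + y₂ ≤ 5 * ρ / 4) (hE_coeff : (k₂ + β / 6) * E ^ 2 ≤ C) :
    4 * β * W * X + 2 * β * P * W ≤ P ^ 2 + U ^ 2 + 2 * ρ * X ^ 2 - 3 * ρ / 4 * Z ^ 2 + C := by
  have hWX : 4 * β * W * X ≤ 4 * β * (U + E) * X := by gcongr
  have hPW : 2 * β * P * W ≤ 2 * β * P * (U + E) := by gcongr
  have hUX := young_of_sq_eq (u := U) (x := X) hy₁ hc₁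
  have hEX := young_of_sq_eq (u := E) (x := X) hy₂ hc₂
  have hPU := young_of_sq_eq (c := 2 * β) (y := β / 6) (k := 6 * β) (u := P) (x := U)
    (by positivity) (by ring)
  have hPE := young_of_sq_eq (c := 2 * β) (y := β / 6) (k := 6 * β) (u := P) (x := E)
    (by positivity) (by ring)
  have hPP : 12 * β * P ^ 2 ≤ 1 * P ^ 2 := by gcongr
  have hUU : (k₁ + β / 6 + 3 * ρ / 4) * U ^ 2 ≤ 1 * U ^ 2 := by gcongr
  have hXX : (y₁ + y₂) * X ^ 2 ≤ 5 * ρ / 4 * X ^ 2 := by gcongr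
  have hZZ : 3 * ρ / 4 * Z ^ 2 ≤ 3 * ρ / 4 * (X + U) ^ 2 := by gcongr
  linarith

lemma extragradient_young_weight_U_le {ν κ : ℝ} (hν : 2 ≤ ν) (hκ₀ : 0 < κ) (hκ₁ : κ ≤ 1) :
    5 * (8 + 3 * κ) ^ 2 / (24 * (ν + 26)) + κ / (6 * ν) / 6 + 3 * (κ ^ 2 / (6 * ν)) / 4 ≤ 1 := by
  have hν₀ : 0 < ν := by linarith
  rw [show 5 * (8 + 3 * κ) ^ 2 / (24 * (ν + 26)) + κ / (6 * ν) / 6 + 3 * (κ ^ 2 / (6 * ν)) / 4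
      = (15 * ν * (8 + 3 * κ) ^ 2 + 2 * κ * (ν + 26) + 9 * κ ^ 2 * (ν + 26)) / (72 * ν * (ν + 26))
      by field_simp; ring, div_le_one (by positivity)]
  nlinarith [mul_nonneg hν₀.le (mul_nonneg (by linarith : (0:ℝ) ≤ 3 - 3 * κ)
    (by linarith : (0:ℝ) ≤ 19 + 3 * κ)), mul_pos hκ₀ hκ₀]

lemma extragradient_young_weight_E_le {ν κ : ℝ} (hν : 2 ≤ ν) (hκ₀ : 0 < κ) (hκ₁ : κ ≤ 1) :
    (20 / (3 * (12 * ν - 13)) + κ / (6 * ν) / 6) * (1 - ν⁻¹) ^ 2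
      ≤ (1 - 3 * (κ ^ 2 / (6 * ν)) / 4) * (1 - ν⁻¹) * ν⁻¹
        - κ ^ 2 / (6 * ν) * (1 / 2 - 3 / (4 * ν)) := by
  have hν₀ : 0 < ν := by linarith
  have hν₁ : 0 < 12 * ν - 13 := by linarith
  rw [← sub_nonneg]
  have h : (1 - 3 * (κ ^ 2 / (6 * ν)) / 4) * (1 - ν⁻¹) * ν⁻¹
        - κ ^ 2 / (6 * ν) * (1 / 2 - 3 / (4 * ν))
        - (20 / (3 * (12 * ν - 13)) + κ / (6 * ν) / 6) * (1 - ν⁻¹) ^ 2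
      = (72 * ν * (ν - 1) * (12 * ν - 13) - (480 * ν * (ν - 1) ^ 2
          + 2 * κ * ((ν - 1) ^ 2 * (12 * ν - 13)) + 9 * κ ^ 2 * ((ν - 1) * (12 * ν - 13))
          + 3 * κ ^ 2 * (ν * (2 * ν - 3) * (12 * ν - 13)))) / (72 * ν ^ 3 * (12 * ν - 13)) := by
    have : -13 + ν * 12 ≠ 0 := by linarith
    field_simp; ring_nf; field_simp; ring
  rw [h]
  apply div_nonneg _ (by positivity)
  have h₁ : 0 ≤ (ν - 1) ^ 2 * (12 * ν - 13) := by positivity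
  have h₂ : 0 ≤ (ν - 1) * (12 * ν - 13) := mul_nonneg (by linarith) hν₁.le
  have h₃ : 0 ≤ ν * (2 * ν - 3) * (12 * ν - 13) :=
    mul_nonneg (mul_nonneg hν₀.le (by linarith)) hν₁.le
  have hκ₂ : κ ^ 2 ≤ 1 := by nlinarith
  nlinarith [mul_le_mul_of_nonneg_right hκ₁ h₁, mul_le_mul_of_nonneg_right hκ₂ h₂,
    mul_le_mul_of_nonneg_right hκ₂ h₃, pow_nonneg (by linarith : (0:ℝ) ≤ ν - 2) 3]

/-- Here `β = κ / (6ν) = γL` and `ρ = κ² / (6ν) = γμ` with `κ = μ / L`; the Young weights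
`y₁ k₁ y₂ k₂` are tuned so that all budgets of `extragradient_young_bound` close for every `ν ≥ 2`
and `κ ≤ 1`. -/
lemma extragradient_scalar_bound {ν κ U X P W Z D : ℝ} (hν : 2 ≤ ν) (hκ₀ : 0 < κ) (hκ₁ : κ ≤ 1)
    (hX : 0 ≤ X) (hP : 0 ≤ P) (hZ₀ : 0 ≤ Z) (hW : W ≤ U + (1 - ν⁻¹) * D) (hZ : Z ≤ X + U) :
    4 * (κ / (6 * ν)) * W * X + 2 * (κ / (6 * ν)) * P * W
      ≤ P ^ 2 + U ^ 2 + 2 * (κ ^ 2 / (6 * ν)) * X ^ 2 - 3 * (κ ^ 2 / (6 * ν)) / 4 * Z ^ 2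
        + ((1 - 3 * (κ ^ 2 / (6 * ν)) / 4) * (1 - ν⁻¹) * ν⁻¹
          - κ ^ 2 / (6 * ν) * (1 / 2 - 3 / (4 * ν))) * D ^ 2 := by
  have hν₀ : 0 < ν := by linarith
  have hν₁ : 0 < 12 * ν - 13 := by linarith
  refine extragradient_young_bound (y₁ := (ν + 26) / (20 * ν) * (κ ^ 2 / (6 * ν)))
    (k₁ := 5 * (8 + 3 * κ) ^ 2 / (24 * (ν + 26)))
    (y₂ := (12 * ν - 13) / (10 * ν) * (κ ^ 2 / (6 * ν))) (k₂ := 20 / (3 * (12 * ν - 13)))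
    (E := (1 - ν⁻¹) * D) (by positivity) (by positivity) (by positivity) (by positivity)
    hX hP hZ₀ hW hZ ?_ ?_ ?_ (extragradient_young_weight_U_le hν hκ₀ hκ₁) ?_ ?_
  · field_simp; ring
  · have : -13 + ν * 12 ≠ 0 := by linarith
    field_simp; ring_nf; field_simp; ring
  · rw [mul_div_assoc', div_le_one (by positivity)]; linarith
  · apply le_of_eq; field_simp; ring
  · calc _ = ((20 / (3 * (12 * ν - 13)) + κ / (6 * ν) / 6) * (1 - ν⁻¹) ^ 2) * D ^ 2 := by ring
      _ ≤ _ := by gcongr; exact extragradient_young_weight_E_le hν hκ₀ hκ₁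

lemma lyapunov_coeff_bound {ν ρ a b D : ℝ} (hν : 2 ≤ ν) (hρ : 0 ≤ ρ) (hb : 0 ≤ b)
    (hbad : b ≤ 2 * a + 2 * D) :
    (1 - 3 * ρ / 4) * ((1 - ν⁻¹) * a + ν⁻¹ * b) - ρ * (1 / 2 - 3 / (4 * ν)) * D
      + (ν⁻¹ * a + (1 - ν⁻¹) * b) ≤ (1 - ρ / 4) * (a + b) := by
  have hν₀ : 0 < ν := by linarith
  have hq : 0 ≤ ρ * (1 / 2 - 3 / (4 * ν)) := by
    apply mul_nonneg hρ
    rw [sub_nonneg, div_le_div_iff₀ (by positivity) (by norm_num)]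
    linarith
  have h : (1 - ρ / 4) * (a + b) - ((1 - 3 * ρ / 4) * ((1 - ν⁻¹) * a + ν⁻¹ * b)
        - ρ * (1 / 2 - 3 / (4 * ν)) * D + (ν⁻¹ * a + (1 - ν⁻¹) * b))
      = ρ * (1 / 2 - 3 / (4 * ν)) * (2 * a + 2 * D - b) / 2 + 3 * (ρ * ν⁻¹ * b) / 8 := by
    field_simp; ring
  linarith [mul_nonneg hq (by linarith : 0 ≤ 2 * a + 2 * D - b),
    mul_nonneg (mul_nonneg hρ (inv_nonneg.2 hν₀.le)) hb]

lemma le_pow_mul_of_epochs {v : ℕ → ℕ → ℝ} {q : ℝ} {n S : ℕ} (hq : 0 ≤ q)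
    (hstep : ∀ s < S, ∀ t < n, v s (t + 1) ≤ q * v s t)
    (hepoch : ∀ s, s + 1 < S → v (s + 1) 0 = v s n) {s : ℕ} (hs : s < S) :
    v s n ≤ q ^ ((s + 1) * n) * v 0 0 := by
  have hinner : ∀ s < S, ∀ t ≤ n, v s t ≤ q ^ t * v s 0 := by
    intro s hs t ht
    induction t with
    | zero => simp
    | succ t ih =>
      calc v s (t + 1) ≤ q * v s t := hstep s hs t ht
        _ ≤ q * (q ^ t * v s 0) := by gcongr; exact ih (by omega)
        _ = q ^ (t + 1) * v s 0 := by ring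
  induction s with
  | zero => simpa using hinner 0 hs n le_rfl
  | succ s ih =>
    calc v (s + 1) n ≤ q ^ n * v (s + 1) 0 := hinner _ hs n le_rfl
      _ = q ^ n * v s n := by rw [hepoch s hs]
      _ ≤ q ^ n * (q ^ ((s + 1) * n) * v 0 0) := by gcongr; exact ih (by omega)
      _ = q ^ ((s + 1 + 1) * n) * v 0 0 := by ring

lemma le_of_le_one_sub_pow_mul {c v₀ v ε : ℝ} {T : ℕ} (hc : 0 < c) (hc₁ : c ≤ 1) (hε : 0 < ε)
    (hv₀ : 0 ≤ v₀) (hv : v ≤ (1 - c) ^ T * v₀) (hT : c⁻¹ * Real.log (v₀ / ε) ≤ T) : v ≤ ε := by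
  rcases hv₀.eq_or_lt with rfl | hv₀
  · linarith [mul_zero ((1 - c) ^ T)]
  have hlog : Real.log (v₀ / ε) ≤ c * T := by rwa [inv_mul_le_iff₀ hc] at hT
  calc v ≤ (1 - c) ^ T * v₀ := hv
    _ ≤ Real.exp (-c) ^ T * v₀ := by
        gcongr
        linarith [Real.add_one_le_exp (-c)]
    _ = Real.exp (-(c * T)) * v₀ := by rw [← Real.exp_nat_mul]; ring_nf
    _ ≤ Real.exp (-Real.log (v₀ / ε)) * v₀ := by gcongr
    _ = ε := by rw [Real.exp_neg, Real.exp_log (by positivity)]; field_simp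

lemma Fin.sum_ite_add_eq_zero {n : ℕ} [NeZero n] (a : Fin n) (x y : ℝ) :
    ∑ j : Fin n, (if a + j = 0 then x else y) = x + (n - 1) * y := by
  refine (Equiv.sum_comp (Equiv.addLeft a) (fun k => if k = 0 then x else y)).trans ?_
  obtain ⟨m, rfl⟩ : ∃ m, n = m + 1 := Nat.exists_eq_succ_of_ne_zero (NeZero.ne n)
  simp [Fin.sum_univ_succ, Fin.succ_ne_zero]

lemma sum_ite_eq_of_coin_shift {Ω : Type*} [Fintype Ω] {n : ℕ} [NeZero n] (c : Ω → Fin n)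
    (e : Fin n → Ω ≃ Ω) (hc : ∀ j ω, c (e j ω) = c ω + j) {f h : Ω → ℝ}
    (hf : ∀ j ω, f (e j ω) = f ω) (hh : ∀ j ω, h (e j ω) = h ω) :
    ∑ ω, (if c ω = 0 then f ω else h ω) = (n : ℝ)⁻¹ * ∑ ω, f ω + (1 - (n : ℝ)⁻¹) * ∑ ω, h ω := by
  have hn : (n : ℝ) ≠ 0 := Nat.cast_ne_zero.2 (NeZero.ne n)
  calc ∑ ω, (if c ω = 0 then f ω else h ω)
      = (n : ℝ)⁻¹ * ∑ j : Fin n, ∑ ω, (if c (e j ω) = 0 then f (e j ω) else h (e j ω)) := by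
        simp_rw [Equiv.sum_comp (e _) (fun ω => if c ω = 0 then f ω else h ω)]
        simp [hn]
    _ = (n : ℝ)⁻¹ * ∑ ω, (f ω + (n - 1) * h ω) := by
        rw [Finset.sum_comm]
        simp_rw [hc, hf, hh, Fin.sum_ite_add_eq_zero]
    _ = _ := by
        rw [Finset.sum_add_distrib, ← Finset.mul_sum]
        field_simp

section InnerProductSpace

variable {V : Type*} [NormedAddCommGroup V] [InnerProductSpace ℝ V]

lemma norm_smul_add_one_sub_smul_sq (α : ℝ) (x y : V) :
    ‖α • x + (1 - α) • y‖ ^ 2 = α * ‖x‖ ^ 2 + (1 - α) * ‖y‖ ^ 2 - α * (1 - α) * ‖x - y‖ ^ 2 := by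
  rw [norm_add_sq_real, norm_sub_sq_real, norm_smul, norm_smul, real_inner_smul_left,
    real_inner_smul_right, mul_pow, mul_pow, Real.norm_eq_abs, Real.norm_eq_abs, sq_abs, sq_abs]
  ring

lemma le_lipschitz_const_of_strongly_monotone [Nontrivial V] {A : V → V} {L μ : ℝ}
    (hLip : ∀ x y, ‖A x - A y‖ ≤ L * ‖x - y‖)
    (hmono : ∀ x y, μ * ‖x - y‖ ^ 2 ≤ ⟪A x - A y, x - y⟫) : μ ≤ L := by
  obtain ⟨x, hx⟩ := exists_ne (0 : V)
  have hmono₀ := hmono x 0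
  have hcs := real_inner_le_norm (A x - A 0) (x - 0)
  have hLip₀ := hLip x 0
  rw [sub_zero] at hmono₀ hcs hLip₀
  have hx₀ : 0 < ‖x‖ := norm_pos_iff.2 hx
  refine le_of_mul_le_mul_right (a := ‖x‖ ^ 2) ?_ (by positivity)
  nlinarith

noncomputable def finAvg {n : ℕ} (F : Fin n → V → V) (x : V) : V := (n : ℝ)⁻¹ • ∑ i, F i x

section FinAvg

variable {n : ℕ} [NeZero n] {F : Fin n → V → V}

lemma norm_finAvg_sub_le {L : ℝ} (hLip : ∀ i x y, ‖F i x - F i y‖ ≤ L * ‖x - y‖) (x y : V) :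
    ‖finAvg F x - finAvg F y‖ ≤ L * ‖x - y‖ := by
  have hn : (0 : ℝ) < n := Nat.cast_pos.2 (NeZero.pos n)
  rw [finAvg, finAvg, ← smul_sub, ← Finset.sum_sub_distrib, norm_smul, norm_inv,
    RCLike.norm_natCast]
  calc (n : ℝ)⁻¹ * ‖∑ i, (F i x - F i y)‖ ≤ (n : ℝ)⁻¹ * ∑ _i : Fin n, L * ‖x - y‖ := by
        gcongr
        exact (norm_sum_le _ _).trans (Finset.sum_le_sum fun i _ => hLip i x y)
    _ = L * ‖x - y‖ := by simp [field]

lemma mul_sq_le_inner_finAvg_sub {μ : ℝ}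
    (hmono : ∀ i x y, μ * ‖x - y‖ ^ 2 ≤ ⟪F i x - F i y, x - y⟫) (x y : V) :
    μ * ‖x - y‖ ^ 2 ≤ ⟪finAvg F x - finAvg F y, x - y⟫ := by
  have hn : (0 : ℝ) < n := Nat.cast_pos.2 (NeZero.pos n)
  rw [finAvg, finAvg, ← smul_sub, ← Finset.sum_sub_distrib, real_inner_smul_left, sum_inner]
  calc μ * ‖x - y‖ ^ 2 = (n : ℝ)⁻¹ * ∑ _i : Fin n, μ * ‖x - y‖ ^ 2 := by simp [field]
    _ ≤ _ := by gcongr with i; exact hmono i x y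

end FinAvg

structure IsProperConvex (g : V → EReal) : Prop where
  ne_bot : ∀ x, g x ≠ ⊥
  exists_ne_top : ∃ x, g x ≠ ⊤
  convex : ∀ (x y : V) (a b : ℝ), 0 ≤ a → 0 ≤ b → a + b = 1 →
    g (a • x + b • y) ≤ (a : EReal) * g x + (b : EReal) * g y

def IsProxMap (γ : ℝ) (g : V → EReal) (prox : V → V) : Prop :=
  ∀ x y : V, (γ : EReal) * g (prox x) + ((‖prox x - x‖ ^ 2 / 2 : ℝ) : EReal)
    ≤ (γ : EReal) * g y + ((‖y - x‖ ^ 2 / 2 : ℝ) : EReal)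

namespace IsProperConvex

variable {g : V → EReal}

lemma coe_toReal (hg : IsProperConvex g) {x : V} (hx : g x ≠ ⊤) :
    ((g x).toReal : EReal) = g x :=
  EReal.coe_toReal hx (hg.ne_bot x)

lemma toReal_le_of_le_coe_add (hg : IsProperConvex g) {x y : V} {r : ℝ} (h : g x ≤ r + g y)
    (hy : g y ≠ ⊤) :
    g x ≠ ⊤ ∧ (g x).toReal ≤ r + (g y).toReal := by
  rw [← hg.coe_toReal hy, ← EReal.coe_add] at h
  have hx := ne_top_of_le_ne_top (EReal.coe_ne_top _) h
  rw [← hg.coe_toReal hx] at h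
  exact ⟨hx, EReal.coe_le_coe_iff.1 h⟩

lemma toReal_convex (hg : IsProperConvex g) {x y : V} (hx : g x ≠ ⊤) (hy : g y ≠ ⊤) {a b : ℝ}
    (ha : 0 ≤ a) (hb : 0 ≤ b) (hab : a + b = 1) :
    g (a • x + b • y) ≠ ⊤ ∧ (g (a • x + b • y)).toReal ≤ a * (g x).toReal + b * (g y).toReal := by
  have h := hg.convex x y a b ha hb hab
  rw [← hg.coe_toReal hx, ← hg.coe_toReal hy, ← EReal.coe_mul, ← EReal.coe_mul,
    ← EReal.coe_add] at h
  have hm := ne_top_of_le_ne_top (EReal.coe_ne_top _) h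
  rw [← hg.coe_toReal hm] at h
  exact ⟨hm, EReal.coe_le_coe_iff.1 h⟩

end IsProperConvex

namespace IsProxMap

variable {γ : ℝ} {g : V → EReal} {prox : V → V}

lemma ne_top (hprox : IsProxMap γ g prox) (hγ : 0 < γ) (hg : IsProperConvex g) (x : V) :
    g (prox x) ≠ ⊤ := by
  obtain ⟨y, hy⟩ := hg.exists_ne_top
  intro htop
  have h := hprox x y
  rw [htop, EReal.coe_mul_top_of_pos hγ, EReal.top_add_coe, top_le_iff, ← hg.coe_toReal hy,
    ← EReal.coe_mul, ← EReal.coe_add] at h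
  exact EReal.coe_ne_top _ h

lemma toReal_le (hprox : IsProxMap γ g prox) (hγ : 0 < γ) (hg : IsProperConvex g) (x : V)
    {y : V} (hy : g y ≠ ⊤) :
    γ * (g (prox x)).toReal + ‖prox x - x‖ ^ 2 / 2 ≤ γ * (g y).toReal + ‖y - x‖ ^ 2 / 2 := by
  have h := hprox x y
  rw [← hg.coe_toReal hy, ← hg.coe_toReal (hprox.ne_top hγ hg x)] at h
  exact_mod_cast h

/-- Compare `prox x` with the points of the segment towards `y` and let them tend to `prox x`. -/
lemma inner_le (hprox : IsProxMap γ g prox) (hγ : 0 < γ) (hg : IsProperConvex g) (x : V)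
    {y : V} (hy : g y ≠ ⊤) :
    γ * ((g (prox x)).toReal - (g y).toReal) ≤ ⟪y - prox x, prox x - x⟫ := by
  set p := prox x
  have hp := hprox.ne_top hγ hg x
  have key : ∀ t ∈ Set.Ioc (0 : ℝ) 1,
      γ * ((g p).toReal - (g y).toReal) ≤ ⟪y - p, p - x⟫ + t * (‖y - p‖ ^ 2 / 2) := by
    rintro t ⟨ht₀, ht₁⟩
    obtain ⟨hm, hconv⟩ := hg.toReal_convex hy hp ht₀.le (sub_nonneg.2 ht₁) (add_sub_cancel t 1)
    have hmin := hprox.toReal_le hγ hg x hm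
    have hseg : t • y + (1 - t) • p - x = (p - x) + t • (y - p) := by module
    rw [hseg, norm_add_sq_real, norm_smul, real_inner_smul_right, Real.norm_of_nonneg ht₀.le,
      real_inner_comm] at hmin
    have hγconv := mul_le_mul_of_nonneg_left hconv hγ.le
    refine le_of_mul_le_mul_left ?_ ht₀
    linarith
  have hlim : Tendsto (fun t : ℝ => ⟪y - p, p - x⟫ + t * (‖y - p‖ ^ 2 / 2)) (𝓝[>] 0)
      (𝓝 ⟪y - p, p - x⟫) :=
    tendsto_nhdsWithin_of_tendsto_nhds
      ((continuous_const.add (continuous_id.mul continuous_const)).tendsto' _ _ (by simp))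
  exact ge_of_tendsto hlim (eventually_of_mem (Ioc_mem_nhdsGT one_pos) key)

end IsProxMap

/-- Sum of the optimality conditions of the two proximal steps, tested at `zstar` and at `zp`,
and of the variational inequality tested at `u`. -/
lemma extragradient_master {A G : V → V} {g : V → EReal} {prox : V → V} {γ L μ : ℝ}
    {zstar zb w u zp : V} (hγ : 0 < γ) (hg : IsProperConvex g) (hprox : IsProxMap γ g prox)
    (hALip : ∀ x y, ‖A x - A y‖ ≤ L * ‖x - y‖) (hGLip : ∀ x y, ‖G x - G y‖ ≤ L * ‖x - y‖)
    (hAmono : ∀ x y, μ * ‖x - y‖ ^ 2 ≤ ⟪A x - A y, x - y⟫)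
    (hVI : ∀ y, g zstar ≤ ((⟪A zstar, y - zstar⟫ : ℝ) : EReal) + g y)
    (hu : u = prox (zb - γ • A w)) (hzp : zp = prox (zb - γ • (G u - G w + A w))) :
    ‖zp - zstar‖ ^ 2 + ‖u - zp‖ ^ 2 + ‖u - zb‖ ^ 2 + 2 * (γ * μ) * ‖u - zstar‖ ^ 2
      ≤ ‖zb - zstar‖ ^ 2 + 4 * (γ * L) * ‖u - w‖ * ‖u - zstar‖
        + 2 * (γ * L) * ‖u - zp‖ * ‖u - w‖ := by
  have hu_top : g u ≠ ⊤ := hu ▸ hprox.ne_top hγ hg _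
  have hzp_top : g zp ≠ ⊤ := hzp ▸ hprox.ne_top hγ hg _
  obtain ⟨hstar_top, hVIu⟩ := hg.toReal_le_of_le_coe_add (hVI u) hu_top
  have hopt_zp := hprox.inner_le hγ hg (zb - γ • (G u - G w + A w)) hstar_top
  have hopt_u := hprox.inner_le hγ hg (zb - γ • A w) hzp_top
  rw [← hzp, show zp - (zb - γ • (G u - G w + A w)) = (zp - zb) + γ • (G u - G w + A w) by abel,
    inner_add_right, real_inner_smul_right] at hopt_zp
  rw [← hu, show u - (zb - γ • A w) = (u - zb) + γ • A w by abel, inner_add_right,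
    real_inner_smul_right] at hopt_u
  have hbracket : ⟪zstar - zp, G u - G w + A w⟫ + ⟪zp - u, A w⟫ + ⟪A zstar, u - zstar⟫
      = ⟪u - zp, G u - G w⟫ - ⟪A u - A zstar, u - zstar⟫
        - ⟪u - zstar, (G u - G w) - (A u - A w)⟫ := by
    simp only [inner_sub_left, inner_sub_right, inner_add_right]
    rw [real_inner_comm (A u) u, real_inner_comm (A u) zstar]
    ring
  have hnoise : ‖(G u - G w) - (A u - A w)‖ ≤ 2 * L * ‖u - w‖ :=
    (norm_sub_le _ _).trans (by linarith [hGLip u w, hALip u w])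
  have hcs_noise :
      -(‖u - zstar‖ * (2 * L * ‖u - w‖)) ≤ ⟪u - zstar, (G u - G w) - (A u - A w)⟫ := by
    have := abs_le.1 (abs_real_inner_le_norm (u - zstar) ((G u - G w) - (A u - A w)))
    linarith [mul_le_mul_of_nonneg_left hnoise (norm_nonneg (u - zstar))]
  have hcs_G : ⟪u - zp, G u - G w⟫ ≤ ‖u - zp‖ * (L * ‖u - w‖) :=
    (real_inner_le_norm _ _).trans (by gcongr; exact hGLip u w)
  have hγbound := mul_le_mul_of_nonneg_left
    (by linarith [hAmono u zstar] : ⟪u - zp, G u - G w⟫ - ⟪A u - A zstar, u - zstar⟫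
        - ⟪u - zstar, (G u - G w) - (A u - A w)⟫
      ≤ ‖u - zp‖ * (L * ‖u - w‖) - μ * ‖u - zstar‖ ^ 2 + ‖u - zstar‖ * (2 * L * ‖u - w‖)) hγ.le
  have hpol₁ :
      2 * ⟪zstar - zp, zp - zb⟫ = ‖zb - zstar‖ ^ 2 - ‖zp - zstar‖ ^ 2 - ‖zp - zb‖ ^ 2 := by
    rw [norm_sub_rev zb, norm_sub_rev zp zstar,
      show zstar - zb = (zstar - zp) + (zp - zb) by abel, norm_add_sq_real]
    ring
  have hpol₂ : 2 * ⟪zp - u, u - zb⟫ = ‖zp - zb‖ ^ 2 - ‖u - zp‖ ^ 2 - ‖u - zb‖ ^ 2 := by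
    rw [norm_sub_rev u zp, show zp - zb = (zp - u) + (u - zb) by abel, norm_add_sq_real]
    ring
  linear_combination 2 * hopt_zp + 2 * hopt_u + 2 * γ * hVIu + 2 * γ * hbracket + 2 * hγbound
    + hpol₁ + hpol₂

lemma vr_extragradient_step {A G : V → V} {g : V → EReal} {prox : V → V} {ν L μ γ α : ℝ}
    {zstar z w u zp : V} (hν : 2 ≤ ν) (hμ : 0 < μ) (hμL : μ ≤ L) (hα : α = 1 - ν⁻¹)
    (hγ : γ = (1 - α) * μ / (6 * L ^ 2)) (hg : IsProperConvex g) (hprox : IsProxMap γ g prox)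
    (hALip : ∀ x y, ‖A x - A y‖ ≤ L * ‖x - y‖) (hGLip : ∀ x y, ‖G x - G y‖ ≤ L * ‖x - y‖)
    (hAmono : ∀ x y, μ * ‖x - y‖ ^ 2 ≤ ⟪A x - A y, x - y⟫)
    (hVI : ∀ y, g zstar ≤ ((⟪A zstar, y - zstar⟫ : ℝ) : EReal) + g y)
    (hu : u = prox ((α • z + (1 - α) • w) - γ • A w))
    (hzp : zp = prox ((α • z + (1 - α) • w) - γ • (G u - G w + A w))) :
    ‖zp - zstar‖ ^ 2 + (ν⁻¹ * ‖z - zstar‖ ^ 2 + (1 - ν⁻¹) * ‖w - zstar‖ ^ 2)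
      ≤ (1 - γ * μ / 4) * (‖z - zstar‖ ^ 2 + ‖w - zstar‖ ^ 2) := by
  set zb := α • z + (1 - α) • w
  have hν₀ : 0 < ν := by linarith
  have hL : 0 < L := hμ.trans_le hμL
  have hκ₀ : 0 < μ / L := div_pos hμ hL
  have hκ₁ : μ / L ≤ 1 := (div_le_one hL).2 hμL
  have h1α : 1 - α = ν⁻¹ := by rw [hα]; ring
  have hγ₀ : 0 < γ := by rw [hγ, h1α]; positivity
  have hβ : γ * L = μ / L / (6 * ν) := by rw [hγ, h1α]; field_simp
  have hρ : γ * μ = (μ / L) ^ 2 / (6 * ν) := by rw [hγ, h1α]; field_simp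
  have hmaster := extragradient_master hγ₀ hg hprox hALip hGLip hAmono hVI hu hzp
  have hW : ‖u - w‖ ≤ ‖u - zb‖ + (1 - ν⁻¹) * ‖z - w‖ := by
    have hα₀ : 0 ≤ α := by
      rw [hα, sub_nonneg]; exact inv_le_one_of_one_le₀ (by linarith)
    calc ‖u - w‖ = ‖(u - zb) + α • (z - w)‖ := by congr 1; module
      _ ≤ ‖u - zb‖ + α * ‖z - w‖ := by
        grw [norm_add_le, norm_smul, Real.norm_of_nonneg hα₀]
      _ = ‖u - zb‖ + (1 - ν⁻¹) * ‖z - w‖ := by rw [hα]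
  have hZ : ‖zb - zstar‖ ≤ ‖u - zstar‖ + ‖u - zb‖ := by
    rw [norm_sub_rev u zb, add_comm]; exact norm_sub_le_norm_sub_add_norm_sub _ _ _
  have hscalar := extragradient_scalar_bound hν hκ₀ hκ₁ (norm_nonneg (u - zstar))
    (norm_nonneg (u - zp)) (norm_nonneg (zb - zstar)) hW hZ
  rw [← hβ, ← hρ] at hscalar
  have hZid : ‖zb - zstar‖ ^ 2 = α * ‖z - zstar‖ ^ 2 + (1 - α) * ‖w - zstar‖ ^ 2
      - α * (1 - α) * ‖z - w‖ ^ 2 := by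
    rw [show z - w = (z - zstar) - (w - zstar) by abel, ← norm_smul_add_one_sub_smul_sq]
    congr 2; module
  have hbad : ‖w - zstar‖ ^ 2 ≤ 2 * ‖z - zstar‖ ^ 2 + 2 * ‖z - w‖ ^ 2 := by
    calc ‖w - zstar‖ ^ 2 ≤ (‖z - zstar‖ + ‖z - w‖) ^ 2 := by
          gcongr
          rw [norm_sub_rev z w, add_comm]; exact norm_sub_le_norm_sub_add_norm_sub _ _ _
      _ ≤ _ := by linarith [add_sq_le (a := ‖z - zstar‖) (b := ‖z - w‖)]
  have hcoeff := lyapunov_coeff_bound hν (by positivity : 0 ≤ γ * μ) (sq_nonneg _) hbad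
  rw [hα] at hZid
  linear_combination hmaster + hscalar + (1 - 3 * (γ * μ) / 4) * hZid + hcoeff

structure IsVRExtragradientRun (n S : ℕ) (α γ : ℝ) (F : Fin n → V → V) (prox : V → V) (start : V)
    (z zhalf w : (Fin S → Equiv.Perm (Fin n)) × (Fin S → Fin n → Fin n) → ℕ → ℕ → V) :
    Prop where
  init : ∀ ω, z ω 0 0 = start ∧ w ω 0 0 = start
  half : ∀ ω, ∀ s < S, ∀ t < n,
    zhalf ω s t = prox ((α • z ω s t + (1 - α) • w ω s t)
      - γ • finAvg F (w ω s t))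
  step : ∀ ω, ∀ s, ∀ hs : s < S, ∀ t, ∀ ht : t < n,
    z ω s (t + 1) = prox ((α • z ω s t + (1 - α) • w ω s t)
      - γ • (F (ω.1 ⟨s, hs⟩ ⟨t, ht⟩) (zhalf ω s t) - F (ω.1 ⟨s, hs⟩ ⟨t, ht⟩) (w ω s t)
          + finAvg F (w ω s t)))
  wstep : ∀ ω, ∀ s, ∀ hs : s < S, ∀ t, ∀ ht : t < n,
    w ω s (t + 1) = if (ω.2 ⟨s, hs⟩ ⟨t, ht⟩ : Fin n).1 = 0 then z ω s t else w ω s t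
  epoch : ∀ ω, ∀ s, s + 1 ≤ S → z ω (s + 1) 0 = z ω s n ∧ w ω (s + 1) 0 = w ω s n

namespace IsVRExtragradientRun

variable {n S : ℕ} {α γ : ℝ} {F : Fin n → V → V} {prox : V → V} {start : V}
  {z zhalf w : (Fin S → Equiv.Perm (Fin n)) × (Fin S → Fin n → Fin n) → ℕ → ℕ → V}

lemma iterate_congr (run : IsVRExtragradientRun n S α γ F prox start z zhalf w)
    {ω ω' : (Fin S → Equiv.Perm (Fin n)) × (Fin S → Fin n → Fin n)} (hperm : ω.1 = ω'.1)
    {s t : ℕ} (hs : s < S) (ht : t ≤ n)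
    (hcoin : ∀ (s' : Fin S) (t' : Fin n), (s' : ℕ) < s ∨ (s' : ℕ) = s ∧ (t' : ℕ) < t →
      ω.2 s' t' = ω'.2 s' t') :
    z ω s t = z ω' s t ∧ w ω s t = w ω' s t := by
  induction s using Nat.strong_induction_on generalizing t with
  | _ s ihs =>
  induction t with
  | zero =>
    rcases s with _ | s
    · rw [(run.init ω).1, (run.init ω).2, (run.init ω').1, (run.init ω').2]
      exact ⟨rfl, rfl⟩
    · obtain ⟨hz, hw⟩ := ihs s (lt_add_one s) (by omega) le_rfl
        (fun s' t' _ => hcoin s' t' (Or.inl (by omega)))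
      rw [(run.epoch ω s hs.le).1, (run.epoch ω s hs.le).2, (run.epoch ω' s hs.le).1,
        (run.epoch ω' s hs.le).2]
      exact ⟨hz, hw⟩
  | succ t iht =>
    have ht' : t < n := by omega
    obtain ⟨hz, hw⟩ := iht ht'.le (fun s' t' h => hcoin s' t' (by omega))
    have hc := hcoin ⟨s, hs⟩ ⟨t, ht'⟩ (Or.inr ⟨rfl, lt_add_one t⟩)
    constructor
    · rw [run.step ω s hs t ht', run.step ω' s hs t ht', run.half ω s hs t ht',
        run.half ω' s hs t ht', hz, hw, hperm]
    · rw [run.wstep ω s hs t ht', run.wstep ω' s hs t ht', hz, hw, hc]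

lemma sum_comp_w_succ [NeZero n] (run : IsVRExtragradientRun n S α γ F prox start z zhalf w)
    (f : V → ℝ) {s t : ℕ} (hs : s < S) (ht : t < n) :
    ∑ ω, f (w ω s (t + 1))
      = (n : ℝ)⁻¹ * ∑ ω, f (z ω s t) + (1 - (n : ℝ)⁻¹) * ∑ ω, f (w ω s t) := by
  let δ : Fin n → Fin S → Fin n → Fin n := fun j => Pi.single ⟨s, hs⟩ (Pi.single ⟨t, ht⟩ j)
  let e : Fin n → ((Fin S → Equiv.Perm (Fin n)) × (Fin S → Fin n → Fin n)) ≃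
      ((Fin S → Equiv.Perm (Fin n)) × (Fin S → Fin n → Fin n)) :=
    fun j => (Equiv.refl _).prodCongr (Equiv.addRight (δ j))
  have hinv : ∀ j ω, z (e j ω) s t = z ω s t ∧ w (e j ω) s t = w ω s t := by
    intro j ω
    refine run.iterate_congr (ω := e j ω) (ω' := ω) rfl hs ht.le fun s' t' hlt => ?_
    have hne : (s' : ℕ) ≠ s ∨ (t' : ℕ) ≠ t := by omega
    rcases hne with hne | hne
    · have : s' ≠ ⟨s, hs⟩ := fun h => hne (by rw [h])
      simp [e, δ, this]
    · have : t' ≠ ⟨t, ht⟩ := fun h => hne (by rw [h])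
      simp [e, δ, Pi.single_apply, apply_ite (fun g : Fin n → Fin n => g t'), this]
  simp_rw [run.wstep _ s hs t ht, Fin.val_eq_zero_iff, apply_ite f]
  exact sum_ite_eq_of_coin_shift (fun ω => ω.2 ⟨s, hs⟩ ⟨t, ht⟩) e (fun j ω => by simp [e, δ])
    (f := fun ω => f (z ω s t)) (h := fun ω => f (w ω s t))
    (fun j ω => congrArg f (hinv j ω).1) (fun j ω => congrArg f (hinv j ω).2)

lemma sum_lyapunov_succ_le (run : IsVRExtragradientRun n S α γ F prox start z zhalf w)
    {L μ : ℝ} {g : V → EReal} {zstar : V} (hn : 2 ≤ n) (hμ : 0 < μ) (hμL : μ ≤ L)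
    (hα : α = 1 - (n : ℝ)⁻¹) (hγ : γ = (1 - α) * μ / (6 * L ^ 2)) (hg : IsProperConvex g)
    (hprox : IsProxMap γ g prox) (hLip : ∀ i x y, ‖F i x - F i y‖ ≤ L * ‖x - y‖)
    (hmono : ∀ i x y, μ * ‖x - y‖ ^ 2 ≤ ⟪F i x - F i y, x - y⟫)
    (hVI : ∀ y, g zstar ≤ ((⟪finAvg F zstar, y - zstar⟫ : ℝ) : EReal) + g y)
    {s t : ℕ} (hs : s < S) (ht : t < n) :
    ∑ ω, (‖z ω s (t + 1) - zstar‖ ^ 2 + ‖w ω s (t + 1) - zstar‖ ^ 2)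
      ≤ (1 - γ * μ / 4) * ∑ ω, (‖z ω s t - zstar‖ ^ 2 + ‖w ω s t - zstar‖ ^ 2) := by
  have : NeZero n := ⟨by omega⟩
  have hstep := Finset.sum_le_sum fun ω (_ : ω ∈ Finset.univ) =>
    vr_extragradient_step (by exact_mod_cast hn) hμ hμL hα hγ hg hprox (norm_finAvg_sub_le hLip)
      (hLip _) (mul_sq_le_inner_finAvg_sub hmono) hVI (run.half ω s hs t ht) (run.step ω s hs t ht)
  have hw := run.sum_comp_w_succ (fun v => ‖v - zstar‖ ^ 2) hs ht
  simp only [Finset.sum_add_distrib, ← Finset.mul_sum] at hstep ⊢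
  linear_combination hstep + hw

end IsVRExtragradientRun

end InnerProductSpace

theorem rr_vr_extragradient_iteration_complexity_general
    (d n S : ℕ) (hn : 2 ≤ n) (hS : 0 < S)
    (L μ γ p α : ℝ) (hL : 0 < L) (hμ : 0 < μ)
    (hp : p = (n : ℝ)⁻¹) (hα : α = 1 - p)
    (hγ : γ = (1 - α) * μ / (6 * L ^ 2))
    (F : Fin n → EuclideanSpace ℝ (Fin d) → EuclideanSpace ℝ (Fin d))
    (g : EuclideanSpace ℝ (Fin d) → EReal)
    (hg_bot : ∀ x, g x ≠ ⊥) (hg_top : ∃ x, g x ≠ ⊤)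
    (hg_convex : ∀ (x y : EuclideanSpace ℝ (Fin d)) (a b : ℝ), 0 ≤ a → 0 ≤ b → a + b = 1 →
      g (a • x + b • y) ≤ (a : EReal) * g x + (b : EReal) * g y)
    (prox : EuclideanSpace ℝ (Fin d) → EuclideanSpace ℝ (Fin d))
    (hprox : ∀ x y : EuclideanSpace ℝ (Fin d),
      (γ : EReal) * g (prox x) + ((‖prox x - x‖ ^ 2 / 2 : ℝ) : EReal)
        ≤ (γ : EReal) * g y + ((‖y - x‖ ^ 2 / 2 : ℝ) : EReal))
    (hLip : ∀ (i : Fin n) (z₁ z₂ : EuclideanSpace ℝ (Fin d)),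
      ‖F i z₁ - F i z₂‖ ≤ L * ‖z₁ - z₂‖)
    (hmono : ∀ (i : Fin n) (z₁ z₂ : EuclideanSpace ℝ (Fin d)),
      μ * ‖z₁ - z₂‖ ^ 2 ≤ ⟪F i z₁ - F i z₂, z₁ - z₂⟫)
    (zstar : EuclideanSpace ℝ (Fin d))
    (hVI : ∀ z, g zstar ≤ ((⟪(n : ℝ)⁻¹ • ∑ i, F i zstar, z - zstar⟫ : ℝ) : EReal) + g z)
    (start : EuclideanSpace ℝ (Fin d))
    (z zhalf w : (Fin S → Equiv.Perm (Fin n)) × (Fin S → Fin n → Fin n) →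
      ℕ → ℕ → EuclideanSpace ℝ (Fin d))
    (hinit : ∀ ω, z ω 0 0 = start ∧ w ω 0 0 = start)
    (hhalf : ∀ ω, ∀ s, ∀ hs : s < S, ∀ t, ∀ ht : t < n,
      zhalf ω s t = prox ((α • z ω s t + (1 - α) • w ω s t)
        - γ • ((n : ℝ)⁻¹ • ∑ i, F i (w ω s t))))
    (hstep : ∀ ω, ∀ s, ∀ hs : s < S, ∀ t, ∀ ht : t < n,
      z ω s (t + 1) = prox ((α • z ω s t + (1 - α) • w ω s t)
        - γ • (F (ω.1 ⟨s, hs⟩ ⟨t, ht⟩) (zhalf ω s t) - F (ω.1 ⟨s, hs⟩ ⟨t, ht⟩) (w ω s t)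
            + (n : ℝ)⁻¹ • ∑ i, F i (w ω s t))))
    (hwstep : ∀ ω, ∀ s, ∀ hs : s < S, ∀ t, ∀ ht : t < n,
      w ω s (t + 1) = if (ω.2 ⟨s, hs⟩ ⟨t, ht⟩ : Fin n).1 = 0 then z ω s t else w ω s t)
    (hepoch : ∀ ω, ∀ s, s + 1 ≤ S →
      z ω (s + 1) 0 = z ω s n ∧ w ω (s + 1) 0 = w ω s n) :
    ∀ ε : ℝ, 0 < ε →
      (24 * (n : ℝ) * L ^ 2 / μ ^ 2) *
          Real.log (((∑ ω : (Fin S → Equiv.Perm (Fin n)) × (Fin S → Fin n → Fin n),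
              (‖z ω 0 0 - zstar‖ ^ 2 + ‖w ω 0 0 - zstar‖ ^ 2)) /
            (Fintype.card ((Fin S → Equiv.Perm (Fin n)) × (Fin S → Fin n → Fin n)) : ℝ)) / ε)
        ≤ ((S * n : ℕ) : ℝ) →
      (∑ ω : (Fin S → Equiv.Perm (Fin n)) × (Fin S → Fin n → Fin n),
          (‖z ω (S - 1) n - zstar‖ ^ 2 + ‖w ω (S - 1) n - zstar‖ ^ 2)) /
          (Fintype.card ((Fin S → Equiv.Perm (Fin n)) × (Fin S → Fin n → Fin n)) : ℝ)
        ≤ ε := by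
  intro ε hε hT
  have run : IsVRExtragradientRun n S α γ F prox start z zhalf w :=
    ⟨hinit, hhalf, hstep, hwstep, hepoch⟩
  rcases subsingleton_or_nontrivial (EuclideanSpace ℝ (Fin d)) with _ | _
  · have hzero : ∀ v : EuclideanSpace ℝ (Fin d), v - zstar = 0 := fun v => by
      rw [Subsingleton.elim v zstar, sub_self]
    simp [hzero, hε.le]
  have hμL := le_lipschitz_const_of_strongly_monotone (hLip ⟨0, by omega⟩) (hmono ⟨0, by omega⟩)
  have hα' : α = 1 - (n : ℝ)⁻¹ := hp ▸ hα
  have hc : γ * μ / 4 = μ ^ 2 / (24 * n * L ^ 2) := by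
    rw [hγ, hα']; field_simp; ring
  have hc₁ : γ * μ / 4 ≤ 1 := by
    rw [hc, div_le_one (by positivity)]
    have hn' : (2 : ℝ) ≤ n := by exact_mod_cast hn
    nlinarith [mul_nonneg (sub_nonneg.2 hn') (sq_nonneg L), pow_le_pow_left₀ hμ.le hμL 2]
  have hdecay := le_pow_mul_of_epochs
    (v := fun s t => ∑ ω, (‖z ω s t - zstar‖ ^ 2 + ‖w ω s t - zstar‖ ^ 2))
    (by linarith : 0 ≤ 1 - γ * μ / 4)
    (fun s hs t ht => run.sum_lyapunov_succ_le hn hμ hμL hα' hγ ⟨hg_bot, hg_top, hg_convex⟩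
      hprox hLip hmono hVI hs ht)
    (fun s hs => by simp only [(hepoch _ s hs.le).1, (hepoch _ s hs.le).2])
    (Nat.sub_lt hS one_pos)
  rw [Nat.sub_one_add_one hS.ne'] at hdecay
  rw [← inv_div, ← hc] at hT
  refine le_of_le_one_sub_pow_mul (by rw [hc]; positivity) hc₁ hε (by positivity) ?_ hT
  rw [← mul_div_assoc]
  gcongr

/-- Iteration complexity of the RR/SO Extragradient method with variance reduction for a
finite-sum variational inequality with `L`-Lipschitz, `μ`-strongly monotone operators:
with `p = 1/n`, `α = 1 − 1/n`, stepsize `γ = (1−α)μ/(6L²) = μ/(6nL²)`, for every `ε > 0`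
one has `V_S^n ≤ ε` as soon as the total number of iterations `T = Sn` satisfies
`T ≥ (24nL²/μ²)·log(V_0^0/ε)`; hence `O(n(L²/μ²)log(1/ε))` iterations and oracle calls
suffice to reach `ε`-accuracy, where `V_s^t = E‖z_s^t − z*‖² + E‖ω_s^t − z*‖²`.
Here (RR version) each epoch
`s` draws an independent uniform permutation `π_s` and performs
`z̄_s^t = αz_s^t + (1−α)ω_s^t`, `z_s^{t+1/2} = prox_{γg}(z̄_s^t − γF(ω_s^t))`,
`F̂ = F_{π_s(t)}(z_s^{t+1/2}) − F_{π_s(t)}(ω_s^t) + F(ω_s^t)`,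
`z_s^{t+1} = prox_{γg}(z̄_s^t − γF̂)`, and `ω_s^{t+1} = z_s^t` with probability `p`
(else `ω_s^{t+1} = ω_s^t`), independently of everything else.
(The Bernoulli coin of probability `p = 1/n` is realized as a uniform variable on `Fin n`
hitting value `0`; the expectation is the uniform average over all the randomness.) -/
theorem rr_vr_extragradient_iteration_complexity
    (d n S : ℕ) (hn : 2 ≤ n) (hS : 0 < S)
    (L μ γ p α : ℝ) (hL : 0 < L) (hμ : 0 < μ)
    (hp : p = (n : ℝ)⁻¹) (hα : α = 1 - p)
    (hγ : γ = (1 - α) * μ / (6 * L ^ 2))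
    (F : Fin n → EuclideanSpace ℝ (Fin d) → EuclideanSpace ℝ (Fin d))
    (g : EuclideanSpace ℝ (Fin d) → EReal)
    (hg_bot : ∀ x, g x ≠ ⊥) (hg_top : ∃ x, g x ≠ ⊤)
    (hg_convex : ∀ (x y : EuclideanSpace ℝ (Fin d)) (a b : ℝ), 0 ≤ a → 0 ≤ b → a + b = 1 →
      g (a • x + b • y) ≤ (a : EReal) * g x + (b : EReal) * g y)
    (hg_lsc : LowerSemicontinuous g)
    (prox : EuclideanSpace ℝ (Fin d) → EuclideanSpace ℝ (Fin d))
    (hprox : ∀ x y : EuclideanSpace ℝ (Fin d),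
      (γ : EReal) * g (prox x) + ((‖prox x - x‖ ^ 2 / 2 : ℝ) : EReal)
        ≤ (γ : EReal) * g y + ((‖y - x‖ ^ 2 / 2 : ℝ) : EReal))
    (hLip : ∀ (i : Fin n) (z₁ z₂ : EuclideanSpace ℝ (Fin d)),
      ‖F i z₁ - F i z₂‖ ≤ L * ‖z₁ - z₂‖)
    (hmono : ∀ (i : Fin n) (z₁ z₂ : EuclideanSpace ℝ (Fin d)),
      μ * ‖z₁ - z₂‖ ^ 2 ≤ ⟪F i z₁ - F i z₂, z₁ - z₂⟫)
    (zstar : EuclideanSpace ℝ (Fin d))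
    (hVI : ∀ z, g zstar ≤ ((⟪(n : ℝ)⁻¹ • ∑ i, F i zstar, z - zstar⟫ : ℝ) : EReal) + g z)
    (start : EuclideanSpace ℝ (Fin d))
    (z zhalf w : (Fin S → Equiv.Perm (Fin n)) × (Fin S → Fin n → Fin n) →
      ℕ → ℕ → EuclideanSpace ℝ (Fin d))
    (hinit : ∀ ω, z ω 0 0 = start ∧ w ω 0 0 = start)
    (hhalf : ∀ ω, ∀ s, ∀ hs : s < S, ∀ t, ∀ ht : t < n,
      zhalf ω s t = prox ((α • z ω s t + (1 - α) • w ω s t)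
        - γ • ((n : ℝ)⁻¹ • ∑ i, F i (w ω s t))))
    (hstep : ∀ ω, ∀ s, ∀ hs : s < S, ∀ t, ∀ ht : t < n,
      z ω s (t + 1) = prox ((α • z ω s t + (1 - α) • w ω s t)
        - γ • (F (ω.1 ⟨s, hs⟩ ⟨t, ht⟩) (zhalf ω s t) - F (ω.1 ⟨s, hs⟩ ⟨t, ht⟩) (w ω s t)
            + (n : ℝ)⁻¹ • ∑ i, F i (w ω s t))))
    (hwstep : ∀ ω, ∀ s, ∀ hs : s < S, ∀ t, ∀ ht : t < n,
      w ω s (t + 1) = if (ω.2 ⟨s, hs⟩ ⟨t, ht⟩ : Fin n).1 = 0 then z ω s t else w ω s t)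
    (hepoch : ∀ ω, ∀ s, s + 1 ≤ S →
      z ω (s + 1) 0 = z ω s n ∧ w ω (s + 1) 0 = w ω s n) :
    ∀ ε : ℝ, 0 < ε →
      (24 * (n : ℝ) * L ^ 2 / μ ^ 2) *
          Real.log (((∑ ω : (Fin S → Equiv.Perm (Fin n)) × (Fin S → Fin n → Fin n),
              (‖z ω 0 0 - zstar‖ ^ 2 + ‖w ω 0 0 - zstar‖ ^ 2)) /
            (Fintype.card ((Fin S → Equiv.Perm (Fin n)) × (Fin S → Fin n → Fin n)) : ℝ)) / ε)
        ≤ ((S * n : ℕ) : ℝ) →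
      (∑ ω : (Fin S → Equiv.Perm (Fin n)) × (Fin S → Fin n → Fin n),
          (‖z ω (S - 1) n - zstar‖ ^ 2 + ‖w ω (S - 1) n - zstar‖ ^ 2)) /
          (Fintype.card ((Fin S → Equiv.Perm (Fin n)) × (Fin S → Fin n → Fin n)) : ℝ)
        ≤ ε :=
  rr_vr_extragradient_iteration_complexity_general d n S hn hS L μ γ p α hL hμ hp hα hγ F g hg_bot
    hg_top hg_convex prox hprox hLip hmono zstar hVI start z zhalf w hinit hhalf hstep hwstep hepoch
end

section
/- Let g : ℝ^d → ℝ ∪ {+∞} be proper convex lower semicontinuous, let G : ℝ^d → ℝ^d be L-Lipschitz, and let γ > 0. Given z ∈ ℝ^d, define the extragradient step z^{1/2} = prox_{γg}(z − γ G(z)) and z⁺ = prox_{γg}(z − γ G(z^{1/2})). Then for every u ∈ ℝ^d with g(u) < +∞: ‖z⁺ − u‖² ≤ ‖z − u‖² + (γ²L² − 1)‖z^{1/2} − z‖² − 2γ( ⟨G(z^{1/2}), z^{1/2} − u⟩ + g(z^{1/2}) − g(u) ). -/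
/-!
Both half-steps are prox steps, so each satisfies the three-point inequality
`γ (g p - g y) ≤ ⟪p - x, y - p⟫` of a prox point `p` of `x`, obtained by comparing `p` with
points on the segment from `p` to `y` and letting them tend to `p`. Applying it to `z⁺` against
`u` and to `z½` against `z⁺` and adding, the norm terms telescope and what is left is
`2γ⟪G z½ - G z, z½ - z⁺⟫ - ‖z½ - z⁺‖²`, which is at most `γ²‖G z½ - G z‖² ≤ γ²L²‖z½ - z‖²`.
-/

open scoped RealInnerProductSpace
open Filter Topology

lemma le_of_forall_pos_le_add_mul_s9 {c B K : ℝ} (h : ∀ t : ℝ, 0 < t → t ≤ 1 → c ≤ B + t * K) :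
    c ≤ B := by
  have hcont : Continuous fun t : ℝ => B + t * K := by fun_prop
  have hlim : Tendsto (fun t : ℝ => B + t * K) (𝓝[>] 0) (𝓝 B) := by
    simpa using (hcont.tendsto 0).mono_left nhdsWithin_le_nhds
  refine ge_of_tendsto hlim ?_
  filter_upwards [Ioc_mem_nhdsGT one_pos] with t ht using h t ht.1 ht.2

lemma two_mul_inner_sub_norm_sq_le {E : Type*} [NormedAddCommGroup E] [InnerProductSpace ℝ E]
    (x y : E) : 2 * ⟪x, y⟫ - ‖y‖ ^ 2 ≤ ‖x‖ ^ 2 := by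
  nlinarith [norm_sub_sq_real x y, sq_nonneg ‖x - y‖]

section Prox

variable {E : Type*} [NormedAddCommGroup E] {γ : ℝ} {g : E → EReal} {x p : E}

/-- `p = prox_{γg}(x)`. -/
def IsProxPoint (γ : ℝ) (g : E → EReal) (x p : E) : Prop :=
  ∀ y, (γ : EReal) * g p + ((‖p - x‖ ^ 2 / 2 : ℝ) : EReal)
    ≤ (γ : EReal) * g y + ((‖y - x‖ ^ 2 / 2 : ℝ) : EReal)

lemma IsProxPoint.ne_top (hp : IsProxPoint γ g x p) (hγ : 0 < γ) {y : E} (hy_top : g y ≠ ⊤)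
    (hy_bot : g y ≠ ⊥) : g p ≠ ⊤ := by
  intro hp_top
  have h := hp y
  rw [hp_top, EReal.coe_mul_top_of_pos hγ, EReal.top_add_coe, ← EReal.coe_toReal hy_top hy_bot,
    ← EReal.coe_mul, ← EReal.coe_add, top_le_iff] at h
  exact EReal.coe_ne_top _ h

lemma IsProxPoint.le_of_eq_coe (hp : IsProxPoint γ g x p) {y : E} {a b : ℝ}
    (ha : g p = a) (hb : g y = b) : γ * a + ‖p - x‖ ^ 2 / 2 ≤ γ * b + ‖y - x‖ ^ 2 / 2 := by
  have h := hp y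
  rw [ha, hb, ← EReal.coe_mul, ← EReal.coe_mul, ← EReal.coe_add, ← EReal.coe_add] at h
  exact_mod_cast h

lemma IsProxPoint.three_point [InnerProductSpace ℝ E] (hp : IsProxPoint γ g x p) (hγ : 0 ≤ γ)
    (hg_bot : ∀ x, g x ≠ ⊥)
    (hg_convex : ∀ (x y : E) (a b : ℝ), 0 ≤ a → 0 ≤ b → a + b = 1 →
      g (a • x + b • y) ≤ (a : EReal) * g x + (b : EReal) * g y)
    {y : E} {a b : ℝ} (ha : g p = a) (hb : g y = b) :
    γ * (a - b) ≤ ⟪p - x, y - p⟫ := by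
  refine le_of_forall_pos_le_add_mul_s9 (K := ‖y - p‖ ^ 2 / 2) fun t ht ht1 => ?_
  set yt := (1 - t) • p + t • y
  have hconv := hg_convex p y (1 - t) t (by linarith) ht.le (by ring)
  rw [ha, hb, ← EReal.coe_mul, ← EReal.coe_mul, ← EReal.coe_add] at hconv
  have hyt_top : g yt ≠ ⊤ := ne_top_of_le_ne_top (EReal.coe_ne_top _) hconv
  rw [← EReal.coe_toReal hyt_top (hg_bot yt), EReal.coe_le_coe_iff] at hconv
  have hprox := hp.le_of_eq_coe ha (EReal.coe_toReal hyt_top (hg_bot yt)).symm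
  have hnorm : ‖yt - x‖ ^ 2 = ‖p - x‖ ^ 2 + 2 * t * ⟪p - x, y - p⟫ + t ^ 2 * ‖y - p‖ ^ 2 := by
    rw [show yt - x = (p - x) + t • (y - p) by simp only [yt]; module, norm_add_sq_real,
      real_inner_smul_right, norm_smul, Real.norm_of_nonneg ht.le]
    ring
  have hscaled : t * (γ * (a - b)) ≤ t * (⟪p - x, y - p⟫ + t * (‖y - p‖ ^ 2 / 2)) := by
    nlinarith [mul_le_mul_of_nonneg_left hconv hγ]
  exact le_of_mul_le_mul_left hscaled ht

end Prox

section Extragradient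

variable {E : Type*} [NormedAddCommGroup E] [InnerProductSpace ℝ E]

lemma extragradient_identity (γ : ℝ) (z p q u v w : E) :
    ‖q - u‖ ^ 2 + 2 * γ * ⟪v, p - u⟫ + 2 * ⟪q - (z - γ • v), u - q⟫
        + 2 * ⟪p - (z - γ • w), q - p⟫
      = ‖z - u‖ ^ 2 - ‖p - z‖ ^ 2 + (2 * ⟪γ • (v - w), p - q⟫ - ‖p - q‖ ^ 2) := by
  simp only [← real_inner_self_eq_norm_sq, inner_sub_left, inner_sub_right, inner_smul_left,
    real_inner_comm, RCLike.conj_to_real]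
  ring

/-- The extragradient estimate, given the three-point inequalities of `p = z½` and `q = z⁺`
(with `g p = a`, `g q = b`, `g u = c`) and `v = G z½`, `w = G z`. -/
lemma extragradient_estimate {γ L a b c : ℝ} {z p q u v w : E}
    (hq : γ * (b - c) ≤ ⟪q - (z - γ • v), u - q⟫)
    (hp : γ * (a - b) ≤ ⟪p - (z - γ • w), q - p⟫)
    (hLip : ‖v - w‖ ≤ L * ‖p - z‖) :
    ‖q - u‖ ^ 2 + 2 * γ * ⟪v, p - u⟫ + 2 * γ * a
      ≤ ‖z - u‖ ^ 2 + (γ ^ 2 * L ^ 2 - 1) * ‖p - z‖ ^ 2 + 2 * γ * c := by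
  have hyoung := two_mul_inner_sub_norm_sq_le (γ • (v - w)) (p - q)
  have hLip_sq : ‖γ • (v - w)‖ ^ 2 ≤ γ ^ 2 * L ^ 2 * ‖p - z‖ ^ 2 := by
    rw [norm_smul, mul_pow, Real.norm_eq_abs, sq_abs]
    calc γ ^ 2 * ‖v - w‖ ^ 2 ≤ γ ^ 2 * (L * ‖p - z‖) ^ 2 := by gcongr
      _ = γ ^ 2 * L ^ 2 * ‖p - z‖ ^ 2 := by ring
  linarith [extragradient_identity γ z p q u v w]

end Extragradient

theorem extragradient_one_step_inequality_general
    (d : ℕ) (L γ : ℝ) (hγ : 0 < γ)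
    (g : EuclideanSpace ℝ (Fin d) → EReal)
    (hg_bot : ∀ x, g x ≠ ⊥) (hg_top : ∃ x, g x ≠ ⊤)
    (hg_convex : ∀ (x y : EuclideanSpace ℝ (Fin d)) (a b : ℝ), 0 ≤ a → 0 ≤ b → a + b = 1 →
      g (a • x + b • y) ≤ (a : EReal) * g x + (b : EReal) * g y)
    (prox : EuclideanSpace ℝ (Fin d) → EuclideanSpace ℝ (Fin d))
    (hprox : ∀ x y : EuclideanSpace ℝ (Fin d),
      (γ : EReal) * g (prox x) + ((‖prox x - x‖ ^ 2 / 2 : ℝ) : EReal)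
        ≤ (γ : EReal) * g y + ((‖y - x‖ ^ 2 / 2 : ℝ) : EReal))
    (G : EuclideanSpace ℝ (Fin d) → EuclideanSpace ℝ (Fin d))
    (hGLip : ∀ z₁ z₂ : EuclideanSpace ℝ (Fin d), ‖G z₁ - G z₂‖ ≤ L * ‖z₁ - z₂‖)
    (z zhalf zplus u : EuclideanSpace ℝ (Fin d))
    (hzhalf : zhalf = prox (z - γ • G z))
    (hzplus : zplus = prox (z - γ • G zhalf))
    (hu : g u ≠ ⊤) :
    ((‖zplus - u‖ ^ 2 + 2 * γ * ⟪G zhalf, zhalf - u⟫ : ℝ) : EReal)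
        + ((2 * γ : ℝ) : EReal) * g zhalf
      ≤ ((‖z - u‖ ^ 2 + (γ ^ 2 * L ^ 2 - 1) * ‖zhalf - z‖ ^ 2 : ℝ) : EReal)
        + ((2 * γ : ℝ) : EReal) * g u := by
  have hhalf : IsProxPoint γ g (z - γ • G z) zhalf := hzhalf ▸ hprox _
  have hplus : IsProxPoint γ g (z - γ • G zhalf) zplus := hzplus ▸ hprox _
  obtain ⟨x₀, hx₀⟩ := hg_top
  have eq_coe {y} (hy : g y ≠ ⊤) : g y = ((g y).toReal : EReal) :=
    (EReal.coe_toReal hy (hg_bot y)).symm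
  have ha := eq_coe (hhalf.ne_top hγ hx₀ (hg_bot x₀))
  have hb := eq_coe (hplus.ne_top hγ hx₀ (hg_bot x₀))
  have hc := eq_coe hu
  have hq := hplus.three_point hγ.le hg_bot hg_convex hb hc
  have hp := hhalf.three_point hγ.le hg_bot hg_convex ha hb
  rw [ha, hc, ← EReal.coe_mul, ← EReal.coe_mul, ← EReal.coe_add, ← EReal.coe_add,
    EReal.coe_le_coe_iff]
  exact extragradient_estimate hq hp (hGLip zhalf z)

/-- One extragradient step with a proper convex lsc `g` and an `L`-Lipschitz operator `G`:
for `z½ = prox_{γg}(z − γG(z))`, `z⁺ = prox_{γg}(z − γG(z½))` and any `u` with `g(u) < +∞`,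
`‖z⁺ − u‖² ≤ ‖z − u‖² + (γ²L² − 1)‖z½ − z‖² − 2γ(⟨G(z½), z½ − u⟩ + g(z½) − g(u))`
(stated in the equivalent rearranged form avoiding `EReal` subtraction). -/
theorem extragradient_one_step_inequality
    (d : ℕ) (L γ : ℝ) (hγ : 0 < γ)
    (g : EuclideanSpace ℝ (Fin d) → EReal)
    (hg_bot : ∀ x, g x ≠ ⊥) (hg_top : ∃ x, g x ≠ ⊤)
    (hg_convex : ∀ (x y : EuclideanSpace ℝ (Fin d)) (a b : ℝ), 0 ≤ a → 0 ≤ b → a + b = 1 →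
      g (a • x + b • y) ≤ (a : EReal) * g x + (b : EReal) * g y)
    (hg_lsc : LowerSemicontinuous g)
    (prox : EuclideanSpace ℝ (Fin d) → EuclideanSpace ℝ (Fin d))
    (hprox : ∀ x y : EuclideanSpace ℝ (Fin d),
      (γ : EReal) * g (prox x) + ((‖prox x - x‖ ^ 2 / 2 : ℝ) : EReal)
        ≤ (γ : EReal) * g y + ((‖y - x‖ ^ 2 / 2 : ℝ) : EReal))
    (G : EuclideanSpace ℝ (Fin d) → EuclideanSpace ℝ (Fin d))
    (hGLip : ∀ z₁ z₂ : EuclideanSpace ℝ (Fin d), ‖G z₁ - G z₂‖ ≤ L * ‖z₁ - z₂‖)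
    (z zhalf zplus u : EuclideanSpace ℝ (Fin d))
    (hzhalf : zhalf = prox (z - γ • G z))
    (hzplus : zplus = prox (z - γ • G zhalf))
    (hu : g u ≠ ⊤) :
    ((‖zplus - u‖ ^ 2 + 2 * γ * ⟪G zhalf, zhalf - u⟫ : ℝ) : EReal)
        + ((2 * γ : ℝ) : EReal) * g zhalf
      ≤ ((‖z - u‖ ^ 2 + (γ ^ 2 * L ^ 2 - 1) * ‖zhalf - z‖ ^ 2 : ℝ) : EReal)
        + ((2 * γ : ℝ) : EReal) * g u :=
  extragradient_one_step_inequality_general d L γ hγ g hg_bot hg_top hg_convex prox hprox G hGLip z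
    zhalf zplus u hzhalf hzplus hu
end
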